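/- arXiv:1504.02357 — 9 statements merged into one kernel-verified Lean document; each statement's English description precedes it below -/
import Mathlib

section
/- Let C be a linear [n,k] code over F_q with 1 ≤ k < n and d(C⊥) ≥ 3. Then γ(C) ≤ k − d(C⊥) + 3; that is, C has a subcode of dimension at most k − d(C⊥) + 3 whose support equals E = {1,...,n}. -/
/-- The Hamming weight of a vector. -/
def wt {F : Type*} [Field F] [DecidableEq F] {n : ℕ} (x : Fin n → F) : ℕ :=
  (Finset.univ.filter fun i => x i ≠ 0).card

/-- A subcode `D` of `F^n` has full support: `Supp(D) = E = {1,…,n}`. -/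
def HasFullSupport {F : Type*} [Field F] {n : ℕ} (D : Submodule F (Fin n → F)) : Prop :=
  ∀ i : Fin n, ∃ x ∈ D, x i ≠ 0

/-- The set of positive integers `r` such that `C` has an `r`-dimensional subcode of full
support; the covering dimension `γ(C)` is the least element of this set. -/
def gammaSet {F : Type*} [Field F] {n : ℕ} (C : Submodule F (Fin n → F)) : Set ℕ :=
  {r | 0 < r ∧ ∃ D : Submodule F (Fin n → F), D ≤ C ∧ Module.finrank F D = r ∧
    HasFullSupport D}

/-- The set of Hamming weights of nonzero codewords of the dual code `C⊥`;
the minimum dual distance `d(C⊥)` is the least element of this set. -/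
def dualWeights {F : Type*} [Field F] [DecidableEq F] {n : ℕ}
    (C : Submodule F (Fin n → F)) : Set ℕ :=
  {w | ∃ y : Fin n → F, y ≠ 0 ∧ (∀ x ∈ C, ∑ i, x i * y i = 0) ∧ wt y = w}

section Aux

variable {F : Type*} [Field F] [DecidableEq F] {n : ℕ}

/-- Auxiliary: weight bounded by a superset of the support. -/
lemma wt_le_card_of_support_subset {z : Fin n → F} {T : Finset (Fin n)}
    (h : ∀ i, z i ≠ 0 → i ∈ T) : wt z ≤ T.card := by
  apply Finset.card_le_card
  intro i hi
  simp only [Finset.mem_filter, Finset.mem_univ, true_and] at hi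
  exact h i hi

/-- Auxiliary: summing a `Pi.single` against a family of vectors. -/
lemma sum_single_smul {M : Type*} [AddCommGroup M] [Module F M]
    (φ : Fin n → M) (a : Fin n) (b : F) :
    ∑ i, (Pi.single a b : Fin n → F) i • φ i = b • φ a := by
  rw [Finset.sum_eq_single a]
  · simp
  · intro i _ hia
    rw [Pi.single_eq_of_ne hia, zero_smul]
  · simp

end Aux

/-- Kung's bound for codes: if `C` is an `[n,k]` code over `F_q` with
`1 ≤ k < n` and `d(C⊥) ≥ 3`, then `γ(C) ≤ k - d(C⊥) + 3`, i.e. `C` has a subcode of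
dimension at most `k - d(C⊥) + 3` whose support is all of `{1,…,n}`. -/
theorem stmt0 {F : Type*} [Field F] [Fintype F] [DecidableEq F] {n k d : ℕ}
    (C : Submodule F (Fin n → F)) (hCk : Module.finrank F C = k)
    (hk1 : 1 ≤ k) (hkn : k < n)
    (hd : IsLeast (dualWeights C) d) (hd3 : 3 ≤ d) :
    ∃ D : Submodule F (Fin n → F), D ≤ C ∧ HasFullSupport D ∧
      (Module.finrank F D : ℤ) ≤ (k : ℤ) - (d : ℤ) + 3 := by
  classical
  haveI : FiniteDimensional F ↥C := FiniteDimensional.finiteDimensional_submodule C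
  -- coordinate functionals on C
  set φ : Fin n → Module.Dual F ↥C := fun i => (LinearMap.proj i).comp C.subtype with hφdef
  have hφ_apply : ∀ (i : Fin n) (x : ↥C), φ i x = (x : Fin n → F) i := fun i x => rfl
  -- key minimality lemma
  have key : ∀ z : Fin n → F, (∑ i, z i • φ i) = 0 → wt z < d → z = 0 := by
    intro z hz hw
    by_contra h0
    have hmem : wt z ∈ dualWeights C := by
      refine ⟨z, h0, ?_, rfl⟩
      intro x hx
      have := congrArg (fun f : Module.Dual F ↥C => f ⟨x, hx⟩) hz
      simp only [LinearMap.sum_apply, LinearMap.smul_apply, LinearMap.zero_apply,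
        smul_eq_mul] at this
      calc ∑ i, x i * z i = ∑ i, z i * φ i ⟨x, hx⟩ := by
            refine Finset.sum_congr rfl fun i _ => ?_
            rw [hφ_apply]; ring
        _ = 0 := this
    exact absurd (hd.2 hmem) (by omega)
  -- d ≤ n
  have hdn : d ≤ n := by
    obtain ⟨y, hy0, hyC, hyw⟩ := hd.1
    calc d = wt y := hyw.symm
      _ ≤ Finset.univ.card := Finset.card_filter_le _ _
      _ = n := by simp
  -- the chosen coordinates
  have hι : ∀ j : Fin (d - 3), (j : ℕ) < n := fun j => by omega
  set ι : Fin (d - 3) → Fin n := fun j => ⟨(j : ℕ), hι j⟩ with hιdef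
  have hιinj : Function.Injective ι := by
    intro a b hab
    simpa [hιdef, Fin.ext_iff] using hab
  set L : Fin n := ⟨d - 1, by omega⟩ with hLdef
  have hιL : ∀ j : Fin (d - 3), ι j ≠ L := by
    intro j h
    have : (j : ℕ) = d - 1 := by simpa [hιdef, hLdef, Fin.ext_iff] using h
    omega
  -- the spanning functionals
  set w : Fin (d - 3) → Module.Dual F ↥C := fun j => φ (ι j) + φ L with hwdef
  -- computing sums of singles
  have comp : ∀ lam : Fin (d - 3) → F,
      (∑ i, ((∑ j, Pi.single (ι j) (lam j) : Fin n → F) i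
          + (Pi.single L (∑ j, lam j) : Fin n → F) i) • φ i) = ∑ j, lam j • w j := by
    intro lam
    have h1 : ∑ i, (∑ j, Pi.single (ι j) (lam j) : Fin n → F) i • φ i
        = ∑ j, lam j • φ (ι j) := by
      simp only [Finset.sum_apply, Finset.sum_smul]
      rw [Finset.sum_comm]
      exact Finset.sum_congr rfl fun j _ => sum_single_smul φ (ι j) (lam j)
    simp only [add_smul, Finset.sum_add_distrib, h1, sum_single_smul]
    simp only [hwdef, smul_add, Finset.sum_add_distrib, Finset.sum_smul]
  -- linear independence of w
  have hw_li : LinearIndependent F w := by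
    rw [Fintype.linearIndependent_iff]
    intro lam hlam j0
    set z : Fin n → F :=
      (∑ j, Pi.single (ι j) (lam j)) + Pi.single L (∑ j, lam j) with hzdef
    have hz : (∑ i, z i • φ i) = 0 := by
      have := comp lam
      simp only [hzdef, Pi.add_apply] at this ⊢
      rw [this, hlam]
    have hwt : wt z < d := by
      have : wt z ≤ ((Finset.univ.image ι) ∪ {L}).card := by
        apply wt_le_card_of_support_subset
        intro i hi
        by_contra hiT
        simp only [Finset.mem_union, Finset.mem_image, Finset.mem_singleton, Finset.mem_univ,
          true_and, not_or, not_exists] at hiT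
        apply hi
        simp only [hzdef, Pi.add_apply, Finset.sum_apply]
        rw [Pi.single_eq_of_ne hiT.2, add_zero]
        exact Finset.sum_eq_zero fun j _ => Pi.single_eq_of_ne (fun h => hiT.1 j h.symm) _
      have hcard : ((Finset.univ.image ι) ∪ {L}).card ≤ (d - 3) + 1 := by
        calc ((Finset.univ.image ι) ∪ {L}).card
            ≤ (Finset.univ.image ι).card + ({L} : Finset (Fin n)).card :=
              Finset.card_union_le _ _
          _ ≤ (d - 3) + 1 := by
              gcongr
              · calc (Finset.univ.image ι).card ≤ (Finset.univ : Finset (Fin (d-3))).card :=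
                    Finset.card_image_le
                  _ = d - 3 := by simp
              · simp
      omega
    have hz0 := key z hz hwt
    have := congrFun hz0 (ι j0)
    simp only [hzdef, Pi.add_apply, Finset.sum_apply, Pi.zero_apply] at this
    rw [Pi.single_eq_of_ne (hιL j0), add_zero, Finset.sum_eq_single j0] at this
    · rwa [Pi.single_eq_same] at this
    · intro j _ hj
      exact Pi.single_eq_of_ne (fun h => hj (hιinj h).symm) _
    · simp
  -- the span V
  set V : Submodule F (Module.Dual F ↥C) := Submodule.span F (Set.range w) with hVdef
  haveI : FiniteDimensional F V := FiniteDimensional.span_of_finite F (Set.finite_range w)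
  have hVrank : Module.finrank F V = d - 3 := by
    rw [hVdef, finrank_span_eq_card hw_li, Fintype.card_fin]
  -- avoidance: no coordinate functional lies in V
  have havoid : ∀ m : Fin n, φ m ∉ V := by
    intro m hm
    rw [hVdef, Submodule.mem_span_range_iff_exists_fun] at hm
    obtain ⟨lam, hlam⟩ := hm
    set z : Fin n → F :=
      (∑ j, Pi.single (ι j) (lam j)) + Pi.single L (∑ j, lam j) - Pi.single m 1 with hzdef
    have hz : (∑ i, z i • φ i) = 0 := by
      have h2 : (∑ i, (Pi.single m 1 : Fin n → F) i • φ i) = φ m := by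
        simpa using sum_single_smul φ m (1 : F)
      calc (∑ i, z i • φ i)
          = (∑ i, ((∑ j, Pi.single (ι j) (lam j) : Fin n → F) i
              + (Pi.single L (∑ j, lam j) : Fin n → F) i) • φ i)
            - (∑ i, (Pi.single m 1 : Fin n → F) i • φ i) := by
            rw [← Finset.sum_sub_distrib]
            refine Finset.sum_congr rfl fun i _ => ?_
            simp only [hzdef, Pi.sub_apply, Pi.add_apply]
            exact sub_smul _ _ (φ i)
        _ = 0 := by rw [comp lam, h2, hlam, sub_self]
    have hwt : wt z < d := by
      have : wt z ≤ ((Finset.univ.image ι) ∪ {L, m}).card := by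
        apply wt_le_card_of_support_subset
        intro i hi
        by_contra hiT
        simp only [Finset.mem_union, Finset.mem_image, Finset.mem_insert, Finset.mem_singleton,
          Finset.mem_univ, true_and, not_or, not_exists] at hiT
        apply hi
        simp only [hzdef, Pi.sub_apply, Pi.add_apply, Finset.sum_apply]
        rw [Pi.single_eq_of_ne hiT.2.1, Pi.single_eq_of_ne hiT.2.2, Finset.sum_eq_zero]
        · ring
        · intro j _
          exact Pi.single_eq_of_ne (fun h => hiT.1 j h.symm) _
      have hcard : ((Finset.univ.image ι) ∪ {L, m}).card ≤ (d - 3) + 2 := by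
        calc ((Finset.univ.image ι) ∪ {L, m}).card
            ≤ (Finset.univ.image ι).card + ({L, m} : Finset (Fin n)).card :=
              Finset.card_union_le _ _
          _ ≤ (d - 3) + 2 := by
              gcongr
              · calc (Finset.univ.image ι).card ≤ (Finset.univ : Finset (Fin (d-3))).card :=
                    Finset.card_image_le
                  _ = d - 3 := by simp
              · exact (Finset.card_insert_le _ _).trans (by simp)
      omega
    have hz0 := key z hz hwt
    -- extract coordinates
    have hcoord : ∀ i : Fin n, ((∑ j, Pi.single (ι j) (lam j) : Fin n → F) i
        + (Pi.single L (∑ j, lam j) : Fin n → F) i) = (Pi.single m 1 : Fin n → F) i := by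
      intro i
      have := congrFun hz0 i
      simp only [hzdef, Pi.sub_apply, Pi.add_apply, Pi.zero_apply] at this
      exact sub_eq_zero.mp this
    -- first: all lam j vanish
    have hlam0 : ∀ j, lam j = (if ι j = m then 1 else 0) := by
      intro j
      have := hcoord (ι j)
      rw [Pi.single_eq_of_ne (hιL j), add_zero, Finset.sum_apply,
        Finset.sum_eq_single j] at this
      · rw [Pi.single_eq_same] at this
        rw [this, Pi.single_apply]
      · intro j' _ hj'
        exact Pi.single_eq_of_ne (fun h => hj' (hιinj h).symm) _
      · simp
    by_cases hmι : ∃ j0, ι j0 = m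
    · -- m is one of the ι j: sum of lam is 1 at one spot, but coordinate L says 0
      obtain ⟨j0, hj0⟩ := hmι
      have hL := hcoord L
      have hLm : L ≠ m := fun h => hιL j0 (by rw [hj0, h])
      rw [Pi.single_eq_of_ne hLm, Pi.single_eq_same, Finset.sum_apply,
        Finset.sum_eq_zero] at hL
      · -- ∑ lam = 0, but lam j0 = 1 and others 0
        have hsum : (∑ j, lam j) = 1 := by
          rw [Finset.sum_eq_single j0]
          · rw [hlam0 j0, if_pos hj0]
          · intro j _ hj
            rw [hlam0 j, if_neg (fun h => hj (hιinj (h.trans hj0.symm)))]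
          · simp
        rw [zero_add, hsum] at hL
        exact one_ne_zero hL
      · intro j _
        exact Pi.single_eq_of_ne (fun h => hιL j h.symm) _
    · push_neg at hmι
      have hlamz : ∀ j, lam j = 0 := fun j => by rw [hlam0 j, if_neg (hmι j)]
      have hm' := hcoord m
      rw [Pi.single_eq_same] at hm'
      have hA : (∑ j, (Pi.single (ι j) (lam j) : Fin n → F)) m = 0 := by
        rw [Finset.sum_apply]
        exact Finset.sum_eq_zero fun j _ => Pi.single_eq_of_ne (fun h => hmι j h.symm) _
      rw [hA] at hm'
      by_cases hLm : L = m
      · rw [hLm, Pi.single_eq_same, Finset.sum_eq_zero (fun j (_ : j ∈ Finset.univ) => hlamz j)] at hm'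
        simp at hm'
      · rw [Pi.single_eq_of_ne (fun h => hLm h.symm)] at hm'
        simp at hm'
  -- the subcode
  set D' : Submodule F ↥C := V.dualCoannihilator with hD'def
  refine ⟨D'.map C.subtype, Submodule.map_subtype_le C D', ?_, ?_⟩
  · -- full support
    intro i
    have hi : φ i ∉ D'.dualAnnihilator := by
      rw [hD'def, Subspace.dualCoannihilator_dualAnnihilator_eq]
      exact havoid i
    rw [Submodule.mem_dualAnnihilator] at hi
    push_neg at hi
    obtain ⟨x, hxD, hx0⟩ := hi
    exact ⟨(x : Fin n → F), Submodule.mem_map_of_mem hxD, hx0⟩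
  · -- dimension bound
    have hsum := Subspace.finrank_add_finrank_dualCoannihilator_eq V
    rw [hVrank, hCk, ← hD'def] at hsum
    have hrk : Module.finrank F (D'.map C.subtype) = Module.finrank F D' :=
      Submodule.finrank_map_subtype_eq C D'
    rw [hrk]
    omega
end

section
/- Let G be a k×n matrix over F_q of rank k, let C be the linear [n,k] code over F_q spanned by the rows of G, and let r be an integer with 1 ≤ r ≤ k. Then C has an r-dimensional subcode A with Supp(A) = E if and only if there exists a (k−r)-dimensional linear subspace U of F_q^k that contains none of the n column vectors of G. -/
/-- The standard dot-product bilinear form on `Fin k → F`. -/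
def dotB (F : Type*) [Field F] (k : ℕ) : LinearMap.BilinForm F (Fin k → F) :=
  LinearMap.mk₂ F (fun u v => ∑ i, u i * v i)
    (fun u u' v => by simp [add_mul, Finset.sum_add_distrib])
    (fun c u v => by simp [Finset.mul_sum, mul_assoc])
    (fun u v v' => by simp [mul_add, Finset.sum_add_distrib])
    (fun c u v => by simp [Finset.mul_sum, mul_left_comm])

@[simp] lemma dotB_apply {F : Type*} [Field F] {k : ℕ} (u v : Fin k → F) :
    dotB F k u v = ∑ i, u i * v i := rfl

lemma dotB_isRefl {F : Type*} [Field F] {k : ℕ} : (dotB F k).IsRefl := by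
  intro u v h
  simpa [mul_comm] using h

lemma dotB_nondeg {F : Type*} [Field F] {k : ℕ} : (dotB F k).Nondegenerate := by
  refine (LinearMap.IsRefl.nondegenerate_iff_separatingLeft (B := dotB F k) (fun u v h => dotB_isRefl u v h)).mpr fun u h => ?_
  funext i
  simpa [Pi.single_apply, mul_ite] using h (Pi.single i 1)

lemma vecMulLinear_apply' {F : Type*} [Field F] {n k : ℕ} (G : Matrix (Fin k) (Fin n) F)
    (v : Fin k → F) (j : Fin n) :
    G.vecMulLinear v j = ∑ i, v i * G i j := by
  simp [Matrix.vecMulLinear_apply, Matrix.vecMul, dotProduct]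

set_option maxHeartbeats 1000000 in
/-- for a `k×n` generator matrix `G` of rank `k` spanning the code `C`
and `1 ≤ r ≤ k`, the code `C` has an `r`-dimensional subcode of full support if and only
if some `(k-r)`-dimensional subspace of `F_q^k` contains none of the columns of `G`. -/
theorem stmt1 {F : Type*} [Field F] [Fintype F] [DecidableEq F] {n k r : ℕ}
    (G : Matrix (Fin k) (Fin n) F) (hG : LinearIndependent F G)
    (C : Submodule F (Fin n → F)) (hC : C = Submodule.span F (Set.range G))
    (hr1 : 1 ≤ r) (hrk : r ≤ k) :
    (∃ A : Submodule F (Fin n → F), A ≤ C ∧ Module.finrank F A = r ∧ HasFullSupport A) ↔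
    (∃ U : Submodule F (Fin k → F), Module.finrank F U = k - r ∧
      ∀ j : Fin n, (fun i => G i j) ∉ U) := by
  subst hC
  set φ := G.vecMulLinear with hφ
  have hφinj : Function.Injective φ := by
    rw [← LinearMap.ker_eq_bot, LinearMap.ker_eq_bot']
    intro v hv
    funext i
    refine Fintype.linearIndependent_iff.mp hG v ?_ i
    funext j
    have := congrFun hv j
    simpa [Finset.sum_apply] using (vecMulLinear_apply' G v j).symm.trans this
  have hrange : LinearMap.range φ = Submodule.span F (Set.range G) := range_vecMulLinear G
  have hfrk : Module.finrank F (Fin k → F) = k := by simp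
  constructor
  · rintro ⟨A, hAC, hAr, hAs⟩
    set W := A.comap φ with hWdef
    have hW : W.map φ = A := Submodule.map_comap_eq_of_le (hrange ▸ hAC)
    have hWr : Module.finrank F W = r := by
      rw [← hAr, ← hW]
      exact (Submodule.equivMapOfInjective φ hφinj W).finrank_eq
    refine ⟨(dotB F k).orthogonal W, ?_, ?_⟩
    · rw [LinearMap.BilinForm.finrank_orthogonal dotB_nondeg, hWr, hfrk]
    · intro j hj
      obtain ⟨x, hxA, hxj⟩ := hAs j
      rw [← hW] at hxA
      obtain ⟨v, hvW, rfl⟩ := hxA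
      have h0 := hj v hvW
      rw [dotB_apply] at h0
      exact hxj (by rw [vecMulLinear_apply']; exact h0)
  · rintro ⟨U, hUr, hU⟩
    set W := (dotB F k).orthogonal U with hWdef
    have hWr : Module.finrank F W = r := by
      rw [LinearMap.BilinForm.finrank_orthogonal dotB_nondeg, hUr, hfrk]
      omega
    refine ⟨W.map φ, ?_, ?_, ?_⟩
    · rw [← hrange]
      rintro x ⟨v, _, rfl⟩
      exact ⟨v, rfl⟩
    · rw [← hWr]
      exact (Submodule.equivMapOfInjective φ hφinj W).finrank_eq.symm
    · intro j
      by_contra h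
      push_neg at h
      apply hU j
      have hmem : (fun i => G i j) ∈ (dotB F k).orthogonal W := by
        intro v hvW
        rw [dotB_apply]
        have := h (φ v) ⟨v, hvW, rfl⟩
        rwa [vecMulLinear_apply'] at this
      rwa [hWdef, LinearMap.BilinForm.orthogonal_orthogonal dotB_nondeg dotB_isRefl] at hmem
end

section
/- If C is a dual Hamming code of dimension k ≥ 1 over F_q (an [n,k] code with n = (q^k−1)/(q−1) whose generator matrix columns represent each nonzero vector of F_q^k exactly once up to nonzero scalar), then γ(C) = k; that is, C itself has support E but no proper subcode of C has support equal to E. -/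
/-- a dual Hamming code of dimension `k ≥ 1` over `F_q` (an `[n,k]` code
with `n·(q-1) = q^k - 1` whose generator matrix columns represent every nonzero vector of
`F_q^k` exactly once up to nonzero scalar) has covering dimension `γ(C) = k`. -/
theorem stmt3 {F : Type*} [Field F] [Fintype F] [DecidableEq F] {q n k : ℕ}
    (hq : Fintype.card F = q) (hk : 1 ≤ k) (hn : n * (q - 1) = q ^ k - 1)
    (G : Matrix (Fin k) (Fin n) F) (hG : LinearIndependent F G)
    (C : Submodule F (Fin n → F)) (hC : C = Submodule.span F (Set.range G))
    (hcols : ∀ v : Fin k → F, v ≠ 0 →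
      ∃! j : Fin n, ∃ c : F, c ≠ 0 ∧ v = c • fun i => G i j) :
    IsLeast (gammaSet C) k := by
  classical
  have hF2 : 2 ≤ q := hq ▸ Fintype.one_lt_card
  have hqk : 2 ≤ q ^ k := le_trans hF2 (Nat.le_self_pow (by omega) q)
  have hn0 : 0 < n := by
    rcases Nat.eq_zero_or_pos n with h | h
    · subst h; simp at hn; omega
    · exact h
  -- every column of G is nonzero
  have hcol : ∀ j : Fin n, ∃ i, G i j ≠ 0 := by
    intro j0
    by_contra hj0
    push_neg at hj0
    set S : Finset (Fin k → F) := Finset.univ.filter (· ≠ 0) with hS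
    have hScard : S.card = q ^ k - 1 := by
      rw [hS, Finset.filter_ne', Finset.card_erase_of_mem (Finset.mem_univ _),
        Finset.card_univ, Fintype.card_fun, Fintype.card_fin, hq]
    set f : (Fin k → F) → Fin n := fun v =>
      if h : v ≠ 0 then ((hcols v h).exists).choose else ⟨0, hn0⟩ with hf
    have key : ∀ v : Fin k → F, v ≠ 0 → ∃ c : F, c ≠ 0 ∧ v = c • (fun i => G i (f v)) := by
      intro v h
      have := ((hcols v h).exists).choose_spec
      simpa [hf, h] using this
    have hfibcard : ∀ j : Fin n, (S.filter (fun v => f v = j)).card ≤ q - 1 := by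
      intro j
      rcases Finset.eq_empty_or_nonempty (S.filter (fun v => f v = j)) with he | ⟨v₀, hv₀⟩
      · simp [he]
      · have h0 : v₀ ≠ 0 ∧ f v₀ = j := by simpa [hS] using hv₀
        obtain ⟨c₀, hc₀, hv₀c⟩ := key v₀ h0.1
        rw [h0.2] at hv₀c
        have hcolj : ∃ i0 : Fin k, G i0 j ≠ 0 := by
          by_contra hno
          push_neg at hno
          apply h0.1
          funext i
          rw [hv₀c]
          simp [hno i]
        obtain ⟨i0, hi0⟩ := hcolj
        have claim : ∀ v ∈ S.filter (fun v => f v = j),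
            v = (v i0 * (G i0 j)⁻¹) • (fun i => G i j) := by
          intro v hvm
          have h' : v ≠ 0 ∧ f v = j := by simpa [hS] using hvm
          obtain ⟨c, hc, hvc⟩ := key v h'.1
          rw [h'.2] at hvc
          have hvi0 : v i0 = c * G i0 j := by
            rw [hvc]; simp
          have hcv : c = v i0 * (G i0 j)⁻¹ := by
            rw [hvi0, mul_assoc, mul_inv_cancel₀ hi0, mul_one]
          rw [hcv] at hvc
          exact hvc
        have hinjfib := Finset.card_le_card_of_injOn
          (f := fun v => v i0 * (G i0 j)⁻¹)
          (s := S.filter (fun v => f v = j)) (t := Finset.univ.filter (· ≠ (0:F))) ?_ ?_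
        · calc (S.filter (fun v => f v = j)).card ≤ _ := hinjfib
            _ = q - 1 := by
              rw [Finset.filter_ne', Finset.card_erase_of_mem (Finset.mem_univ _),
                Finset.card_univ, hq]
        · intro v hvm
          have h' : v ≠ 0 ∧ f v = j := by simpa [hS] using hvm
          simp only [Finset.mem_coe, Finset.mem_filter, Finset.mem_univ, true_and]
          intro hz
          apply h'.1
          rw [claim v hvm, hz, zero_smul]
        · intro v hvm v' hvm' hgv
          have e1 := claim v hvm
          have e2 := claim v' hvm'
          dsimp only at hgv
          rw [hgv] at e1
          exact e1.trans e2.symm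
    have hfib0 : (S.filter (fun v => f v = j0)).card = 0 := by
      rw [Finset.card_eq_zero, Finset.filter_eq_empty_iff]
      intro v hv hvj
      replace hv : v ≠ 0 := by simpa [hS] using hv
      obtain ⟨c, hc0, hvc⟩ := key v hv
      rw [hvj] at hvc
      apply hv
      funext i
      rw [hvc]; simp [hj0 i]
    have hsum : S.card = ∑ j : Fin n, (S.filter (fun v => f v = j)).card :=
      Finset.card_eq_sum_card_fiberwise (fun v _ => Finset.mem_univ (f v))
    have hle : ∑ j : Fin n, (S.filter (fun v => f v = j)).card ≤ (n - 1) * (q - 1) := by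
      rw [← Finset.sum_erase_add _ _ (Finset.mem_univ j0), hfib0, add_zero]
      calc ∑ j ∈ Finset.univ.erase j0, (S.filter (fun v => f v = j)).card
          ≤ ∑ j ∈ Finset.univ.erase j0, (q - 1) :=
            Finset.sum_le_sum (fun j _ => hfibcard j)
        _ = (n - 1) * (q - 1) := by
            rw [Finset.sum_const, Finset.card_erase_of_mem (Finset.mem_univ _),
              Finset.card_univ, Fintype.card_fin, smul_eq_mul]
    have hlt : (n - 1) * (q - 1) < n * (q - 1) :=
      (Nat.mul_lt_mul_right (show 0 < q - 1 by omega)).mpr (by omega)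
    omega
  -- C itself has finrank k and full support
  have hfinC : Module.finrank F C = k := by
    rw [hC, finrank_span_eq_card hG, Fintype.card_fin]
  have hmem : k ∈ gammaSet C := by
    refine ⟨hk, C, le_rfl, hfinC, fun j => ?_⟩
    obtain ⟨i, hi⟩ := hcol j
    exact ⟨G i, hC ▸ Submodule.subset_span (Set.mem_range_self i), hi⟩
  refine ⟨hmem, ?_⟩
  rintro r ⟨hr0, D, hDC, hDr, hDs⟩
  by_contra hlt
  push_neg at hlt
  -- setup
  set ψ : (Fin k → F) →ₗ[F] (Fin n → F) := G.vecMulLinear with hψ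
  have hrange : LinearMap.range ψ = C := by
    rw [hψ, range_vecMulLinear, hC]
    rfl
  have hinj : Function.Injective ψ := by
    rw [← LinearMap.ker_eq_bot]
    rw [Submodule.eq_bot_iff]
    intro v hv
    rw [LinearMap.mem_ker] at hv
    have hv' : ∑ i, v i • G i = 0 := by
      have : ψ v = Matrix.vecMul v G := rfl
      rw [this] at hv
      rw [← hv]
      funext j
      simp [Matrix.vecMul, dotProduct, Finset.sum_apply]
    have := Fintype.linearIndependent_iff.mp hG v hv'
    funext i; exact this i
  set V : Submodule F (Fin k → F) := D.comap ψ with hV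
  have hmap : V.map ψ = D := by
    rw [hV, Submodule.map_comap_eq, hrange]
    exact inf_eq_right.mpr hDC
  have hVr : Module.finrank F V = r := by
    rw [← hDr, ← hmap]
    exact (Submodule.equivMapOfInjective ψ hinj V).finrank_eq
  -- pairing
  set B : (Fin k → F) →ₗ[F] ((Fin k → F) →ₗ[F] F) :=
    LinearMap.mk₂ F (fun u v => dotProduct u v)
      (fun u u' v => add_dotProduct u u' v)
      (fun c u v => smul_dotProduct c u v)
      (fun u v v' => dotProduct_add u v v')
      (fun c u v => dotProduct_smul c u v) with hB
  set L : (Fin k → F) →ₗ[F] (V →ₗ[F] F) :=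
    (LinearMap.lcomp F F V.subtype).comp B with hL
  have hrankL : Module.finrank F (LinearMap.range L) ≤ r := by
    refine le_trans (Submodule.finrank_le _) ?_
    rw [Module.finrank_linearMap_self, hVr]
  have hrn := LinearMap.finrank_range_add_finrank_ker L
  rw [Module.finrank_fin_fun] at hrn
  have hkerpos : LinearMap.ker L ≠ ⊥ := by
    intro h
    rw [h, finrank_bot] at hrn
    omega
  obtain ⟨u, huk, hu0⟩ := Submodule.exists_mem_ne_zero_of_ne_bot hkerpos
  have horth : ∀ v ∈ V, dotProduct u v = 0 := by
    intro v hv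
    have hLu : L u = 0 := huk
    have := LinearMap.congr_fun hLu ⟨v, hv⟩
    simpa [hL, hB] using this
  obtain ⟨j, ⟨c, hc0, hcu⟩, _⟩ := hcols u hu0
  obtain ⟨x, hxD, hxj⟩ := hDs j
  have hxC : x ∈ LinearMap.range ψ := hrange ▸ hDC hxD
  obtain ⟨v, hvx⟩ := hxC
  have hvV : v ∈ V := by rw [hV, Submodule.mem_comap, hvx]; exact hxD
  apply hxj
  have hxje : x j = dotProduct v (fun i => G i j) := by
    rw [← hvx]
    simp [hψ, Matrix.vecMulLinear_apply, Matrix.vecMul, dotProduct]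
  have hcolu : (fun i => G i j) = c⁻¹ • u := by
    rw [hcu]; rw [smul_smul, inv_mul_cancel₀ hc0, one_smul]
  have hdz : dotProduct v (fun i => G i j) = 0 := by
    rw [hcolu, dotProduct_smul, dotProduct_comm, horth v hvV, smul_zero]
  rw [hxje, hdz]
end

section
/- Let C be an MDS [n,k] code over F_q with 1 ≤ k ≤ n−1 and n ≥ 2. Then, as integers, n·A_n = (q−1)·A_{n−1} + (−1)^{k−1}·n·(q−1)·binom(n−2, k−1), where A_n and A_{n−1} are the numbers of codewords of C of Hamming weight n and n−1, respectively. -/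
private lemma partial_alt (N : ℕ) (hN : 1 ≤ N) (m : ℕ) :
    ∑ s ∈ Finset.range (m + 1), (-1 : ℤ) ^ s * (N.choose s : ℤ)
      = (-1) ^ m * ((N - 1).choose m : ℤ) := by
  induction m with
  | zero => simp
  | succ m ih =>
    rw [Finset.sum_range_succ, ih]
    obtain ⟨N', rfl⟩ : ∃ N', N = N' + 1 := ⟨N - 1, by omega⟩
    simp only [Nat.add_sub_cancel]
    rw [Nat.choose_succ_succ N' m]
    push_cast
    ring

private lemma moebius {ι : Type*} [DecidableEq ι] (f g : Finset ι → ℤ)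
    (h : ∀ U, g U = ∑ V ∈ U.powerset, f V) (U : Finset ι) :
    f U = ∑ V ∈ U.powerset, (-1 : ℤ) ^ (U \ V).card * g V := by
  have key : ∀ W ∈ U.powerset,
      (∑ V ∈ U.powerset.filter (fun V => W ⊆ V), (-1 : ℤ) ^ (U \ V).card)
        = if W = U then 1 else 0 := by
    intro W hW
    rw [Finset.mem_powerset] at hW
    have h1 : ∑ V ∈ U.powerset.filter (fun V => W ⊆ V), (-1 : ℤ) ^ (U \ V).card
        = ∑ X ∈ (U \ W).powerset, (-1 : ℤ) ^ X.card := by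
      refine Finset.sum_nbij' (fun V => U \ V) (fun X => U \ X) ?_ ?_ ?_ ?_ ?_
      · intro V hV
        simp only [Finset.mem_filter, Finset.mem_powerset] at hV ⊢
        exact Finset.sdiff_subset_sdiff (Finset.Subset.refl U) hV.2
      · intro X hX
        simp only [Finset.mem_powerset] at hX
        simp only [Finset.mem_filter, Finset.mem_powerset]
        refine ⟨Finset.sdiff_subset, ?_⟩
        rw [Finset.subset_sdiff]
        exact ⟨hW, (Disjoint.mono_left hX Finset.sdiff_disjoint).symm⟩
      · intro V hV
        simp only [Finset.mem_filter, Finset.mem_powerset] at hV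
        exact Finset.sdiff_sdiff_eq_self hV.1
      · intro X hX
        simp only [Finset.mem_powerset] at hX
        exact Finset.sdiff_sdiff_eq_self (hX.trans Finset.sdiff_subset)
      · intro V _; rfl
    rw [h1, Finset.sum_powerset_neg_one_pow_card]
    congr 1
    simp only [eq_iff_iff]
    rw [Finset.sdiff_eq_empty_iff_subset]
    constructor
    · intro h'; exact Finset.Subset.antisymm h' hW |>.symm ▸ rfl
    · intro h'; rw [h']
  symm
  calc ∑ V ∈ U.powerset, (-1:ℤ)^(U\V).card * g V
      = ∑ V ∈ U.powerset, ∑ W ∈ V.powerset, (-1:ℤ)^(U\V).card * f W := by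
        refine Finset.sum_congr rfl fun V _ => ?_
        rw [h V, Finset.mul_sum]
    _ = ∑ W ∈ U.powerset, ∑ V ∈ U.powerset.filter (fun V => W ⊆ V),
          (-1:ℤ)^(U\V).card * f W := by
        refine Finset.sum_comm' ?_
        intro V W
        simp only [Finset.mem_filter, Finset.mem_powerset]
        constructor
        · rintro ⟨h1, h2⟩; exact ⟨⟨h1, h2⟩, h2.trans h1⟩
        · rintro ⟨⟨h1, h2⟩, _⟩; exact ⟨h1, h2⟩
    _ = ∑ W ∈ U.powerset, (if W = U then (1:ℤ) else 0) * f W := by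
        refine Finset.sum_congr rfl fun W hW => ?_
        rw [← Finset.sum_mul, key W hW]
    _ = f U := by
        simp only [ite_mul, one_mul, zero_mul]
        rw [Finset.sum_ite_eq' U.powerset U f]
        simp

private lemma key_id (q n k : ℕ) (hk1 : 1 ≤ k) (hkn : k ≤ n - 1) (hn : 2 ≤ n) :
    ∑ j ∈ Finset.range (n+1), (n.choose j : ℤ) * (-1:ℤ)^(n-j) * (q:ℤ)^(k-(n-j))
      = ((q:ℤ) - 1) * ∑ j ∈ Finset.range n, ((n-1).choose j : ℤ) * (-1:ℤ)^(n-1-j) * (q:ℤ)^(k-(n-j))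
        + (-1:ℤ)^(k-1) * ((q:ℤ)-1) * ((n-2).choose (k-1) : ℤ) := by
  obtain ⟨m, rfl⟩ : ∃ m, n = m + 1 := ⟨n - 1, by omega⟩
  simp only [Nat.add_sub_cancel] at hkn ⊢
  have hm : 1 ≤ m := by omega
  set Sb : ℤ := ∑ s ∈ Finset.range (m+1), (-1:ℤ)^s * ((m.choose s : ℤ)) * (q:ℤ)^(k-(s+1)) with hSb
  set T : ℤ := ∑ t ∈ Finset.range (m+1), (-1:ℤ)^t * ((m.choose t : ℤ)) * (q:ℤ)^(k-t) with hT
  have hA : ∑ j ∈ Finset.range (m+1+1), ((m+1).choose j : ℤ) * (-1:ℤ)^(m+1-j) * (q:ℤ)^(k-(m+1-j))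
      = ∑ t ∈ Finset.range (m+1+1), (-1:ℤ)^t * (((m+1).choose t : ℤ)) * (q:ℤ)^(k-t) := by
    rw [← Finset.sum_range_reflect (fun t => (-1:ℤ)^t * (((m+1).choose t : ℤ)) * (q:ℤ)^(k-t)) (m+1+1)]
    refine Finset.sum_congr rfl fun j hj => ?_
    rw [Finset.mem_range] at hj
    have h1 : m + 1 + 1 - 1 - j = m + 1 - j := by omega
    rw [h1, Nat.choose_symm (by omega : j ≤ m + 1)]
    ring
  have hB : ∑ j ∈ Finset.range (m+1), ((m.choose j : ℤ)) * (-1:ℤ)^(m-j) * (q:ℤ)^(k-(m+1-j))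
      = Sb := by
    rw [hSb, ← Finset.sum_range_reflect (fun s => (-1:ℤ)^s * ((m.choose s : ℤ)) * (q:ℤ)^(k-(s+1))) (m+1)]
    refine Finset.sum_congr rfl fun j hj => ?_
    rw [Finset.mem_range] at hj
    have h1 : m + 1 - 1 - j = m - j := by omega
    have h2 : m - j + 1 = m + 1 - j := by omega
    rw [h1, h2, Nat.choose_symm (by omega : j ≤ m)]
    ring
  have claimA : ∑ t ∈ Finset.range (m+1+1), (-1:ℤ)^t * (((m+1).choose t : ℤ)) * (q:ℤ)^(k-t)
      = T - Sb := by
    rw [Finset.sum_range_succ' (fun t => (-1:ℤ)^t * (((m+1).choose t : ℤ)) * (q:ℤ)^(k-t)) (m+1)]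
    have e1 : ∀ i ∈ Finset.range (m+1),
        (-1:ℤ)^(i+1) * (((m+1).choose (i+1) : ℤ)) * (q:ℤ)^(k-(i+1))
          = -((-1:ℤ)^i * ((m.choose i : ℤ)) * (q:ℤ)^(k-(i+1)))
            + (-1:ℤ)^(i+1) * ((m.choose (i+1) : ℤ)) * (q:ℤ)^(k-(i+1)) := by
      intro i _
      rw [Nat.choose_succ_succ m i]
      push_cast
      ring
    rw [Finset.sum_congr rfl e1, Finset.sum_add_distrib, Finset.sum_neg_distrib]
    have e2 : ∑ i ∈ Finset.range (m+1), (-1:ℤ)^(i+1) * ((m.choose (i+1) : ℤ)) * (q:ℤ)^(k-(i+1))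
        = T - (q:ℤ)^k := by
      rw [hT, Finset.sum_range_succ' (fun t => (-1:ℤ)^t * ((m.choose t : ℤ)) * (q:ℤ)^(k-t)) m]
      have e3 : ∑ i ∈ Finset.range (m+1), (-1:ℤ)^(i+1) * ((m.choose (i+1) : ℤ)) * (q:ℤ)^(k-(i+1))
          = ∑ i ∈ Finset.range m, (-1:ℤ)^(i+1) * ((m.choose (i+1) : ℤ)) * (q:ℤ)^(k-(i+1)) := by
        rw [Finset.sum_range_succ, Nat.choose_succ_self]
        simp
      rw [e3]
      simp
    rw [e2, hSb]
    simp only [Nat.choose_zero_right, Nat.cast_one, pow_zero, Nat.sub_zero]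
    ring
  have claimB : T - (q:ℤ) * Sb
      = (1 - (q:ℤ)) * ∑ s ∈ Finset.Ico k (m+1), (-1:ℤ)^s * (m.choose s : ℤ) := by
    have e1 : T - (q:ℤ) * Sb
        = ∑ s ∈ Finset.range (m+1), (-1:ℤ)^s * (m.choose s : ℤ) * ((q:ℤ)^(k-s) - (q:ℤ) * (q:ℤ)^(k-(s+1))) := by
      rw [hT, hSb, Finset.mul_sum, ← Finset.sum_sub_distrib]
      refine Finset.sum_congr rfl fun s _ => ?_
      ring
    rw [e1, Finset.range_eq_Ico, ← Finset.sum_Ico_consecutive _ (Nat.zero_le k) (by omega : k ≤ m + 1)]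
    have e2 : ∑ s ∈ Finset.Ico 0 k, (-1:ℤ)^s * (m.choose s : ℤ) * ((q:ℤ)^(k-s) - (q:ℤ) * (q:ℤ)^(k-(s+1))) = 0 := by
      refine Finset.sum_eq_zero fun s hs => ?_
      rw [Finset.mem_Ico] at hs
      have h1 : k - s = (k - (s+1)) + 1 := by omega
      rw [h1, pow_succ]
      ring
    rw [e2, zero_add, Finset.mul_sum]
    refine Finset.sum_congr rfl fun s hs => ?_
    rw [Finset.mem_Ico] at hs
    have h1 : k - s = 0 := by omega
    have h2 : k - (s+1) = 0 := by omega
    rw [h1, h2]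
    ring
  have hIco : ∑ s ∈ Finset.Ico k (m+1), (-1:ℤ)^s * (m.choose s : ℤ)
      = -((-1:ℤ)^(k-1) * ((m-1).choose (k-1) : ℤ)) := by
    have hfull : ∑ s ∈ Finset.range (m+1), (-1:ℤ)^s * (m.choose s : ℤ) = 0 :=
      Int.alternating_sum_range_choose_of_ne (by omega)
    have hsplit : ∑ s ∈ Finset.Ico 0 k, (-1:ℤ)^s * (m.choose s : ℤ)
        + ∑ s ∈ Finset.Ico k (m+1), (-1:ℤ)^s * (m.choose s : ℤ)
        = ∑ s ∈ Finset.range (m+1), (-1:ℤ)^s * (m.choose s : ℤ) := by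
      rw [Finset.range_eq_Ico]
      exact Finset.sum_Ico_consecutive _ (Nat.zero_le k) (by omega)
    have hpart : ∑ s ∈ Finset.Ico 0 k, (-1:ℤ)^s * (m.choose s : ℤ)
        = (-1:ℤ)^(k-1) * ((m-1).choose (k-1) : ℤ) := by
      have hk : k = (k - 1) + 1 := by omega
      rw [← Finset.range_eq_Ico, hk]
      exact partial_alt m hm (k-1)
    rw [hfull, hpart] at hsplit
    linarith
  rw [hA, hB, claimA]
  have hTeq : T = (q:ℤ) * Sb + (1 - (q:ℤ)) * (-((-1:ℤ)^(k-1) * ((m-1).choose (k-1) : ℤ))) := by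
    rw [← hIco]; linarith [claimB]
  rw [hTeq]
  have hm2 : m + 1 - 2 = m - 1 := by omega
  rw [hm2]
  ring

private lemma card_funs_vanish {F : Type*} [Fintype F] [Zero F] {α : Type*} [Fintype α]
    (p : α → Prop) [DecidablePred p] :
    Nat.card {f : α → F | ∀ a, p a → f a = 0}
      = Fintype.card F ^ (Fintype.card {a // ¬ p a}) := by
  classical
  have e : {f : α → F | ∀ a, p a → f a = 0} ≃ ({a // ¬ p a} → F) :=
    { toFun := fun f a => f.1 a.1
      invFun := fun g => ⟨fun a => if h : p a then 0 else g ⟨a, h⟩, fun a ha => dif_pos ha⟩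
      left_inv := by
        rintro ⟨f, hf⟩
        ext a
        by_cases h : p a
        · simp [h, hf a h]
        · simp [h]
      right_inv := by
        intro g; ext a; simp [a.2] }
  rw [Nat.card_congr e, Nat.card_eq_fintype_card, Fintype.card_fun]

private lemma card_vanish {F : Type*} [Field F] [Fintype F] [DecidableEq F] {q n k : ℕ}
    (hq : Fintype.card F = q) (C : Submodule F (Fin n → F)) (hCk : Module.finrank F C = k)
    (hkn : k ≤ n)
    (hzero : ∀ x ∈ C, ∀ S : Finset (Fin n), k ≤ S.card → (∀ i ∈ S, x i = 0) → x = 0)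
    (T : Finset (Fin n)) :
    Nat.card {x : Fin n → F | x ∈ C ∧ ∀ i ∈ T, x i = 0} = q ^ (k - T.card) := by
  by_cases hT : k ≤ T.card
  · have hkT : k - T.card = 0 := by omega
    rw [hkT, pow_zero]
    have hset : {x : Fin n → F | x ∈ C ∧ ∀ i ∈ T, x i = 0} = {0} := by
      ext x
      simp only [Set.mem_setOf_eq, Set.mem_singleton_iff]
      constructor
      · rintro ⟨hx, hv⟩
        exact hzero x hx T hT hv
      · rintro rfl
        exact ⟨C.zero_mem, fun i _ => rfl⟩
    rw [hset, Nat.card_coe_set_eq, Set.ncard_singleton]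
  · push_neg at hT
    obtain ⟨S, hTS, _, hScard⟩ :=
      Finset.exists_subsuperset_card_eq (Finset.subset_univ T) hT.le
        (by simpa using hkn)
    haveI : Fintype ↥C := Fintype.ofFinite _
    let φ : ↥C → (↥S → F) := fun x j => (x : Fin n → F) j
    have hinj : Function.Injective φ := by
      intro x y hxy
      have hmem : (x : Fin n → F) - (y : Fin n → F) ∈ C := C.sub_mem x.2 y.2
      have hv : ∀ i ∈ S, ((x : Fin n → F) - (y : Fin n → F)) i = 0 := by
        intro i hi
        have h1 := congrFun hxy ⟨i, hi⟩
        simpa [φ, sub_eq_zero] using h1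
      have h0 := hzero _ hmem S (le_of_eq hScard.symm) hv
      exact Subtype.ext (sub_eq_zero.mp h0)
    have hcard : Fintype.card ↥C = Fintype.card (↥S → F) := by
      rw [Module.card_eq_pow_finrank (K := F) (V := ↥C), hCk, hq, Fintype.card_fun,
        Fintype.card_coe, hScard, hq]
    have hbij : Function.Bijective φ :=
      (Fintype.bijective_iff_injective_and_card φ).mpr ⟨hinj, hcard⟩
    let e := Equiv.ofBijective φ hbij
    have hset : Nat.card {x : Fin n → F | x ∈ C ∧ ∀ i ∈ T, x i = 0}
        = Nat.card {f : ↥S → F | ∀ j : ↥S, (j : Fin n) ∈ T → f j = 0} := by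
      apply Nat.card_congr
      refine ((Equiv.subtypeSubtypeEquivSubtypeInter (· ∈ C)
        (fun x => ∀ i ∈ T, x i = 0)).symm.trans (e.subtypeEquiv ?_))
      intro x
      constructor
      · intro hx j hj
        exact hx j hj
      · intro hx i hi
        exact hx ⟨i, hTS hi⟩ hi
    rw [hset, card_funs_vanish (F := F) (fun j : ↥S => (j : Fin n) ∈ T), hq]
    congr 1
    have hc : Fintype.card {j : ↥S // ¬ (j : Fin n) ∈ T} = (S \ T).card := by
      rw [← Fintype.card_coe (S \ T)]
      apply Fintype.card_congr
      refine (Equiv.subtypeSubtypeEquivSubtypeInter (· ∈ S) (· ∉ T)).trans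
        (Equiv.subtypeEquivRight ?_)
      intro i; simp [Finset.mem_sdiff]
    rw [hc, Finset.card_sdiff_of_subset hTS, hScard]

/-- for an MDS `[n,k]` code `C` over `F_q` with `1 ≤ k ≤ n-1` and
`n ≥ 2`, the weight enumerator values satisfy
`n·A_n = (q-1)·A_{n-1} + (-1)^(k-1)·n·(q-1)·C(n-2,k-1)` as integers. -/
theorem stmt4 {F : Type*} [Field F] [Fintype F] [DecidableEq F] {q n k : ℕ}
    (hq : Fintype.card F = q)
    (C : Submodule F (Fin n → F)) (hCk : Module.finrank F C = k)
    (hk1 : 1 ≤ k) (hkn : k ≤ n - 1) (hn : 2 ≤ n)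
    (hMDS : IsLeast {w : ℕ | ∃ x ∈ C, x ≠ 0 ∧ wt x = w} (n - k + 1))
    (A : ℕ → ℕ) (hA : ∀ w, A w = Set.ncard {x : Fin n → F | x ∈ C ∧ wt x = w}) :
    (n : ℤ) * (A n : ℤ) =
      ((q : ℤ) - 1) * (A (n - 1) : ℤ) +
        (-1 : ℤ) ^ (k - 1) * (n : ℤ) * ((q : ℤ) - 1) * (Nat.choose (n - 2) (k - 1) : ℤ) := by
  classical
  have hkn' : k ≤ n := by omega
  have hzero : ∀ x ∈ C, ∀ S : Finset (Fin n), k ≤ S.card → (∀ i ∈ S, x i = 0) → x = 0 := by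
    intro x hx S hS hv
    by_contra hx0
    have hge := hMDS.2 ⟨x, hx, hx0, rfl⟩
    have hsub : (Finset.univ.filter fun i => x i ≠ 0) ⊆ Sᶜ := by
      intro i hi
      rw [Finset.mem_filter] at hi
      rw [Finset.mem_compl]
      intro hiS
      exact hi.2 (hv i hiS)
    have hcard := Finset.card_le_card hsub
    rw [Finset.card_compl, Fintype.card_fin] at hcard
    have hwt : wt x = (Finset.univ.filter fun i => x i ≠ 0).card := rfl
    omega
  set Cf : Finset (Fin n) → Finset (Fin n → F) :=
    fun U => Finset.univ.filter fun x : Fin n → F => x ∈ C ∧ ∀ i, x i ≠ 0 → i ∈ U with hCfdef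
  set Ef : Finset (Fin n) → Finset (Fin n → F) :=
    fun U => Finset.univ.filter fun x : Fin n → F =>
      x ∈ C ∧ (Finset.univ.filter fun i => x i ≠ 0) = U with hEfdef
  set g : Finset (Fin n) → ℤ := fun U => ((Cf U).card : ℤ) with hgdef
  set f : Finset (Fin n) → ℤ := fun U => ((Ef U).card : ℤ) with hfdef
  have h_gval : ∀ V : Finset (Fin n), g V = (q:ℤ)^(k-(n-V.card)) := by
    intro V
    have h1 := card_vanish hq C hCk hkn' hzero Vᶜ
    rw [Finset.card_compl, Fintype.card_fin] at h1
    have h2 : {x : Fin n → F | x ∈ C ∧ ∀ i ∈ Vᶜ, x i = 0} = ↑(Cf V) := by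
      ext x
      simp only [hCfdef, Set.mem_setOf_eq, Finset.coe_filter, Finset.mem_univ, true_and,
        Finset.mem_compl]
      constructor
      · rintro ⟨ha, hb⟩
        exact ⟨ha, fun i hxi => by by_contra hiV; exact hxi (hb i hiV)⟩
      · rintro ⟨ha, hb⟩
        exact ⟨ha, fun i hiV => by by_contra hxi; exact hiV (hb i hxi)⟩
    have h3 : Nat.card {x : Fin n → F | x ∈ C ∧ ∀ i ∈ Vᶜ, x i = 0} = (Cf V).card := by
      rw [h2, Nat.card_coe_set_eq, Set.ncard_coe_finset]
    simp only [hgdef]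
    rw [← h3, h1]
    push_cast
    rfl
  have h_g_sum : ∀ U : Finset (Fin n), g U = ∑ V ∈ U.powerset, f V := by
    intro U
    have H : ∀ x ∈ Cf U, (Finset.univ.filter fun i => x i ≠ 0) ∈ U.powerset := by
      intro x hx
      simp only [hCfdef, Finset.mem_filter, Finset.mem_univ, true_and] at hx
      rw [Finset.mem_powerset]
      intro i hi
      rw [Finset.mem_filter] at hi
      exact hx.2 i hi.2
    have hcard := Finset.card_eq_sum_card_fiberwise H
    simp only [hgdef, hfdef]
    rw [hcard]
    push_cast
    refine Finset.sum_congr rfl fun V hV => ?_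
    congr 1
    simp only [hCfdef, hEfdef]
    rw [Finset.filter_filter]
    refine congrArg Finset.card ?_
    apply Finset.filter_congr
    intro x _
    constructor
    · rintro ⟨⟨h1, _⟩, h2⟩; exact ⟨h1, h2⟩
    · rintro ⟨h1, h2⟩
      refine ⟨⟨h1, fun i hi => ?_⟩, h2⟩
      have hmem : i ∈ (Finset.univ.filter fun j => x j ≠ 0) := by
        rw [Finset.mem_filter]; exact ⟨Finset.mem_univ i, hi⟩
      rw [h2] at hmem
      exact Finset.mem_powerset.mp hV hmem
  have h_fval : ∀ U : Finset (Fin n), f U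
      = ∑ j ∈ Finset.range (U.card + 1),
          (U.card.choose j : ℤ) * (-1:ℤ)^(U.card - j) * (q:ℤ)^(k-(n-j)) := by
    intro U
    rw [moebius f g h_g_sum U]
    rw [Finset.powerset_card_disjiUnion]
    erw [Finset.sum_disjiUnion]
    refine Finset.sum_congr rfl fun j hj => ?_
    have hterm : ∀ V ∈ Finset.powersetCard j U,
        (-1:ℤ)^(U \ V).card * g V = (-1:ℤ)^(U.card - j) * (q:ℤ)^(k-(n-j)) := by
      intro V hV
      obtain ⟨hVU, hVc⟩ := Finset.mem_powersetCard.mp hV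
      rw [h_gval V, Finset.card_sdiff_of_subset hVU, hVc]
    rw [Finset.sum_congr rfl hterm, Finset.sum_const, Finset.card_powersetCard,
      nsmul_eq_mul]
    ring
  have hAn : (A n : ℤ) = f Finset.univ := by
    rw [hA n]
    have h2 : {x : Fin n → F | x ∈ C ∧ wt x = n} = ↑(Ef Finset.univ) := by
      ext x
      simp only [hEfdef, Set.mem_setOf_eq, Finset.coe_filter, Finset.mem_univ, true_and]
      constructor
      · rintro ⟨h1, h2⟩
        refine ⟨h1, ?_⟩
        apply Finset.eq_univ_of_card
        rw [Fintype.card_fin]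
        exact h2
      · rintro ⟨h1, h2⟩
        refine ⟨h1, ?_⟩
        show (Finset.univ.filter fun i => x i ≠ 0).card = n
        rw [h2, Finset.card_univ, Fintype.card_fin]
    rw [h2, Set.ncard_coe_finset]
  have hAn1 : (A (n-1) : ℤ) = ∑ U ∈ Finset.powersetCard (n-1) Finset.univ, f U := by
    rw [hA (n-1)]
    have h2 : {x : Fin n → F | x ∈ C ∧ wt x = n-1}
        = ↑(Finset.univ.filter fun x : Fin n → F => x ∈ C ∧ wt x = n-1) := by
      ext x; simp
    rw [h2, Set.ncard_coe_finset]
    have H : ∀ x ∈ (Finset.univ.filter fun x : Fin n → F => x ∈ C ∧ wt x = n-1),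
        (Finset.univ.filter fun i => x i ≠ 0) ∈ Finset.powersetCard (n-1) Finset.univ := by
      intro x hx
      rw [Finset.mem_filter] at hx
      rw [Finset.mem_powersetCard]
      exact ⟨Finset.subset_univ _, hx.2.2⟩
    rw [Finset.card_eq_sum_card_fiberwise H]
    push_cast
    refine Finset.sum_congr rfl fun U hU => ?_
    rw [Finset.mem_powersetCard] at hU
    simp only [hfdef, hEfdef]
    congr 1
    rw [Finset.filter_filter]
    refine congrArg Finset.card ?_
    apply Finset.filter_congr
    intro x _
    constructor
    · rintro ⟨⟨h1, _⟩, h3⟩; exact ⟨h1, h3⟩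
    · rintro ⟨h1, h3⟩
      refine ⟨⟨h1, ?_⟩, h3⟩
      show (Finset.univ.filter fun i => x i ≠ 0).card = n - 1
      rw [h3]; exact hU.2
  have hconst : ∀ U ∈ Finset.powersetCard (n-1) (Finset.univ : Finset (Fin n)),
      f U = ∑ j ∈ Finset.range n, ((n-1).choose j : ℤ) * (-1:ℤ)^(n-1-j) * (q:ℤ)^(k-(n-j)) := by
    intro U hU
    rw [Finset.mem_powersetCard] at hU
    rw [h_fval U, hU.2]
    have h1 : n - 1 + 1 = n := by omega
    rw [h1]
  have hchoose : n.choose (n-1) = n := by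
    have h1 : n.choose (n - (n-1)) = n.choose (n-1) := Nat.choose_symm (by omega)
    have h2 : n - (n-1) = 1 := by omega
    rw [h2, Nat.choose_one_right] at h1
    exact h1.symm
  have hAn1' : (A (n-1) : ℤ)
      = (n:ℤ) * ∑ j ∈ Finset.range n, ((n-1).choose j : ℤ) * (-1:ℤ)^(n-1-j) * (q:ℤ)^(k-(n-j)) := by
    rw [hAn1, Finset.sum_congr rfl hconst, Finset.sum_const, Finset.card_powersetCard,
      Finset.card_univ, Fintype.card_fin, hchoose, nsmul_eq_mul]
  have hfuniv : f Finset.univ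
      = ∑ j ∈ Finset.range (n+1), (n.choose j : ℤ) * (-1:ℤ)^(n-j) * (q:ℤ)^(k-(n-j)) := by
    rw [h_fval Finset.univ, Finset.card_univ, Fintype.card_fin]
  rw [hAn, hfuniv, hAn1']
  linear_combination (n : ℤ) * key_id q n k hk1 hkn hn
end

section
/- Let C be an MDS [n,k] code over F_q with 1 ≤ k ≤ n−1 and n ≥ 2, and suppose C has no codeword of Hamming weight n. Then k is even, the number A_{n−1} of codewords of C of Hamming weight n−1 equals n·binom(n−2, k−1) (in particular A_{n−1} ≠ 0), and γ(C) = 2. -/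
open Finset Module

section aux
set_option linter.unusedSectionVars false
set_option synthInstance.maxHeartbeats 1000000
variable {F : Type*} [Field F] [Fintype F] [DecidableEq F] {n k : ℕ}

open scoped Classical in
/-- codewords vanishing on Z -/
noncomputable def subV (C : Submodule F (Fin n → F)) (Z : Finset (Fin n)) :
    Submodule F (Fin n → F) :=
  C ⊓ ⨅ i ∈ Z, LinearMap.ker (LinearMap.proj (R := F) (φ := fun _ : Fin n => F) i)

lemma mem_subV {C : Submodule F (Fin n → F)} {Z : Finset (Fin n)} {x : Fin n → F} :
    x ∈ subV C Z ↔ x ∈ C ∧ ∀ i ∈ Z, x i = 0 := by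
  simp [subV, Submodule.mem_inf, Submodule.mem_iInf, LinearMap.mem_ker]

lemma subV_eq_bot {C : Submodule F (Fin n → F)}
    (hd : ∀ x ∈ C, x ≠ 0 → n - k + 1 ≤ wt x) (hkn' : k ≤ n)
    {Z : Finset (Fin n)} (hZ : k ≤ Z.card) : subV C Z = ⊥ := by
  rw [eq_bot_iff]
  intro x hx
  rcases mem_subV.1 hx with ⟨hxC, hxZ⟩
  by_contra hne
  have hx0 : x ≠ 0 := by simpa [Submodule.mem_bot] using hne
  have h1 : n - k + 1 ≤ wt x := hd x hxC hx0
  have hsub : (Finset.univ.filter fun i => x i ≠ 0) ⊆ Finset.univ \ Z := by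
    intro i hi
    simp only [mem_filter, mem_univ, true_and] at hi
    simp only [mem_sdiff, mem_univ, true_and]
    exact fun hiZ => hi (hxZ i hiZ)
  have h2 : wt x ≤ n - Z.card := by
    have := Finset.card_le_card hsub
    rwa [Finset.card_sdiff_of_subset (Finset.subset_univ Z), Finset.card_univ,
      Fintype.card_fin] at this
  have hZn : Z.card ≤ n := by
    simpa using Finset.card_le_card (Finset.subset_univ Z)
  omega


lemma finrank_subV {C : Submodule F (Fin n → F)}
    (hd : ∀ x ∈ C, x ≠ 0 → n - k + 1 ≤ wt x) (hCk : Module.finrank F C = k)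
    (hkn' : k ≤ n) {Z : Finset (Fin n)} (hZ : Z.card ≤ k) :
    Module.finrank F (subV C Z) = k - Z.card := by
  -- upper bound
  obtain ⟨Z', hZZ', hZ'card⟩ := Finset.exists_superset_card_eq hZ (by simp [hkn'])
  have hbot : subV C Z' = ⊥ := subV_eq_bot hd hkn' (le_of_eq hZ'card.symm)
  let f : subV C Z →ₗ[F] ({ i // i ∈ Z' \ Z } → F) :=
    { toFun := fun x i => x.1 i.1
      map_add' := fun _ _ => rfl
      map_smul' := fun _ _ => rfl }
  have hfinj : Function.Injective f := by
    rw [injective_iff_map_eq_zero]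
    intro x hx
    have hx' : x.1 ∈ subV C Z' := by
      refine mem_subV.2 ⟨(mem_subV.1 x.2).1, fun i hi => ?_⟩
      by_cases hiZ : i ∈ Z
      · exact (mem_subV.1 x.2).2 i hiZ
      · exact congrFun hx ⟨i, Finset.mem_sdiff.2 ⟨hi, hiZ⟩⟩
    rw [hbot, Submodule.mem_bot] at hx'
    exact Subtype.ext hx'
  have hupper : Module.finrank F (subV C Z) ≤ k - Z.card := by
    have := LinearMap.finrank_le_finrank_of_injective hfinj
    rwa [Module.finrank_pi, Fintype.card_coe, Finset.card_sdiff_of_subset hZZ', hZ'card] at this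
  -- lower bound
  let g : C →ₗ[F] ({ i // i ∈ Z } → F) :=
    { toFun := fun x i => x.1 i.1
      map_add' := fun _ _ => rfl
      map_smul' := fun _ _ => rfl }
  let e : LinearMap.ker g ≃ₗ[F] subV C Z :=
    { toFun := fun x => ⟨x.1.1, mem_subV.2 ⟨x.1.2, fun i hi => congrFun x.2 ⟨i, hi⟩⟩⟩
      invFun := fun y => ⟨⟨y.1, (mem_subV.1 y.2).1⟩, by
        ext i; exact (mem_subV.1 y.2).2 i.1 i.2⟩
      map_add' := fun _ _ => rfl
      map_smul' := fun _ _ => rfl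
      left_inv := fun _ => rfl
      right_inv := fun _ => rfl }
  have hrn := LinearMap.finrank_range_add_finrank_ker g
  have hker : Module.finrank F (LinearMap.ker g) = Module.finrank F (subV C Z) :=
    e.finrank_eq
  have hrange : Module.finrank F (LinearMap.range g) ≤ Z.card := by
    have := Submodule.finrank_le (LinearMap.range g)
    rwa [Module.finrank_pi, Fintype.card_coe] at this
  rw [hCk, hker] at hrn
  omega
lemma card_subV {C : Submodule F (Fin n → F)}
    (hd : ∀ x ∈ C, x ≠ 0 → n - k + 1 ≤ wt x) (hCk : Module.finrank F C = k)
    (hkn' : k ≤ n) (Z : Finset (Fin n)) :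
    Nat.card {x : Fin n → F // x ∈ C ∧ ∀ i ∈ Z, x i = 0} =
      if Z.card ≤ k then (Fintype.card F) ^ (k - Z.card) else 1 := by
  have h1 : Nat.card {x : Fin n → F // x ∈ C ∧ ∀ i ∈ Z, x i = 0} =
      Nat.card (subV C Z) := by
    exact Nat.card_congr (Equiv.subtypeEquivRight (fun x => mem_subV.symm))
  haveI : Fintype (subV C Z) := Fintype.ofFinite _
  have h2 : Nat.card (subV C Z) = (Fintype.card F) ^ Module.finrank F (subV C Z) := by
    rw [Nat.card_eq_fintype_card, card_eq_pow_finrank (K := F)]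
  rw [h1, h2]
  by_cases h : Z.card ≤ k
  · rw [finrank_subV hd hCk hkn' h, if_pos h]
  · rw [subV_eq_bot hd hkn' (le_of_not_ge h), if_neg h, finrank_bot, pow_zero]

lemma count_IE (c : ℕ → ℤ) (C : Submodule F (Fin n → F))
    (hc : ∀ Z : Finset (Fin n),
      (Nat.card {x : Fin n → F // x ∈ C ∧ ∀ i ∈ Z, x i = 0} : ℤ) = c Z.card)
    (Z U : Finset (Fin n)) (hdisj : Disjoint Z U) :
    (Nat.card {x : Fin n → F // x ∈ C ∧ (∀ i ∈ Z, x i = 0) ∧ ∀ i ∈ U, x i ≠ 0} : ℤ)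
      = ∑ j ∈ Finset.range (U.card + 1),
          (-1) ^ j * (U.card.choose j) * c (Z.card + j) := by
  classical
  set χ : (Fin n → F) → Fin n → ℤ := fun x i => if x i = 0 then 1 else 0 with hχ
  have hcard : ∀ (p : (Fin n → F) → Prop) (inst : DecidablePred p),
      (Nat.card {x : Fin n → F // p x} : ℤ)
      = ∑ x : Fin n → F, (if p x then (1:ℤ) else 0) := by
    intro p inst
    rw [Finset.sum_boole]
    congr 1
    rw [← Fintype.card_subtype]
    exact Nat.card_eq_fintype_card
  have key : ∀ x : Fin n → F,
      (if x ∈ C ∧ (∀ i ∈ Z, x i = 0) ∧ (∀ i ∈ U, x i ≠ 0) then (1:ℤ) else 0)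
      = (if x ∈ C ∧ (∀ i ∈ Z, x i = 0) then (1:ℤ) else 0) * ∏ i ∈ U, (1 - χ x i) := by
    intro x
    by_cases hU : ∀ i ∈ U, x i ≠ 0
    · have h1 : ∏ i ∈ U, (1 - χ x i) = 1 :=
        Finset.prod_eq_one (fun i hi => by simp [hχ, hU i hi])
      rw [h1, mul_one]
      by_cases hZC : x ∈ C ∧ ∀ i ∈ Z, x i = 0
      · rw [if_pos ⟨hZC.1, hZC.2, hU⟩, if_pos hZC]
      · rw [if_neg (fun h => hZC ⟨h.1, h.2.1⟩), if_neg hZC]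
    · push_neg at hU
      obtain ⟨i, hiU, hxi⟩ := hU
      have h1 : ∏ i ∈ U, (1 - χ x i) = 0 :=
        Finset.prod_eq_zero hiU (by simp [hχ, hxi])
      rw [h1, mul_zero, if_neg (fun h => h.2.2 i hiU hxi)]
  have expand : ∀ x : Fin n → F, ∏ i ∈ U, (1 - χ x i)
      = ∑ S ∈ U.powerset, (-1) ^ S.card * ∏ i ∈ S, χ x i := by
    intro x
    have h := Finset.prod_add (fun i => -χ x i) (fun _ => (1:ℤ)) U
    simp only [Finset.prod_const_one, mul_one] at h
    calc ∏ i ∈ U, (1 - χ x i) = ∏ i ∈ U, (-χ x i + 1) := by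
          refine Finset.prod_congr rfl (fun i _ => by ring)
      _ = ∑ S ∈ U.powerset, ∏ i ∈ S, (-χ x i) := h
      _ = ∑ S ∈ U.powerset, (-1) ^ S.card * ∏ i ∈ S, χ x i := by
          refine Finset.sum_congr rfl (fun S _ => ?_)
          rw [← Finset.prod_const (-1 : ℤ), ← Finset.prod_mul_distrib]
          exact Finset.prod_congr rfl (fun i _ => by ring)
  have inner : ∀ S ∈ U.powerset, ∀ x : Fin n → F,
      (if x ∈ C ∧ (∀ i ∈ Z, x i = 0) then (1:ℤ) else 0) * ∏ i ∈ S, χ x i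
      = (if x ∈ C ∧ ∀ i ∈ Z ∪ S, x i = 0 then (1:ℤ) else 0) := by
    intro S _ x
    by_cases hS0 : ∀ i ∈ S, x i = 0
    · have h1 : ∏ i ∈ S, χ x i = 1 :=
        Finset.prod_eq_one (fun i hi => by simp [hχ, hS0 i hi])
      rw [h1, mul_one]
      refine if_congr ?_ rfl rfl
      constructor
      · rintro ⟨h1', h2'⟩
        exact ⟨h1', fun i hi => (Finset.mem_union.1 hi).elim (h2' i) (hS0 i)⟩
      · rintro ⟨h1', h2'⟩
        exact ⟨h1', fun i hi => h2' i (Finset.mem_union.2 (Or.inl hi))⟩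
    · push_neg at hS0
      obtain ⟨i, hiS, hxi⟩ := hS0
      have h1 : ∏ i ∈ S, χ x i = 0 :=
        Finset.prod_eq_zero hiS (by simp [hχ, hxi])
      rw [h1, mul_zero, eq_comm,
        if_neg (fun h => hxi (h.2 i (Finset.mem_union.2 (Or.inr hiS))))]
  calc (Nat.card {x : Fin n → F // x ∈ C ∧ (∀ i ∈ Z, x i = 0) ∧ ∀ i ∈ U, x i ≠ 0} : ℤ)
      = ∑ x : Fin n → F, (if x ∈ C ∧ (∀ i ∈ Z, x i = 0) ∧ (∀ i ∈ U, x i ≠ 0)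
          then (1:ℤ) else 0) := hcard _ _
    _ = ∑ x : Fin n → F, (if x ∈ C ∧ (∀ i ∈ Z, x i = 0) then (1:ℤ) else 0)
          * ∑ S ∈ U.powerset, (-1) ^ S.card * ∏ i ∈ S, χ x i := by
        refine Finset.sum_congr rfl (fun x _ => ?_)
        rw [key x, expand x]
    _ = ∑ x : Fin n → F, ∑ S ∈ U.powerset,
          (if x ∈ C ∧ (∀ i ∈ Z, x i = 0) then (1:ℤ) else 0)
          * ((-1) ^ S.card * ∏ i ∈ S, χ x i) :=
        Finset.sum_congr rfl (fun x _ => Finset.mul_sum _ _ _)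
    _ = ∑ S ∈ U.powerset, ∑ x : Fin n → F,
          (if x ∈ C ∧ (∀ i ∈ Z, x i = 0) then (1:ℤ) else 0)
          * ((-1) ^ S.card * ∏ i ∈ S, χ x i) := Finset.sum_comm
    _ = ∑ S ∈ U.powerset, (-1) ^ S.card * ∑ x : Fin n → F,
          ((if x ∈ C ∧ (∀ i ∈ Z, x i = 0) then (1:ℤ) else 0) * ∏ i ∈ S, χ x i) := by
        refine Finset.sum_congr rfl (fun S _ => ?_)
        rw [Finset.mul_sum]
        exact Finset.sum_congr rfl (fun x _ => by ring)
    _ = ∑ S ∈ U.powerset, (-1) ^ S.card * c (Z.card + S.card) := by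
        refine Finset.sum_congr rfl (fun S hS => ?_)
        congr 1
        rw [Finset.sum_congr rfl (fun x _ => inner S hS x), ← hcard _ _, hc,
          Finset.card_union_of_disjoint
            (hdisj.mono_right (Finset.le_iff_subset.2 (Finset.mem_powerset.1 hS)))]
    _ = ∑ j ∈ Finset.range (U.card + 1),
          (-1) ^ j * (U.card.choose j) * c (Z.card + j) := by
        rw [Finset.sum_powerset]
        refine Finset.sum_congr rfl (fun j _ => ?_)
        rw [Finset.sum_congr rfl
            (fun S hS => by rw [(Finset.mem_powersetCard.1 hS).2]),
          Finset.sum_const, Finset.card_powersetCard]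
        push_cast
        ring

lemma alt_partial (N : ℕ) (hN : 1 ≤ N) (m : ℕ) :
    ∑ j ∈ Finset.range (m + 1), (-1 : ℤ) ^ j * (N.choose j)
      = (-1) ^ m * ((N - 1).choose m) := by
  induction m with
  | zero => simp
  | succ m ih =>
    rw [Finset.sum_range_succ, ih]
    obtain ⟨N', rfl⟩ : ∃ N', N = N' + 1 := ⟨N - 1, by omega⟩
    have h := Nat.choose_succ_succ N' m
    push_cast [h]
    ring

lemma numeric_main {Q m k' : ℕ} (hQ2 : 2 ≤ Q) (hk : k' ≤ m)
    (c : ℕ → ℤ) (hcdef : ∀ j, c j = if j ≤ k' + 1 then (Q : ℤ) ^ (k' + 1 - j) else 1)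
    (hzero : ∑ j ∈ Finset.range (m + 2), (-1 : ℤ) ^ j * ((m + 1).choose j) * c j
           = ∑ j ∈ Finset.range (m + 2), (-1 : ℤ) ^ j * ((m + 1).choose j) * c (1 + j)) :
    ∑ j ∈ Finset.range (m + 2), (-1 : ℤ) ^ j * ((m + 1).choose j) * c (1 + j)
      = (-1) ^ (k' + 1) * (m.choose k') := by
  set k := k' + 1 with hkdef
  have hkm : k ≤ m + 1 := by omega
  -- the difference of consecutive c values
  have key : ∀ j, c j - c (1 + j)
      = if j < k then ((Q : ℤ) - 1) * (Q : ℤ) ^ (k - 1 - j) else 0 := by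
    intro j
    rw [hcdef j, hcdef (1 + j)]
    by_cases h1 : j < k
    · rw [if_pos (show j ≤ k by omega), if_pos (show 1 + j ≤ k by omega), if_pos h1]
      have e1 : k - j = (k - 1 - j) + 1 := by omega
      have e2 : k - (1 + j) = k - 1 - j := by omega
      rw [e1, e2, pow_succ]
      ring
    · rw [if_neg h1, if_neg (show ¬ (1 + j ≤ k) by omega)]
      by_cases h2 : j ≤ k
      · rw [if_pos h2, (show k - j = 0 by omega), pow_zero]
        ring
      · rw [if_neg h2]
        ring
  -- R = 0
  have hR0 : ∑ j ∈ Finset.range (m + 2),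
      (-1 : ℤ) ^ j * ((m + 1).choose j) * (c j - c (1 + j)) = 0 := by
    simp only [mul_sub, Finset.sum_sub_distrib, hzero, sub_self]
  have hR1 : ∑ j ∈ Finset.range (m + 2),
      (-1 : ℤ) ^ j * ((m + 1).choose j) * (c j - c (1 + j))
      = ((Q : ℤ) - 1) * ∑ j ∈ Finset.range k,
          (-1 : ℤ) ^ j * ((m + 1).choose j) * (Q : ℤ) ^ (k - 1 - j) := by
    rw [Finset.mul_sum]
    rw [← Finset.sum_subset (Finset.range_subset_range.2 (by omega : k ≤ m + 2))
      (fun j _ hj => ?_)]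
    · refine Finset.sum_congr rfl (fun j hj => ?_)
      rw [key j, if_pos (Finset.mem_range.1 hj)]
      ring
    · rw [key j, if_neg (by simpa using hj), mul_zero]
  have hQ1 : (Q : ℤ) - 1 ≠ 0 := by
    have : (2 : ℤ) ≤ (Q : ℤ) := by exact_mod_cast hQ2
    omega
  have hRk : ∑ j ∈ Finset.range k,
      (-1 : ℤ) ^ j * ((m + 1).choose j) * (Q : ℤ) ^ (k - 1 - j) = 0 := by
    have := hR1 ▸ hR0
    exact (mul_eq_zero.1 this).resolve_left hQ1
  -- split the target sum
  have hsplit : ∑ j ∈ Finset.range (m + 2), (-1 : ℤ) ^ j * ((m + 1).choose j) * c (1 + j)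
      = (∑ j ∈ Finset.range k, (-1 : ℤ) ^ j * ((m + 1).choose j) * (Q : ℤ) ^ (k - 1 - j))
        + ∑ j ∈ Finset.Ico k (m + 2), (-1 : ℤ) ^ j * ((m + 1).choose j) := by
    rw [Finset.range_eq_Ico,
      ← Finset.sum_Ico_consecutive _ (Nat.zero_le k) (by omega : k ≤ m + 2)]
    congr 1
    · rw [← Finset.range_eq_Ico]
      refine Finset.sum_congr rfl (fun j hj => ?_)
      have hjk : j < k := Finset.mem_range.1 hj
      rw [hcdef (1 + j), if_pos (by omega)]
      congr 2
      omega
    · refine Finset.sum_congr rfl (fun j hj => ?_)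
      have hjk : k ≤ j := (Finset.mem_Ico.1 hj).1
      rw [hcdef (1 + j), if_neg (by omega), mul_one]
  -- the tail
  have htail : ∑ j ∈ Finset.Ico k (m + 2), (-1 : ℤ) ^ j * ((m + 1).choose j)
      = (-1) ^ k * (m.choose k') := by
    have htot : ∑ j ∈ Finset.range (m + 2), (-1 : ℤ) ^ j * ((m + 1).choose j) = 0 := by
      have h := Int.alternating_sum_range_choose (n := m + 1)
      rw [if_neg (by omega)] at h
      exact h
    have hhead : ∑ j ∈ Finset.range k, (-1 : ℤ) ^ j * ((m + 1).choose j)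
        = (-1) ^ k' * (m.choose k') := by
      have h := alt_partial (m + 1) (by omega) k'
      simpa using h
    have hsum : ∑ j ∈ Finset.range k, (-1 : ℤ) ^ j * ((m + 1).choose j)
        + ∑ j ∈ Finset.Ico k (m + 2), (-1 : ℤ) ^ j * ((m + 1).choose j) = 0 := by
      rw [Finset.range_eq_Ico,
        Finset.sum_Ico_consecutive _ (Nat.zero_le k) (by omega : k ≤ m + 2),
        ← Finset.range_eq_Ico]
      exact htot
    rw [hhead] at hsum
    have : (-1 : ℤ) ^ k = -(-1) ^ k' := by rw [hkdef, pow_succ]; ring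
    rw [this]
    linarith
  rw [hsplit, hRk, htail, zero_add]

end aux

set_option maxHeartbeats 1000000 in
/-- if an MDS `[n,k]` code `C` over `F_q` (with `1 ≤ k ≤ n-1`, `n ≥ 2`)
has no codeword of weight `n`, then `k` is even, the number of codewords of weight `n-1`
equals `n·C(n-2,k-1)` and is nonzero, and `γ(C) = 2`. -/
theorem stmt5 {F : Type*} [Field F] [Fintype F] [DecidableEq F] {q n k : ℕ}
    (hq : Fintype.card F = q)
    (C : Submodule F (Fin n → F)) (hCk : Module.finrank F C = k)
    (hk1 : 1 ≤ k) (hkn : k ≤ n - 1) (hn : 2 ≤ n)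
    (hMDS : IsLeast {w : ℕ | ∃ x ∈ C, x ≠ 0 ∧ wt x = w} (n - k + 1))
    (A : ℕ → ℕ) (hA : ∀ w, A w = Set.ncard {x : Fin n → F | x ∈ C ∧ wt x = w})
    (hAn : A n = 0) :
    Even k ∧ A (n - 1) = n * Nat.choose (n - 2) (k - 1) ∧ A (n - 1) ≠ 0 ∧
      IsLeast (gammaSet C) 2 := by
  classical
  obtain ⟨m, rfl⟩ : ∃ m, n = m + 2 := ⟨n - 2, by omega⟩
  obtain ⟨k', rfl⟩ : ∃ k', k = k' + 1 := ⟨k - 1, by omega⟩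
  have hk'm : k' ≤ m := by omega
  have e1 : m + 2 - 1 = m + 1 := rfl
  have e2 : m + 2 - 2 = m := rfl
  have e3 : k' + 1 - 1 = k' := rfl
  rw [e1, e2, e3]
  obtain ⟨i0, i1, ine⟩ : ∃ i0 i1 : Fin (m + 2), i0 ≠ i1 :=
    ⟨⟨0, by omega⟩, ⟨1, by omega⟩, fun h => by simpa using congrArg Fin.val h⟩
  -- basic facts
  have hd : ∀ x ∈ C, x ≠ 0 → (m + 2) - (k' + 1) + 1 ≤ wt x :=
    fun x hx h0 => hMDS.2 ⟨x, hx, h0, rfl⟩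
  set Q : ℕ := Fintype.card F with hQdef
  have hQ2 : 2 ≤ Q := Fintype.one_lt_card
  set c : ℕ → ℤ := fun j => if j ≤ k' + 1 then (Q : ℤ) ^ (k' + 1 - j) else 1 with hcdef
  have hc : ∀ Z : Finset (Fin (m + 2)),
      (Nat.card {x : Fin (m + 2) → F // x ∈ C ∧ ∀ i ∈ Z, x i = 0} : ℤ) = c Z.card := by
    intro Z
    rw [card_subV hd hCk (by omega) Z]
    by_cases h : Z.card ≤ k' + 1 <;> simp [hcdef, h, ← hQdef]
  have hNat : ∀ (p : (Fin (m + 2) → F) → Prop) (inst : DecidablePred p),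
      Nat.card {x : Fin (m + 2) → F // p x} = (Finset.univ.filter p).card := by
    intro p inst
    rw [Nat.card_eq_fintype_card, Fintype.card_subtype]
  -- weight characterizations
  have hwt_card : ∀ x : Fin (m + 2) → F,
      (Finset.univ.filter fun i => x i = 0).card + wt x = m + 2 := by
    intro x
    have h := Finset.card_filter_add_card_filter_not
      (s := (Finset.univ : Finset (Fin (m + 2)))) (p := fun i => x i = 0)
    rw [Finset.card_univ, Fintype.card_fin] at h
    have e : (Finset.univ.filter fun i => ¬ x i = 0)
        = (Finset.univ.filter fun i => x i ≠ 0) :=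
      Finset.filter_congr (fun i _ => Iff.rfl)
    rw [e] at h
    exact h
  have hwt_full : ∀ x : Fin (m + 2) → F, wt x = m + 2 ↔ ∀ i, x i ≠ 0 := by
    intro x
    have h := hwt_card x
    constructor
    · intro hw i hxi
      have h0 : (Finset.univ.filter fun i => x i = 0).card = 0 := by omega
      have hmem : i ∈ Finset.univ.filter fun i => x i = 0 := by simp [hxi]
      rw [Finset.card_eq_zero.1 h0] at hmem
      simp at hmem
    · intro hall
      have h0 : (Finset.univ.filter fun i => x i = 0) = ∅ :=
        Finset.filter_eq_empty_iff.2 (fun i _ => hall i)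
      rw [h0, Finset.card_empty] at h
      omega
  have hwt_n1 : ∀ x : Fin (m + 2) → F,
      wt x = m + 1 ↔ ∃ i, x i = 0 ∧ ∀ j, j ≠ i → x j ≠ 0 := by
    intro x
    have h := hwt_card x
    constructor
    · intro hw
      have h1 : (Finset.univ.filter fun i => x i = 0).card = 1 := by omega
      obtain ⟨i, hi⟩ := Finset.card_eq_one.1 h1
      refine ⟨i, ?_, ?_⟩
      · have hmem : i ∈ Finset.univ.filter fun i => x i = 0 :=
          hi ▸ Finset.mem_singleton_self i
        simpa using hmem
      · intro j hj hxj
        have hmem : j ∈ Finset.univ.filter fun i => x i = 0 := by simp [hxj]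
        rw [hi] at hmem
        exact hj (Finset.mem_singleton.1 hmem)
    · rintro ⟨i, hxi, hother⟩
      have h1 : (Finset.univ.filter fun i => x i = 0) = {i} := by
        ext j
        simp only [Finset.mem_filter, Finset.mem_univ, true_and, Finset.mem_singleton]
        constructor
        · intro hj
          by_contra hne
          exact hother j hne hj
        · rintro rfl
          exact hxi
      rw [h1, Finset.card_singleton] at h
      omega
  -- A as Nat.card
  have hAval : ∀ w, A w = Nat.card {x : Fin (m + 2) → F // x ∈ C ∧ wt x = w} := by
    intro w
    rw [hA w, ← Nat.card_coe_set_eq]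
    exact Nat.card_congr (Equiv.subtypeEquivRight fun x => Iff.rfl)
  -- no full-weight codewords
  have hA2_0 : Nat.card {x : Fin (m + 2) → F // x ∈ C ∧ ∀ i, x i ≠ 0} = 0 := by
    have h := hAval (m + 2)
    rw [hAn] at h
    rw [Nat.card_congr (Equiv.subtypeEquivRight
      (fun x => and_congr_right fun _ => hwt_full x))] at h
    exact h.symm
  -- the per-coordinate predicates
  set Pb : Fin (m + 2) → (Fin (m + 2) → F) → Prop :=
    fun i x => x ∈ C ∧ x i = 0 ∧ ∀ j, j ≠ i → x j ≠ 0 with hPb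
  set Pp : Fin (m + 2) → (Fin (m + 2) → F) → Prop :=
    fun i x => x ∈ C ∧ ∀ j, j ≠ i → x j ≠ 0 with hPp
  have hUcard : ∀ i : Fin (m + 2), (Finset.univ \ {i}).card = m + 1 := by
    intro i
    rw [Finset.card_sdiff_of_subset (Finset.subset_univ _), Finset.card_singleton,
      Finset.card_univ, Fintype.card_fin]
    rfl
  have hb_eq : ∀ i, (Nat.card {x : Fin (m + 2) → F // Pb i x} : ℤ)
      = ∑ j ∈ Finset.range (m + 2), (-1 : ℤ) ^ j * ((m + 1).choose j) * c (1 + j) := by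
    intro i
    have h := count_IE c C hc {i} (Finset.univ \ {i}) Finset.disjoint_sdiff
    rw [hUcard i, Finset.card_singleton] at h
    have hiff : ∀ x : Fin (m + 2) → F,
        (x ∈ C ∧ (∀ j ∈ ({i} : Finset (Fin (m + 2))), x j = 0)
          ∧ ∀ j ∈ Finset.univ \ {i}, x j ≠ 0) ↔ Pb i x := by
      intro x
      simp only [Finset.mem_singleton, Finset.mem_sdiff, Finset.mem_univ, true_and,
        hPb, forall_eq]
      try tauto
    rw [Nat.card_congr (Equiv.subtypeEquivRight hiff)] at h
    exact h
  have hp_eq : ∀ i : Fin (m + 2), (Nat.card {x : Fin (m + 2) → F // Pp i x} : ℤ)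
      = ∑ j ∈ Finset.range (m + 2), (-1 : ℤ) ^ j * ((m + 1).choose j) * c j := by
    intro i
    have h := count_IE c C hc ∅ (Finset.univ \ {i}) (Finset.disjoint_empty_left _)
    rw [hUcard i, Finset.card_empty] at h
    simp only [zero_add] at h
    have hiff : ∀ x : Fin (m + 2) → F,
        (x ∈ C ∧ (∀ j ∈ (∅ : Finset (Fin (m + 2))), x j = 0)
          ∧ ∀ j ∈ Finset.univ \ {i}, x j ≠ 0) ↔ Pp i x := by
      intro x
      simp only [Finset.notMem_empty, false_implies, implies_true, true_and,
        Finset.mem_sdiff, Finset.mem_univ, Finset.mem_singleton, hPp]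
      try tauto
    rw [Nat.card_congr (Equiv.subtypeEquivRight hiff)] at h
    exact h
  -- splitting off the full-weight words
  have hsplitcard : ∀ i : Fin (m + 2),
      Nat.card {x : Fin (m + 2) → F // Pp i x}
      = Nat.card {x : Fin (m + 2) → F // Pb i x}
        + Nat.card {x : Fin (m + 2) → F // x ∈ C ∧ ∀ j, x j ≠ 0} := by
    intro i
    rw [← Nat.card_congr
      (Equiv.sumCompl (fun y : {x : Fin (m + 2) → F // Pp i x} =>
        (y : Fin (m + 2) → F) i = 0)), Nat.card_sum]
    congr 1
    · refine Nat.card_congr ((Equiv.subtypeSubtypeEquivSubtypeInter (Pp i) (fun z => z i = 0)).trans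
        (Equiv.subtypeEquivRight (fun x => ?_)))
      simp only [hPp, hPb]
      tauto
    · refine Nat.card_congr ((Equiv.subtypeSubtypeEquivSubtypeInter (Pp i) (fun z => ¬ z i = 0)).trans
        (Equiv.subtypeEquivRight (fun x => ?_)))
      simp only [hPp]
      constructor
      · rintro ⟨⟨h1, h2⟩, h3⟩
        refine ⟨h1, fun j => ?_⟩
        by_cases hji : j = i
        · rw [hji]; exact h3
        · exact h2 j hji
      · rintro ⟨h1, h2⟩
        exact ⟨⟨h1, fun j _ => h2 j⟩, h2 i⟩
  have hpb : ∀ i : Fin (m + 2), Nat.card {x : Fin (m + 2) → F // Pp i x}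
      = Nat.card {x : Fin (m + 2) → F // Pb i x} := by
    intro i
    rw [hsplitcard i, hA2_0, add_zero]
  -- numerics
  have hbval : ∀ i : Fin (m + 2), (Nat.card {x : Fin (m + 2) → F // Pb i x} : ℤ)
      = (-1) ^ (k' + 1) * (m.choose k') := by
    have hzero : ∑ j ∈ Finset.range (m + 2), (-1 : ℤ) ^ j * ((m + 1).choose j) * c j
        = ∑ j ∈ Finset.range (m + 2), (-1 : ℤ) ^ j * ((m + 1).choose j) * c (1 + j) := by
      rw [← hp_eq i0, ← hb_eq i0, hpb i0]
    have h := numeric_main hQ2 hk'm c (fun j => congrFun hcdef j) hzero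
    intro i
    rw [hb_eq i, h]
  have hchoose_pos : 0 < m.choose k' := Nat.choose_pos hk'm
  have hke : Even (k' + 1) := by
    rcases Nat.even_or_odd (k' + 1) with he | ho
    · exact he
    · exfalso
      have h := hbval i0
      rw [Odd.neg_one_pow ho] at h
      have h1 : (0 : ℤ) ≤ (Nat.card {x : Fin (m + 2) → F // Pb i0 x} : ℤ) :=
        Int.natCast_nonneg _
      have h2 : (0 : ℤ) < (m.choose k' : ℤ) := by exact_mod_cast hchoose_pos
      rw [h] at h1
      linarith
  have hbcount : ∀ i : Fin (m + 2),
      Nat.card {x : Fin (m + 2) → F // Pb i x} = m.choose k' := by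
    intro i
    have h := hbval i
    rw [Even.neg_one_pow hke, one_mul] at h
    exact_mod_cast h
  -- A (m+1)
  have hA1 : A (m + 1) = (m + 2) * m.choose k' := by
    rw [hAval (m + 1), hNat _ (Classical.decPred _)]
    have hset : (Finset.univ.filter fun x : Fin (m + 2) → F => x ∈ C ∧ wt x = m + 1)
        = Finset.univ.biUnion (fun i => Finset.univ.filter (Pb i)) := by
      ext x
      simp only [Finset.mem_filter, Finset.mem_univ, true_and, Finset.mem_biUnion, hPb]
      constructor
      · rintro ⟨hxC, hw⟩
        obtain ⟨i, h1, h2⟩ := (hwt_n1 x).1 hw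
        exact ⟨i, hxC, h1, h2⟩
      · rintro ⟨i, hxC, h1, h2⟩
        exact ⟨hxC, (hwt_n1 x).2 ⟨i, h1, h2⟩⟩
    rw [Finset.filter_congr_decidable, hset, Finset.card_biUnion]
    · rw [Finset.sum_congr rfl
        (fun i _ => (hNat (Pb i) _).symm.trans (hbcount i)), Finset.sum_const,
        Finset.card_univ, Fintype.card_fin, smul_eq_mul]
    · intro a _ b _ hab
      rw [Function.onFun, Finset.disjoint_left]
      intro x hxa hxb
      simp only [Finset.mem_filter, Finset.mem_univ, true_and, hPb] at hxa hxb
      exact hxb.2.2 a (fun h => hab (h ▸ rfl)) hxa.2.1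
  -- witnesses of weight m+1
  have hwit : ∀ i : Fin (m + 2), ∃ x : Fin (m + 2) → F, Pb i x := by
    intro i
    have hpos : 0 < Nat.card {x : Fin (m + 2) → F // Pb i x} := by
      rw [hbcount i]; exact hchoose_pos
    obtain ⟨⟨x, hx⟩⟩ := (Nat.card_pos_iff.mp hpos).1
    exact ⟨x, hx⟩
  obtain ⟨x, hxC, hx0, hxo⟩ := hwit i0
  obtain ⟨y, hyC, hy0, hyo⟩ := hwit i1
  -- gamma
  have hgamma : IsLeast (gammaSet C) 2 := by
    constructor
    · refine ⟨by norm_num, Submodule.span F {x, y}, ?_, ?_, ?_⟩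
      · rw [Submodule.span_le]
        intro z hz
        rcases Set.mem_insert_iff.1 hz with rfl | hz1
        · exact hxC
        · rw [Set.mem_singleton_iff] at hz1
          subst hz1
          exact hyC
      · have hli : LinearIndependent F ![x, y] := by
          rw [LinearIndependent.pair_iff]
          intro s t hst
          have h1 : s * x i1 + t * y i1 = 0 := by
            have := congrFun hst i1
            simpa using this
          have h0 : s * x i0 + t * y i0 = 0 := by
            have := congrFun hst i0
            simpa using this
          rw [hy0, mul_zero, add_zero] at h1
          have hs : s = 0 :=
            (mul_eq_zero.1 h1).resolve_right (hxo _ (Ne.symm ine))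
          rw [hs, zero_mul, zero_add] at h0
          have ht : t = 0 :=
            (mul_eq_zero.1 h0).resolve_right (hyo _ ine)
          exact ⟨hs, ht⟩
        have hrange : ({x, y} : Set (Fin (m + 2) → F)) = Set.range ![x, y] := by
          ext z
          simp only [Set.mem_insert_iff, Set.mem_singleton_iff, Set.mem_range,
            Fin.exists_fin_two]
          simp [Matrix.cons_val_zero, Matrix.cons_val_one]
          tauto
        rw [hrange, finrank_span_eq_card hli, Fintype.card_fin]
      · intro i
        by_cases h : i = i0
        · refine ⟨y, Submodule.subset_span (by simp), ?_⟩
          rw [h]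
          exact hyo _ ine
        · exact ⟨x, Submodule.subset_span (by simp), hxo i h⟩
    · rintro r ⟨hr0, D, hDC, hDr, hfull⟩
      by_contra hlt
      have hr1 : r = 1 :=
        le_antisymm (Nat.lt_succ_iff.mp (Nat.not_le.mp hlt)) hr0
      rw [hr1] at hDr
      obtain ⟨v, hv0, hvspan⟩ := finrank_eq_one_iff'.1 hDr
      have hvfull : ∀ i, (v : Fin (m + 2) → F) i ≠ 0 := by
        intro i
        obtain ⟨z, hzD, hzi⟩ := hfull i
        obtain ⟨cc, hcc⟩ := hvspan ⟨z, hzD⟩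
        have hz : cc * (v : Fin (m + 2) → F) i = z i := by
          have := congrArg (fun w : D => (w : Fin (m + 2) → F) i) hcc
          simpa using this
        intro hvi
        rw [hvi, mul_zero] at hz
        exact hzi hz.symm
      have hnon : Nonempty {x : Fin (m + 2) → F // x ∈ C ∧ ∀ i, x i ≠ 0} :=
        ⟨⟨(v : Fin (m + 2) → F), hDC v.2, hvfull⟩⟩
      haveI := hnon
      have hcp := Nat.card_pos (α := {x : Fin (m + 2) → F // x ∈ C ∧ ∀ i, x i ≠ 0})
      exact (Nat.pos_iff_ne_zero.mp hcp) hA2_0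
  refine ⟨hke, hA1, ?_, hgamma⟩
  rw [hA1]
  exact Nat.mul_ne_zero (Nat.succ_ne_zero _) (Nat.pos_iff_ne_zero.mp hchoose_pos)
end

section
/- Let C be a linear [n,k] code over F_q with 1 ≤ k < n and d(C⊥) = 3, and let G be a generator matrix of C. Then γ(C) = k if and only if every nonzero vector of F_q^k is a nonzero scalar multiple of some column of G; that is, γ(C) = k if and only if C is isomorphic to a dual Hamming code. -/
set_option linter.unusedSectionVars false

section helpers

variable {F : Type*} [Field F] [DecidableEq F] {k : ℕ}

/-- dot product functional with v -/
def dotFun (v : Fin k → F) : (Fin k → F) →ₗ[F] F where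
  toFun u := ∑ i, u i * v i
  map_add' u w := by simp [add_mul, Finset.sum_add_distrib]
  map_smul' c u := by simp [Finset.mul_sum, mul_assoc]

lemma dotFun_single (v : Fin k → F) (i : Fin k) :
    dotFun v (Pi.single i (1 : F)) = v i := by
  simp [dotFun, Pi.single_apply]

lemma eval_eq_sum_dot (φ : Module.Dual F (Fin k → F)) (u : Fin k → F) :
    φ u = ∑ i, u i * φ (Pi.single i (1 : F)) := by
  conv_lhs => rw [← Finset.univ_sum_single u]
  rw [map_sum]
  refine Finset.sum_congr rfl fun i _ => ?_
  have h : Pi.single i (u i) = u i • (Pi.single i (1 : F) : Fin k → F) := by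
    rw [← Pi.single_smul, smul_eq_mul, mul_one]
  rw [h, map_smul, smul_eq_mul]

end helpers

/-- if `C` is an `[n,k]` code over `F_q` with `1 ≤ k < n` and
`d(C⊥) = 3`, with generator matrix `G`, then `γ(C) = k` if and only if every nonzero
vector of `F_q^k` is a nonzero scalar multiple of some column of `G` (i.e. `C` is
isomorphic to a dual Hamming code). -/
theorem stmt6 {F : Type*} [Field F] [Fintype F] [DecidableEq F] {n k : ℕ}
    (G : Matrix (Fin k) (Fin n) F) (hG : LinearIndependent F G)
    (C : Submodule F (Fin n → F)) (hC : C = Submodule.span F (Set.range G))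
    (hCk : Module.finrank F C = k) (hk1 : 1 ≤ k) (hkn : k < n)
    (hd : IsLeast (dualWeights C) 3) :
    IsLeast (gammaSet C) k ↔
      ∀ v : Fin k → F, v ≠ 0 → ∃ j : Fin n, ∃ c : F, c ≠ 0 ∧ v = c • fun i => G i j := by
  classical
  set L : (Fin k → F) →ₗ[F] (Fin n → F) := G.vecMulLinear with hL
  have hrange : LinearMap.range L = C := by
    rw [hC, hL, range_vecMulLinear]
    rfl
  have hLapp : ∀ (u : Fin k → F) (j : Fin n), L u j = ∑ i, u i * G i j := by
    intro u j
    simp [hL, Matrix.vecMulLinear_apply, Matrix.vecMul, dotProduct]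
  have hinj : Function.Injective L := by
    rw [← LinearMap.ker_eq_bot]
    rw [Submodule.eq_bot_iff]
    intro u hu
    have hu0 : L u = 0 := hu
    have h2 : ∑ i, u i • G i = 0 := by
      funext j
      have h3 := congrFun hu0 j
      rw [hLapp] at h3
      simpa using h3
    exact funext (Fintype.linearIndependent_iff.mp hG u h2)
  -- columns nonzero
  have hcol : ∀ j : Fin n, (fun i => G i j) ≠ 0 := by
    intro j hj
    have hxj : ∀ x ∈ C, x j = 0 := by
      intro x hx
      rw [← hrange] at hx
      obtain ⟨u, rfl⟩ := hx
      rw [hLapp]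
      have h4 : ∀ i, G i j = 0 := fun i => congrFun hj i
      simp [h4]
    have h1 : (1 : ℕ) ∈ dualWeights C := by
      refine ⟨Pi.single j (1 : F), ?_, ?_, ?_⟩
      · intro h
        have := congrFun h j
        simp at this
      · intro x hx
        have h5 : ∑ i, x i * (Pi.single j (1:F) : Fin n → F) i = x j := by
          simp [Pi.single_apply, mul_comm]
        rw [h5]
        exact hxj x hx
      · unfold wt
        rw [show (Finset.univ.filter fun i => (Pi.single j (1:F) : Fin n → F) i ≠ 0) = {j} by
          ext i; simp [Pi.single_apply]]
        simp
    have := hd.2 h1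
    omega
  constructor
  · -- γ(C) = k → every nonzero vector is multiple of a column
    intro hleast v hv
    by_contra h
    push_neg at h
    set f : (Fin k → F) →ₗ[F] F := dotFun v with hf
    have hf1 : ∃ u, f u = 1 := by
      obtain ⟨i, hi⟩ : ∃ i, v i ≠ 0 := by
        by_contra hc; push_neg at hc; exact hv (funext hc)
      refine ⟨Pi.single i (v i)⁻¹, ?_⟩
      show dotFun v (Pi.single i (v i)⁻¹) = 1
      simp [dotFun, Pi.single_apply, inv_mul_cancel₀ hi]
    obtain ⟨u₀, hu₀⟩ := hf1
    have hfne : f ≠ 0 := fun h0 => by simp [h0] at hu₀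
    have hW : Module.finrank F (LinearMap.ker f) + 1 = k := by
      have := Module.Dual.finrank_ker_add_one_of_ne_zero hfne
      rwa [Module.finrank_pi, Fintype.card_fin] at this
    set D : Submodule F (Fin n → F) := (LinearMap.ker f).map L with hD
    have hDC : D ≤ C := by
      rw [← hrange]
      exact Submodule.map_le_iff_le_comap.mpr fun x _ => ⟨x, rfl⟩
    have hDr : Module.finrank F D = k - 1 := by
      rw [hD, ← (Submodule.equivMapOfInjective L hinj (LinearMap.ker f)).finrank_eq]
      omega
    have hDfs : HasFullSupport D := by
      intro j
      by_contra hns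
      push_neg at hns
      have hker : ∀ u, f u = 0 → ∑ i, u i * G i j = 0 := by
        intro u hu
        have h6 : L u ∈ D := Submodule.mem_map_of_mem hu
        have h7 := hns (L u) h6
        rwa [hLapp] at h7
      set g : (Fin k → F) →ₗ[F] F := dotFun (fun i => G i j) with hg
      have hgker : ∀ u, f u = 0 → g u = 0 := by
        intro u hu
        exact hker u hu
      set c : F := g u₀ with hc
      have hgc : ∀ x, g x = c * f x := by
        intro x
        have hk0 : f (x - f x • u₀) = 0 := by
          simp [map_sub, map_smul, hu₀]
        have h8 := hgker _ hk0
        rw [map_sub, map_smul] at h8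
        rw [smul_eq_mul, sub_eq_zero] at h8
        rw [h8, hc, mul_comm]
      have hcol_eq : (fun i => G i j) = c • v := by
        funext i
        have h10 := hgc (Pi.single i (1 : F))
        rw [hg, dotFun_single, hf, dotFun_single] at h10
        simpa [mul_comm] using h10
      have hc0 : c ≠ 0 := by
        intro h0
        exact hcol j (by rw [hcol_eq, h0, zero_smul])
      exact h j c⁻¹ (inv_ne_zero hc0)
        (by rw [hcol_eq, smul_smul, inv_mul_cancel₀ hc0, one_smul])
    have hmem : k - 1 ∈ gammaSet C := by
      rcases Nat.lt_or_ge k 2 with hk2 | hk2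
      · -- k = 1 : contradiction with h, since column 0 works
        exfalso
        have hkeq : k = 1 := by omega
        subst hkeq
        obtain ⟨j⟩ : Nonempty (Fin n) := ⟨⟨0, by omega⟩⟩
        obtain ⟨i, hi⟩ : ∃ i, v i ≠ 0 := by
          by_contra hc'; push_neg at hc'; exact hv (funext hc')
        have hGi : G i j ≠ 0 := by
          intro h0
          apply hcol j
          funext i'
          rw [Subsingleton.elim i' i]
          exact h0
        refine h j (v i * (G i j)⁻¹) (by simp [hi, hGi]) ?_
        funext i'
        rw [Subsingleton.elim i' i]
        simp [mul_assoc, inv_mul_cancel₀ hGi]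
      · exact ⟨by omega, D, hDC, hDr, hDfs⟩
    have := hleast.2 hmem
    omega
  · -- every nonzero vector is a multiple of a column → γ(C) = k
    intro hcov
    constructor
    · -- k ∈ gammaSet
      refine ⟨by omega, C, le_refl C, hCk, ?_⟩
      intro j
      obtain ⟨i, hi⟩ : ∃ i, G i j ≠ 0 := by
        by_contra hc'; push_neg at hc'; exact hcol j (funext hc')
      refine ⟨G i, ?_, hi⟩
      rw [hC]
      exact Submodule.subset_span ⟨i, rfl⟩
    · -- lower bound
      rintro r ⟨hr0, D, hDC, hDr, hDfs⟩
      by_contra hlt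
      push_neg at hlt
      -- V = preimage of D
      set V : Submodule F (Fin k → F) := D.comap L with hV
      have hmap : V.map L = D := by
        rw [hV, Submodule.map_comap_eq, hrange, inf_eq_right.mpr hDC]
      have hVr : Module.finrank F V = r := by
        rw [← hDr, ← hmap]
        exact (Submodule.equivMapOfInjective L hinj V).finrank_eq
      have hVlt : V < ⊤ := by
        rw [lt_top_iff_ne_top]
        intro htop
        rw [htop, finrank_top, Module.finrank_pi, Fintype.card_fin] at hVr
        omega
      obtain ⟨φ, hφne, hφbot⟩ :=
        Submodule.exists_dual_map_eq_bot_of_lt_top hVlt inferInstance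
      have hφ0 : ∀ u ∈ V, φ u = 0 := by
        intro u hu
        have : φ u ∈ V.map φ := Submodule.mem_map_of_mem hu
        rw [hφbot] at this
        exact (Submodule.mem_bot F).mp this
      set w : Fin k → F := fun i => φ (Pi.single i (1 : F)) with hw
      have hwne : w ≠ 0 := by
        intro h0
        apply hφne
        apply LinearMap.ext
        intro u
        rw [eval_eq_sum_dot φ u]
        have : ∀ i, φ ((Pi.single i (1 : F) : Fin k → F)) = 0 := fun i => congrFun h0 i
        simp [this]
      obtain ⟨j, c, hc0, hwc⟩ := hcov w hwne
      obtain ⟨x, hxD, hxj⟩ := hDfs j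
      obtain ⟨u, huV, rfl⟩ : ∃ u ∈ V, L u = x := by
        obtain ⟨u, hu, rfl⟩ := (by rw [← hmap] at hxD; exact hxD :
          x ∈ V.map L)
        exact ⟨u, hu, rfl⟩
      apply hxj
      rw [hLapp]
      have hφu := hφ0 u huV
      rw [eval_eq_sum_dot φ u] at hφu
      have hsum : ∑ i, u i * w i = 0 := hφu
      have : ∑ i, u i * (c * G i j) = 0 := by
        rw [← hsum]
        refine Finset.sum_congr rfl fun i _ => ?_
        rw [hwc]
        simp [mul_comm]
      have hfac : c * ∑ i, u i * G i j = 0 := by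
        rw [Finset.mul_sum]
        rw [← this]
        exact Finset.sum_congr rfl fun i _ => by ring
      exact (mul_eq_zero.mp hfac).resolve_left hc0
end

section
/- Let C be a binary linear [n,k] code with 1 ≤ k < n and 3 < d(C⊥) < k + 1. Then γ(C) ≤ k − d(C⊥) + 2. -/
set_option maxHeartbeats 1000000


/-- for a binary `[n,k]` code `C` with `1 ≤ k < n` and
`3 < d(C⊥) < k + 1`, we have `γ(C) ≤ k - d(C⊥) + 2`. -/
theorem stmt9 {n k d : ℕ}
    (C : Submodule (ZMod 2) (Fin n → ZMod 2)) (hCk : Module.finrank (ZMod 2) C = k)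
    (hk1 : 1 ≤ k) (hkn : k < n)
    (hd : IsLeast (dualWeights C) d) (hd3 : 3 < d) (hdk : d < k + 1) :
    ∃ D : Submodule (ZMod 2) (Fin n → ZMod 2), D ≤ C ∧ HasFullSupport D ∧
      (Module.finrank (ZMod 2) D : ℤ) ≤ (k : ℤ) - (d : ℤ) + 2 := by
  classical
  have hone : ∀ x : ZMod 2, x ≠ 0 → x = 1 := by decide
  have htwo : ∀ (ψ : Module.Dual (ZMod 2) ↥C), ψ + ψ = 0 := by
    intro ψ
    rw [← two_smul (ZMod 2) ψ, (by decide : (2 : ZMod 2) = 0), zero_smul]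
  set φ : Fin n → Module.Dual (ZMod 2) ↥C :=
    fun i => (LinearMap.proj i).comp C.subtype with hφdef
  have hφapp : ∀ (i : Fin n) (x : ↥C), φ i x = (x : Fin n → ZMod 2) i := fun i x => rfl
  -- Key fact: fewer than d of the functionals φ never sum to zero (nontrivially).
  have hK : ∀ T : Finset (Fin n), T.card < d → (∑ j ∈ T, φ j) = 0 → T = ∅ := by
    intro T hTcard hTsum
    rw [← Finset.not_nonempty_iff_eq_empty]
    rintro ⟨t, ht⟩
    have hwlt : d ≤ T.card := by
      apply hd.2
      refine ⟨fun i => if i ∈ T then 1 else 0, ?_, ?_, ?_⟩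
      · intro h0
        have := congrFun h0 t
        simp [ht] at this
      · intro x hx
        have h1 : ∑ i, x i * (if i ∈ T then (1 : ZMod 2) else 0) = ∑ i ∈ T, x i := by
          simp only [mul_ite, mul_one, mul_zero, Finset.sum_ite_mem, Finset.univ_inter]
        rw [h1]
        have h2 := congrArg (fun ψ : Module.Dual (ZMod 2) ↥C => ψ ⟨x, hx⟩) hTsum
        simpa [hφapp] using h2
      · unfold wt
        congr 1
        ext i
        by_cases h : i ∈ T <;> simp [h]
    omega
  -- The circuit: a set of d coordinates whose functionals sum to zero.
  obtain ⟨y₀, hy₀ne, hy₀orth, hy₀wt⟩ := hd.1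
  set T₀ : Finset (Fin n) := Finset.univ.filter (fun i => y₀ i ≠ 0) with hT₀def
  have hT₀card : T₀.card = d := hy₀wt
  have hT₀sum : (∑ j ∈ T₀, φ j) = 0 := by
    apply LinearMap.ext
    intro x
    simp only [LinearMap.sum_apply, LinearMap.zero_apply, hφapp]
    have h := hy₀orth ↑x x.2
    have h1 : ∑ j ∈ T₀, (x : Fin n → ZMod 2) j = ∑ j ∈ T₀, (x : Fin n → ZMod 2) j * y₀ j := by
      refine Finset.sum_congr rfl fun j hj => ?_
      rw [hone (y₀ j) (Finset.mem_filter.mp hj).2, mul_one]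
    have h2 : ∑ j ∈ T₀, (x : Fin n → ZMod 2) j * y₀ j = ∑ j, (x : Fin n → ZMod 2) j * y₀ j := by
      apply Finset.sum_filter_of_ne
      intro i _ hf h0
      exact hf (by rw [h0, mul_zero])
    rw [h1, h2, h]
  -- choices of t1, B, i₀
  have ht1ne : T₀.Nonempty := by
    rw [← Finset.card_pos, hT₀card]; omega
  obtain ⟨t1, ht1mem⟩ := ht1ne
  obtain ⟨B, hBsub, hBcard⟩ : ∃ B ⊆ T₀.erase t1, B.card = d - 3 :=
    Finset.exists_subset_card_eq (by rw [Finset.card_erase_of_mem ht1mem, hT₀card]; omega)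
  obtain ⟨i₀, hi₀⟩ : ∃ i₀, i₀ ∉ T₀ := by
    by_contra h
    push_neg at h
    have h2 : (Finset.univ : Finset (Fin n)).card ≤ T₀.card :=
      Finset.card_le_card (fun i _ => h i)
    rw [Finset.card_univ, Fintype.card_fin, hT₀card] at h2
    omega
  set G : Finset (Fin n) := insert i₀ B with hGdef
  have ht1B : t1 ∉ B := fun h => (Finset.mem_erase.mp (hBsub h)).1 rfl
  have hi₀B : i₀ ∉ B := fun h => hi₀ (Finset.mem_of_mem_erase (hBsub h))
  have ht1i₀ : t1 ≠ i₀ := fun h => hi₀ (h ▸ ht1mem)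
  have ht1G : t1 ∉ G := by
    simp only [hGdef, Finset.mem_insert]
    rintro (h | h)
    · exact ht1i₀ h
    · exact ht1B h
  have hGcard : G.card = d - 2 := by
    rw [hGdef, Finset.card_insert_of_notMem hi₀B, hBcard]; omega
  set u : Fin n → Module.Dual (ZMod 2) ↥C := fun j => φ t1 + φ j with hudef
  set v : {x // x ∈ G} → Module.Dual (ZMod 2) ↥C := fun j => u j.1 with hvdef
  -- master computation lemma
  have hL : ∀ c : {x // x ∈ G} → ZMod 2, ∃ T : Finset (Fin n),
      (∑ j, c j • v j) = (∑ j ∈ T, φ j) ∧ T ⊆ insert t1 G ∧ ((T.card : ZMod 2) = 0) ∧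
      ∀ j : {x // x ∈ G}, c j ≠ 0 → j.1 ∈ T := by
    intro c
    set c' : Fin n → ZMod 2 := fun j => if h : j ∈ G then c ⟨j, h⟩ else 0 with hc'def
    have hcc' : ∀ j : {x // x ∈ G}, c' j.1 = c j := by
      rintro ⟨j, hj⟩
      simp [hc'def, hj]
    set Gc : Finset (Fin n) := G.filter (fun j => c' j ≠ 0) with hGcdef
    have hstep : (∑ j, c j • v j) = (∑ j ∈ G, c' j) • φ t1 + ∑ j ∈ Gc, φ j := by
      have e1 : (∑ j, c j • v j) = ∑ j ∈ G.attach, c' j.1 • u j.1 := by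
        rw [Finset.univ_eq_attach]
        exact Finset.sum_congr rfl fun j _ => by rw [hcc']
      have e2 : ∑ j ∈ G.attach, c' j.1 • u j.1 = ∑ j ∈ G, c' j • u j :=
        Finset.sum_attach G (fun j => c' j • u j)
      have e3 : ∑ j ∈ G, c' j • u j = (∑ j ∈ G, c' j) • φ t1 + ∑ j ∈ G, c' j • φ j := by
        simp only [hudef, smul_add, Finset.sum_add_distrib, Finset.sum_smul]
      have e4 : ∑ j ∈ G, c' j • φ j = ∑ j ∈ Gc, φ j := by
        rw [hGcdef]
        rw [← Finset.sum_filter_of_ne (p := fun j => c' j ≠ 0)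
          (fun i _ hf h0 => hf (by rw [h0, zero_smul]))]
        refine Finset.sum_congr rfl fun j hj => ?_
        rw [hone (c' j) (Finset.mem_filter.mp hj).2, one_smul]
      rw [e1, e2, e3, e4]
    have hpar : (∑ j ∈ G, c' j) = (Gc.card : ZMod 2) := by
      rw [hGcdef, ← Finset.sum_filter_of_ne (p := fun j => c' j ≠ 0) (fun i _ hf => hf)]
      rw [Finset.sum_congr rfl (fun j hj => hone (c' j) (Finset.mem_filter.mp hj).2)]
      simp
    have hGcsub : Gc ⊆ G := Finset.filter_subset _ _
    by_cases he : (∑ j ∈ G, c' j) = 0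
    · refine ⟨Gc, ?_, ?_, ?_, ?_⟩
      · rw [hstep, he, zero_smul, zero_add]
      · exact hGcsub.trans (Finset.subset_insert _ _)
      · rw [← hpar, he]
      · rintro ⟨j, hj⟩ hcj
        rw [hGcdef, Finset.mem_filter]
        exact ⟨hj, by rw [hcc']; exact hcj⟩
    · have he1 : (∑ j ∈ G, c' j) = 1 := hone _ he
      have ht1Gc : t1 ∉ Gc := fun h => ht1G (hGcsub h)
      refine ⟨insert t1 Gc, ?_, ?_, ?_, ?_⟩
      · rw [hstep, he1, one_smul, Finset.sum_insert ht1Gc]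
      · intro x hx
        rcases Finset.mem_insert.mp hx with h | h
        · exact h ▸ Finset.mem_insert_self _ _
        · exact Finset.mem_insert_of_mem (hGcsub h)
      · rw [Finset.card_insert_of_notMem ht1Gc]
        push_cast
        rw [← hpar, he1]
        decide
      · rintro ⟨j, hj⟩ hcj
        apply Finset.mem_insert_of_mem
        rw [hGcdef, Finset.mem_filter]
        exact ⟨hj, by rw [hcc']; exact hcj⟩
  -- U, independence, rank
  set U : Submodule (ZMod 2) (Module.Dual (ZMod 2) ↥C) :=
    Submodule.span (ZMod 2) (Set.range v) with hUdef
  have hvind : LinearIndependent (ZMod 2) v := by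
    rw [Fintype.linearIndependent_iff]
    intro c hc
    obtain ⟨T, hsum, hTsub, hTpar, hTmem⟩ := hL c
    rw [hc] at hsum
    have hTcard : T.card < d := by
      have h1 : T.card ≤ (insert t1 G).card := Finset.card_le_card hTsub
      have h2 : (insert t1 G).card = d - 1 := by
        rw [Finset.card_insert_of_notMem ht1G, hGcard]; omega
      omega
    have hT0 : T = ∅ := hK T hTcard hsum.symm
    intro j
    by_contra hcj
    have hj := hTmem j hcj
    rw [hT0] at hj
    exact absurd hj (Finset.notMem_empty _)
  have hUrank : Module.finrank (ZMod 2) U = d - 2 := by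
    rw [hUdef, finrank_span_eq_card hvind, Fintype.card_coe, hGcard]
  -- the span U avoids every φ i
  have havoid : ∀ i : Fin n, φ i ∉ U := by
    intro i hmem
    rw [hUdef, Submodule.mem_span_range_iff_exists_fun] at hmem
    obtain ⟨c, hc⟩ := hmem
    obtain ⟨T, hsum, hTsub, hTpar, -⟩ := hL c
    rw [hc] at hsum
    -- hsum : φ i = ∑ j ∈ T, φ j
    by_cases hiT : i ∈ T
    · have hpe : φ i + ∑ j ∈ T.erase i, φ j = ∑ j ∈ T, φ j := Finset.add_sum_erase T φ hiT
      have h0 : (∑ j ∈ T.erase i, φ j) = 0 := by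
        have h := hsum.trans hpe.symm
        exact (add_left_cancel (a := φ i) (b := (0 : Module.Dual (ZMod 2) ↥C))
          (by rw [add_zero]; exact h)).symm
      have hTcard : T.card ≤ d - 1 := by
        have h1 : T.card ≤ (insert t1 G).card := Finset.card_le_card hTsub
        rw [Finset.card_insert_of_notMem ht1G, hGcard] at h1
        omega
      have hce : T.erase i = ∅ := by
        apply hK _ _ h0
        have := Finset.card_erase_of_mem hiT
        omega
      have hc1 : T.card = 1 := by
        have := Finset.card_erase_add_one hiT
        rw [hce] at this
        simpa using this.symm
      rw [hc1] at hTpar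
      simp at hTpar
    · have h0 : (∑ j ∈ insert i T, φ j) = 0 := by
        rw [Finset.sum_insert hiT, ← hsum]
        exact htwo (φ i)
      by_cases hTd : T.card + 1 < d
      · have h1 := hK _ (by rw [Finset.card_insert_of_notMem hiT]; exact hTd) h0
        exact absurd h1 (Finset.insert_ne_empty _ _)
      · have hTcard : T.card = d - 1 := by
          have h1 : T.card ≤ (insert t1 G).card := Finset.card_le_card hTsub
          rw [Finset.card_insert_of_notMem ht1G, hGcard] at h1
          omega
        have hTeq : T = insert t1 G := Finset.eq_of_subset_of_card_le hTsub
          (by rw [Finset.card_insert_of_notMem ht1G, hGcard, hTcard]; omega)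
        have hdodd : 2 ∣ (d - 1) := by
          rw [hTcard] at hTpar
          exact (ZMod.natCast_eq_zero_iff _ _).mp hTpar
        have hd5 : 4 < d := by
          obtain ⟨m, hm⟩ := hdodd
          omega
        have hBT₀ : insert t1 B ⊆ T₀ := by
          intro x hx
          rcases Finset.mem_insert.mp hx with h | h
          · exact h ▸ ht1mem
          · exact Finset.mem_of_mem_erase (hBsub h)
        set R : Finset (Fin n) := T₀ \ insert t1 B with hRdef
        have hRcard : R.card = 2 := by
          rw [hRdef, Finset.card_sdiff_of_subset hBT₀, Finset.card_insert_of_notMem ht1B, hBcard,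
            hT₀card]
          omega
        have hsumR : (∑ j ∈ insert t1 B, φ j) = ∑ j ∈ R, φ j := by
          have h := Finset.sum_sdiff (f := φ) hBT₀
          rw [hT₀sum] at h
          have h2 := congrArg (fun z => (∑ j ∈ R, φ j) + z) h
          simp only [add_zero] at h2
          rw [← add_assoc, htwo, zero_add] at h2
          exact h2
        rw [hTeq] at h0 hiT
        have hii₀ : i ≠ i₀ := fun h => hiT (by
          rw [h, hGdef]
          exact Finset.mem_insert_of_mem (Finset.mem_insert_self _ _))
        have hi₀tB : i₀ ∉ insert t1 B := by
          rw [Finset.mem_insert]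
          rintro (h | h)
          · exact ht1i₀ h.symm
          · exact hi₀B h
        have hswap : insert t1 G = insert i₀ (insert t1 B) := by
          rw [hGdef]
          exact Finset.insert_comm t1 i₀ B
        rw [hswap, Finset.sum_insert (by rwa [hswap] at hiT),
          Finset.sum_insert hi₀tB, hsumR] at h0
        -- h0 : φ i + (φ i₀ + ∑ j ∈ R, φ j) = 0
        have hi₀R : i₀ ∉ R := fun h => hi₀ (Finset.mem_sdiff.mp h).1
        by_cases hiR : i ∈ R
        · have hR' : (∑ j ∈ R, φ j) = φ i + ∑ j ∈ R.erase i, φ j :=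
            (Finset.add_sum_erase R φ hiR).symm
          rw [hR'] at h0
          have hre : φ i + (φ i₀ + (φ i + ∑ j ∈ R.erase i, φ j))
              = (φ i + φ i) + (φ i₀ + ∑ j ∈ R.erase i, φ j) := by abel
          rw [hre, htwo, zero_add] at h0
          have h2 : (∑ j ∈ insert i₀ (R.erase i), φ j) = 0 := by
            rw [Finset.sum_insert (fun h => hi₀R (Finset.mem_of_mem_erase h))]
            exact h0
          have h3 := hK _ (by
            have hle := Finset.card_insert_le i₀ (R.erase i)
            have he := Finset.card_erase_of_mem hiR
            omega) h2
          exact absurd h3 (Finset.insert_ne_empty _ _)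
        · have hiI : i ∉ insert i₀ R := by
            rw [Finset.mem_insert]
            rintro (h | h)
            · exact hii₀ h
            · exact hiR h
          have h2 : (∑ j ∈ insert i (insert i₀ R), φ j) = 0 := by
            rw [Finset.sum_insert hiI, Finset.sum_insert hi₀R]
            exact h0
          have h3 := hK _ (by
            have hle1 := Finset.card_insert_le i (insert i₀ R)
            have hle2 := Finset.card_insert_le i₀ R
            omega) h2
          exact absurd h3 (Finset.insert_ne_empty _ _)
  -- assemble the subcode
  have hCfin : FiniteDimensional (ZMod 2) ↥C := by infer_instance
  set D' : Submodule (ZMod 2) ↥C := U.dualCoannihilator with hD'def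
  have hrank' : Module.finrank (ZMod 2) U + Module.finrank (ZMod 2) D'
      = Module.finrank (ZMod 2) ↥C :=
    Subspace.finrank_add_finrank_dualCoannihilator_eq U
  refine ⟨D'.map C.subtype, Submodule.map_subtype_le C D', ?_, ?_⟩
  · intro i
    by_contra h
    push_neg at h
    have hφiU : φ i ∈ U := by
      have heq : D'.dualAnnihilator = U := Subspace.dualCoannihilator_dualAnnihilator_eq
      rw [← heq, Submodule.mem_dualAnnihilator]
      intro w hw
      exact h (C.subtype w) ⟨w, hw, rfl⟩
    exact havoid i hφiU
  · rw [Submodule.finrank_map_subtype_eq]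
    rw [hUrank, hCk] at hrank'
    omega
end

section
/- Let C be a binary linear [n,k] code with 1 ≤ k < n and d(C⊥) ≥ 3. Then either γ(C) ≤ k − d(C⊥) + 2, or C is a dual Hamming code over F_2 (in which case d(C⊥) = 3 and γ(C) = k = k − d(C⊥) + 3), or k = n−1 and d(C⊥) = n is odd (in which case γ(C) = 2 = k − d(C⊥) + 3). -/
section Stmt10AuxProof

open Module Submodule Finset

set_option linter.unusedSectionVars false

namespace Stmt10Aux

variable {M : Type*} [AddCommGroup M] [Module (ZMod 2) M]

lemma z2cases (a : ZMod 2) : a = 0 ∨ a = 1 := by revert a; decide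

lemma z2one (a : ZMod 2) (h : a ≠ 0) : a = 1 := by rcases z2cases a with h' | h' <;> simp_all

lemma addSelf (x : M) : x + x = 0 := by
  have h : ((1 : ZMod 2) + 1) = 0 := by decide
  calc x + x = (1 : ZMod 2) • x + (1 : ZMod 2) • x := by rw [one_smul]
    _ = ((1 + 1 : ZMod 2)) • x := by rw [add_smul]
    _ = 0 := by rw [h, zero_smul]

lemma eq_of_add_eq_zero {x y : M} (h : x + y = 0) : x = y := by
  have := addSelf (M := M) y
  have : x + y = y + y := by rw [h, this]
  exact add_right_cancel this

lemma nsmul_char2 (a : ℕ) (x : M) : a • x = if Even a then 0 else x := by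
  induction a with
  | zero => simp
  | succ m ih =>
    rw [succ_nsmul, ih]
    by_cases h : Even m
    · simp [h, Nat.even_add_one]
    · simp [h, Nat.even_add_one, addSelf]

lemma sum_shift {m : ℕ} (χ : M) (f : Fin m → M) (J : Finset (Fin m)) :
    ∑ j ∈ J, (χ + f j) = (if Even J.card then 0 else χ) + ∑ j ∈ J, f j := by
  rw [Finset.sum_add_distrib, Finset.sum_const, nsmul_char2]

lemma smul_sum_eq {m : ℕ} (g : Fin m → ZMod 2) (ψ : Fin m → M) :
    ∑ j, g j • ψ j = ∑ j ∈ Finset.univ.filter (fun j => g j ≠ 0), ψ j := by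
  rw [Finset.sum_filter]
  apply Finset.sum_congr rfl
  intro j _
  rcases z2cases (g j) with h | h <;> simp [h]

lemma indep_of_sums {m : ℕ} (ψ : Fin m → M)
    (h : ∀ J : Finset (Fin m), J.Nonempty → ∑ j ∈ J, ψ j ≠ 0) :
    LinearIndependent (ZMod 2) ψ := by
  rw [Fintype.linearIndependent_iff]
  intro g hg i
  by_contra hgi
  rw [smul_sum_eq] at hg
  exact h _ ⟨i, Finset.mem_filter.2 ⟨Finset.mem_univ _, hgi⟩⟩ hg

lemma not_indep_sums {m : ℕ} (ψ : Fin m → M) (h : ¬ LinearIndependent (ZMod 2) ψ) :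
    ∃ J : Finset (Fin m), J.Nonempty ∧ ∑ j ∈ J, ψ j = 0 := by
  by_contra h2
  push_neg at h2
  exact h (indep_of_sums ψ fun J hJ => h2 J hJ)

lemma not_mem_span {m : ℕ} (ψ : Fin m → M) (χ : M)
    (h : ∀ J : Finset (Fin m), χ + ∑ j ∈ J, ψ j ≠ 0) :
    χ ∉ Submodule.span (ZMod 2) (Set.range ψ) := by
  intro hmem
  obtain ⟨c, hc⟩ := (mem_span_range_iff_exists_fun (R := ZMod 2)).1 hmem
  rw [smul_sum_eq] at hc
  exact h _ (by rw [hc]; exact addSelf χ)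

-- symmDiff helpers
lemma symmDiff_singleton_mem {α : Type*} [DecidableEq α] {A : Finset α} {i : α} (h : i ∈ A) :
    symmDiff A {i} = A.erase i := by
  ext b
  simp only [Finset.mem_symmDiff, Finset.mem_erase, Finset.mem_singleton]
  constructor
  · rintro (⟨hb, hbi⟩ | ⟨rfl, hbA⟩)
    · exact ⟨hbi, hb⟩
    · exact absurd h hbA
  · rintro ⟨hbi, hb⟩; exact Or.inl ⟨hb, hbi⟩

lemma symmDiff_singleton_not_mem {α : Type*} [DecidableEq α] {A : Finset α} {i : α} (h : i ∉ A) :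
    symmDiff A {i} = insert i A := by
  ext b
  simp only [Finset.mem_symmDiff, Finset.mem_insert, Finset.mem_singleton]
  constructor
  · rintro (⟨hb, _⟩ | ⟨rfl, _⟩)
    · exact Or.inr hb
    · exact Or.inl rfl
  · rintro (rfl | hb)
    · exact Or.inr ⟨rfl, h⟩
    · exact Or.inl ⟨hb, fun hbi => h (hbi ▸ hb)⟩

end Stmt10Aux

namespace Stmt10Aux

section code

variable {n k d : ℕ} (C : Submodule (ZMod 2) (Fin n → ZMod 2))

noncomputable def sF (i : Fin n) : Module.Dual (ZMod 2) ↥C :=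
  (LinearMap.proj i).comp C.subtype

noncomputable def sg (A : Finset (Fin n)) : Module.Dual (ZMod 2) ↥C := ∑ i ∈ A, sF C i

lemma sF_apply (i : Fin n) (x : ↥C) : sF C i x = (x : Fin n → ZMod 2) i := rfl

lemma sg_apply (A : Finset (Fin n)) (x : ↥C) :
    sg C A x = ∑ i ∈ A, (x : Fin n → ZMod 2) i := by
  rw [sg, LinearMap.sum_apply]
  rfl

lemma sg_singleton (i : Fin n) : sg C {i} = sF C i := Finset.sum_singleton _ _

lemma sg_symmDiff (A B : Finset (Fin n)) :
    sg C (symmDiff A B) = sg C A + sg C B := by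
  classical
  have hA : sg C A = sg C (A \ B) + sg C (A ∩ B) := by
    rw [sg, sg, sg, ← Finset.sum_union (Finset.disjoint_sdiff_inter A B),
      Finset.sdiff_union_inter]
  have hB : sg C B = sg C (B \ A) + sg C (B ∩ A) := by
    rw [sg, sg, sg, ← Finset.sum_union (Finset.disjoint_sdiff_inter B A),
      Finset.sdiff_union_inter]
  have hS : sg C (symmDiff A B) = sg C (A \ B) + sg C (B \ A) := by
    rw [symmDiff_def, Finset.sup_eq_union, sg, sg, sg,
      Finset.sum_union disjoint_sdiff_sdiff]
  have key : ∀ x y z : Module.Dual (ZMod 2) ↥C, (x + z) + (y + z) = x + y := by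
    intro x y z
    rw [add_add_add_comm, addSelf, add_zero]
  rw [hA, hB, hS, Finset.inter_comm B A, key]

lemma sg_ne_zero_iff (A : Finset (Fin n)) :
    sg C A ≠ 0 ↔ ∃ x ∈ C, ∑ i ∈ A, x i ≠ 0 := by
  constructor
  · intro h
    have : ¬ ∀ x : ↥C, sg C A x = 0 := fun hh => h (LinearMap.ext fun x => hh x)
    push_neg at this
    obtain ⟨x, hx⟩ := this
    exact ⟨(x : Fin n → ZMod 2), x.2, by rwa [sg_apply] at hx⟩
  · rintro ⟨x, hxC, hx⟩ h0
    apply hx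
    have := congrArg (fun φ : Module.Dual (ZMod 2) ↥C => φ ⟨x, hxC⟩) h0
    simpa [sg_apply] using this

variable (hd : IsLeast (dualWeights C) d)

include hd in
lemma k1 (A : Finset (Fin n)) (h1 : A.Nonempty) (h2 : A.card < d) : sg C A ≠ 0 := by
  intro h0
  classical
  set y : Fin n → ZMod 2 := fun i => if i ∈ A then 1 else 0 with hy
  have hy0 : y ≠ 0 := by
    obtain ⟨a, ha⟩ := h1
    intro h
    have := congrFun h a
    simp [hy, ha] at this
  have hyC : ∀ x ∈ C, ∑ i, x i * y i = 0 := by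
    intro x hx
    have h1' : ∑ i, x i * y i = ∑ i ∈ A, x i := by
      simp only [hy, mul_ite, mul_one, mul_zero]
      rw [Finset.sum_ite_mem, Finset.univ_inter]
    rw [h1']
    have := congrArg (fun φ : Module.Dual (ZMod 2) ↥C => φ ⟨x, hx⟩) h0
    simpa [sg_apply] using this
  have hwt : wt y = A.card := by
    unfold wt
    congr 1
    ext i
    by_cases h : i ∈ A <;> simp [hy, h]
  have : d ≤ A.card := hd.2 ⟨y, hy0, hyC, hwt⟩
  omega

include hd in
lemma sF_ne_zero (hd3 : 1 < d) (i : Fin n) : sF C i ≠ 0 := by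
  have := k1 C hd {i} ⟨i, Finset.mem_singleton_self i⟩ (by simpa using hd3)
  rwa [sg_singleton] at this

end code

end Stmt10Aux

namespace Stmt10Aux

section ann

variable {V : Type*} [AddCommGroup V] [Module (ZMod 2) V] [FiniteDimensional (ZMod 2) V]

lemma iInf_ker_eq_coann {m : ℕ} (ψ : Fin m → Module.Dual (ZMod 2) V) :
    (⨅ j, LinearMap.ker (ψ j)) =
      (Submodule.span (ZMod 2) (Set.range ψ)).dualCoannihilator := by
  ext x
  simp only [Submodule.mem_iInf, LinearMap.mem_ker, Submodule.mem_dualCoannihilator]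
  constructor
  · intro hx φ hφ
    induction hφ using Submodule.span_induction with
    | mem φ' hφ' => obtain ⟨j, rfl⟩ := hφ'; exact hx j
    | zero => simp
    | add f g _ _ hf hg => simp [LinearMap.add_apply, hf, hg]
    | smul c f _ hf => simp [hf]
  · intro hx j
    exact hx (ψ j) (Submodule.subset_span ⟨j, rfl⟩)

lemma ann_finrank {m : ℕ} (ψ : Fin m → Module.Dual (ZMod 2) V)
    (hψ : LinearIndependent (ZMod 2) ψ) :
    Module.finrank (ZMod 2) ↥(⨅ j, LinearMap.ker (ψ j)) + m = Module.finrank (ZMod 2) V := by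
  rw [iInf_ker_eq_coann]
  have h := Subspace.finrank_add_finrank_dualCoannihilator_eq
    (Submodule.span (ZMod 2) (Set.range ψ))
  rw [finrank_span_eq_card hψ, Fintype.card_fin] at h
  omega

lemma ann_witness {m : ℕ} (ψ : Fin m → Module.Dual (ZMod 2) V) (χ : Module.Dual (ZMod 2) V)
    (hχ : χ ∉ Submodule.span (ZMod 2) (Set.range ψ)) :
    ∃ x : V, (∀ j, ψ j x = 0) ∧ χ x ≠ 0 := by
  by_contra h
  push_neg at h
  apply hχ
  apply mem_span_of_iInf_ker_le_ker (𝕜 := ZMod 2)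
  intro x hx
  simp only [Submodule.mem_iInf, LinearMap.mem_ker] at hx
  exact LinearMap.mem_ker.2 (h x hx)

end ann

section code2

variable {n k d : ℕ} (C : Submodule (ZMod 2) (Fin n → ZMod 2))

lemma build (hCk : Module.finrank (ZMod 2) ↥C = k) {m : ℕ}
    (ψ : Fin m → Module.Dual (ZMod 2) ↥C)
    (hψ : LinearIndependent (ZMod 2) ψ)
    (hfs : ∀ i : Fin n, sF C i ∉ Submodule.span (ZMod 2) (Set.range ψ)) :
    ∃ D : Submodule (ZMod 2) (Fin n → ZMod 2), D ≤ C ∧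
      Module.finrank (ZMod 2) ↥D + m = k ∧ HasFullSupport D := by
  refine ⟨(⨅ j, LinearMap.ker (ψ j)).map C.subtype, Submodule.map_subtype_le _ _, ?_, ?_⟩
  · rw [Submodule.finrank_map_subtype_eq, ← hCk]
    exact ann_finrank ψ hψ
  · intro i
    obtain ⟨x, hx1, hx2⟩ := ann_witness ψ (sF C i) (hfs i)
    refine ⟨(x : Fin n → ZMod 2), Submodule.mem_map_of_mem ?_, hx2⟩
    simp only [Submodule.mem_iInf, LinearMap.mem_ker]
    exact hx1

end code2

end Stmt10Aux

namespace Stmt10Aux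

section gen

variable {n k d : ℕ} (C : Submodule (ZMod 2) (Fin n → ZMod 2))
  (hd : IsLeast (dualWeights C) d)

include hd in
lemma k1_symmDiff_single (A : Finset (Fin n)) (i : Fin n) (hAe : Even A.card)
    (hAlt : A.card + 1 < d) : sg C (symmDiff A {i}) ≠ 0 := by
  classical
  by_cases h : i ∈ A
  · rw [symmDiff_singleton_mem h]
    have hpos : 0 < A.card := Finset.card_pos.2 ⟨i, h⟩
    have h2 : 2 ≤ A.card := by obtain ⟨b, hb⟩ := hAe; omega
    apply k1 C hd
    · rw [← Finset.card_pos, Finset.card_erase_of_mem h]; omega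
    · rw [Finset.card_erase_of_mem h]; omega
  · rw [symmDiff_singleton_not_mem h]
    apply k1 C hd
    · exact Finset.insert_nonempty i A
    · rw [Finset.card_insert_of_notMem h]; omega

lemma sF_add_sg (i : Fin n) (A : Finset (Fin n)) :
    sF C i + sg C A = sg C (symmDiff A {i}) := by
  rw [sg_symmDiff, sg_singleton, add_comm]

include hd in
lemma gen (hCk : Module.finrank (ZMod 2) ↥C = k)
    (T : Finset (Fin n)) (hTd : T.card = d) (m : ℕ) (hmd : m + 2 ≤ d)
    (hsize : ∀ a : ℕ, Even a → a ≤ m + 1 → a + 1 < d) :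
    ∃ D : Submodule (ZMod 2) (Fin n → ZMod 2), D ≤ C ∧
      Module.finrank (ZMod 2) ↥D + m = k ∧ HasFullSupport D := by
  classical
  have hd0 : 0 < d := by omega
  set t : Fin d → Fin n := fun j => ((T.orderIsoOfFin hTd) j : Fin n) with ht
  have ht_inj : Function.Injective t := fun a b hab =>
    (T.orderIsoOfFin hTd).injective (Subtype.ext hab)
  set t0 : Fin n := t ⟨0, hd0⟩ with ht0
  set f : Fin m → Fin n := fun j => t ⟨j.1 + 1, by omega⟩ with hf
  have hf_inj : Function.Injective f := by
    intro a b hab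
    have h2 := congrArg Fin.val (ht_inj hab)
    simp only at h2
    exact Fin.ext (by omega)
  have hf_ne : ∀ j, f j ≠ t0 := by
    intro j h
    have := congrArg Fin.val (ht_inj h)
    simp at this
  set ψ : Fin m → Module.Dual (ZMod 2) ↥C := fun j => sF C t0 + sF C (f j) with hψdef
  set AJ : Finset (Fin m) → Finset (Fin n) :=
    fun J => if Even J.card then J.image f else insert t0 (J.image f) with hAJ
  have ht0img : ∀ J : Finset (Fin m), t0 ∉ J.image f := by
    intro J hmem
    obtain ⟨j, _, hj⟩ := Finset.mem_image.1 hmem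
    exact hf_ne j hj
  have hsum : ∀ J : Finset (Fin m), ∑ j ∈ J, ψ j = sg C (AJ J) := by
    intro J
    rw [hψdef, sum_shift]
    have himg : ∑ j ∈ J, sF C (f j) = sg C (J.image f) := by
      rw [sg, Finset.sum_image (fun a _ b _ h => hf_inj h)]
    rw [hAJ]
    by_cases hJ : Even J.card
    · simp only [hJ, if_true, zero_add, himg]
    · simp only [hJ, if_false]
      rw [sg, Finset.sum_insert (ht0img J), himg, sg]
  have hAcard : ∀ J : Finset (Fin m),
      (AJ J).card = if Even J.card then J.card else J.card + 1 := by
    intro J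
    rw [hAJ]
    by_cases hJ : Even J.card
    · simp only [hJ, if_true, Finset.card_image_of_injective _ hf_inj]
    · simp only [hJ, if_false, Finset.card_insert_of_notMem (ht0img J),
        Finset.card_image_of_injective _ hf_inj]
  have hAeven : ∀ J : Finset (Fin m), Even (AJ J).card := by
    intro J
    rw [hAcard J]
    by_cases hJ : Even J.card
    · simpa [hJ] using hJ
    · simp only [hJ, if_false]
      exact Nat.even_add_one.2 hJ
  have hAle : ∀ J : Finset (Fin m), (AJ J).card ≤ m + 1 := by
    intro J
    have : J.card ≤ m := by simpa using Finset.card_le_univ J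
    rw [hAcard J]
    by_cases hJ : Even J.card <;> simp [hJ] <;> omega
  have hψindep : LinearIndependent (ZMod 2) ψ := by
    apply indep_of_sums
    intro J hJ
    rw [hsum J]
    apply k1 C hd
    · rw [hAJ]
      by_cases hJe : Even J.card
      · simpa [hJe] using hJ.image f
      · simp [hJe, Finset.insert_nonempty]
    · have := hsize (AJ J).card (hAeven J) (hAle J)
      omega
  have hfs : ∀ i : Fin n, sF C i ∉ Submodule.span (ZMod 2) (Set.range ψ) := by
    intro i
    apply not_mem_span
    intro J
    rw [hsum J, sF_add_sg]
    exact k1_symmDiff_single C hd _ i (hAeven J) (hsize _ (hAeven J) (hAle J))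
  exact build C hCk ψ hψindep hfs

end gen

end Stmt10Aux

namespace Stmt10Aux

section oddc

variable {n k d : ℕ} (C : Submodule (ZMod 2) (Fin n → ZMod 2))
  (hd : IsLeast (dualWeights C) d)

set_option maxHeartbeats 2000000 in
include hd in
lemma odd_case (hCk : Module.finrank (ZMod 2) ↥C = k)
    (T : Finset (Fin n)) (hTd : T.card = d) (hTsg : sg C T = 0)
    (hdo : Odd d) (hd5 : 5 ≤ d) (hdk : d ≤ k) :
    ∃ D : Submodule (ZMod 2) (Fin n → ZMod 2), D ≤ C ∧
      Module.finrank (ZMod 2) ↥D + (d - 2) = k ∧ HasFullSupport D := by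
  classical
  have hd0 : 0 < d := by omega
  obtain ⟨dd, hdd⟩ := hdo
  set t : Fin d → Fin n := fun j => ((T.orderIsoOfFin hTd) j : Fin n) with ht
  have ht_inj : Function.Injective t := fun a b hab =>
    (T.orderIsoOfFin hTd).injective (Subtype.ext hab)
  have ht_mem : ∀ j, t j ∈ T := fun j => ((T.orderIsoOfFin hTd) j).2
  have ht_surj : ∀ i ∈ T, ∃ j, t j = i := by
    intro i hi
    obtain ⟨j, hj⟩ := (T.orderIsoOfFin hTd).surjective ⟨i, hi⟩
    exact ⟨j, congrArg Subtype.val hj⟩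
  set fam : Fin (d-1) → Module.Dual (ZMod 2) ↥C :=
    fun j => sF C (t ⟨j.1, by omega⟩) with hfam
  set U' : Finset (Fin n) :=
    (Finset.univ : Finset (Fin (d-1))).image (fun j => t ⟨j.1, by omega⟩) with hU'
  set W0 : Submodule (ZMod 2) (Module.Dual (ZMod 2) ↥C) :=
    Submodule.span (ZMod 2) (Set.range fam) with hW0def
  have hW0 : ∀ A : Finset (Fin n), A ⊆ U' → sg C A ∈ W0 := by
    intro A hA
    apply Submodule.sum_mem
    intro i hi
    obtain ⟨j, _, hj⟩ := Finset.mem_image.1 (hA hi)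
    exact Submodule.subset_span ⟨j, congrArg (sF C) hj⟩
  -- find istar
  have histar : ∃ i : Fin n, sF C i ∉ W0 := by
    by_contra h
    push_neg at h
    set L := LinearMap.pi fam with hL
    have hker : 1 ≤ Module.finrank (ZMod 2) ↥(LinearMap.ker L) := by
      have h1 := LinearMap.finrank_range_add_finrank_ker L
      have h2 : Module.finrank (ZMod 2) ↥(LinearMap.range L) ≤ d - 1 := by
        have h3 := Submodule.finrank_le (LinearMap.range L)
        rwa [Module.finrank_pi, Fintype.card_fin] at h3
      rw [hCk] at h1
      omega
    have hbot : LinearMap.ker L ≠ ⊥ := by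
      intro hb
      rw [hb, finrank_bot] at hker
      omega
    obtain ⟨x, hxK, hx0⟩ := Submodule.exists_mem_ne_zero_of_ne_bot hbot
    rw [LinearMap.mem_ker] at hxK
    have hx_fam : ∀ j, fam j x = 0 := by
      intro j
      have := congrFun hxK j
      simpa [hL, LinearMap.pi_apply] using this
    have hxkill : ∀ φ ∈ W0, φ x = 0 := by
      intro φ hφ
      induction hφ using Submodule.span_induction with
      | mem φ' hφ' => obtain ⟨j, rfl⟩ := hφ'; exact hx_fam j
      | zero => simp
      | add f g _ _ hf hg => simp [LinearMap.add_apply, hf, hg]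
      | smul c f _ hf => simp [hf]
    have hzero : (x : Fin n → ZMod 2) = 0 := funext fun i => hxkill (sF C i) (h i)
    exact hx0 (Subtype.ext hzero)
  obtain ⟨istar, histar⟩ := histar
  have histar_notT : istar ∉ T := by
    intro hT
    obtain ⟨j, hj⟩ := ht_surj istar hT
    by_cases hjlt : j.1 < d - 1
    · apply histar
      rw [← hj]
      have : t j = t ⟨j.1, by omega⟩ := congrArg t (Fin.ext rfl)
      rw [this]
      exact Submodule.subset_span ⟨⟨j.1, hjlt⟩, rfl⟩
    · have hjval : j.1 = d - 1 := by omega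
      have hsg : sF C (t j) = sg C (T.erase (t j)) := by
        apply eq_of_add_eq_zero
        rw [sg, Finset.add_sum_erase _ _ (ht_mem j), ← sg, hTsg]
      have hsub : T.erase (t j) ⊆ U' := by
        intro b hb
        obtain ⟨hbne, hbT⟩ := Finset.mem_erase.1 hb
        obtain ⟨j', hj'⟩ := ht_surj b hbT
        have hj'lt : j'.1 < d - 1 := by
          rcases Nat.lt_or_ge j'.1 (d-1) with h' | h'
          · exact h'
          · exfalso
            have hjj : j' = j := Fin.ext (by omega)
            exact hbne (by rw [← hj', hjj])
        refine Finset.mem_image.2 ⟨⟨j'.1, hj'lt⟩, Finset.mem_univ _, ?_⟩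
        rw [show t ⟨j'.1, by omega⟩ = t j' from congrArg t (Fin.ext rfl), hj']
      apply histar
      rw [← hj, hsg]
      exact hW0 _ hsub
  -- the family
  set t0 : Fin n := t ⟨0, hd0⟩ with ht0
  set f : Fin (d-2) → Fin n := fun j => t ⟨j.1 + 1, by omega⟩ with hf
  have hf_inj : Function.Injective f := by
    intro a b hab
    have h2 := congrArg Fin.val (ht_inj hab)
    simp only at h2
    exact Fin.ext (by omega)
  have hf_ne : ∀ j, f j ≠ t0 := by
    intro j h
    have := congrArg Fin.val (ht_inj h)
    simp at this
  have ht0img : ∀ J : Finset (Fin (d-2)), t0 ∉ J.image f := by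
    intro J hmem
    obtain ⟨j, _, hj⟩ := Finset.mem_image.1 hmem
    exact hf_ne j hj
  have himgcard : ∀ J : Finset (Fin (d-2)), (J.image f).card = J.card :=
    fun J => Finset.card_image_of_injective _ hf_inj
  have himgcard_le : ∀ J : Finset (Fin (d-2)), J.card ≤ d - 2 :=
    fun J => by simpa using Finset.card_le_univ J
  have himg_sub_U' : ∀ J : Finset (Fin (d-2)), J.image f ⊆ U' := by
    intro J b hb
    obtain ⟨j, _, hj⟩ := Finset.mem_image.1 hb
    refine Finset.mem_image.2 ⟨⟨j.1 + 1, by omega⟩, Finset.mem_univ _, ?_⟩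
    rw [show t ⟨j.1+1, by omega⟩ = f j from congrArg t (Fin.ext rfl), hj]
  have himg_sub_T : ∀ J : Finset (Fin (d-2)), J.image f ⊆ T := by
    intro J b hb
    obtain ⟨j, _, hj⟩ := Finset.mem_image.1 hb
    rw [← hj]; exact ht_mem _
  have ht0U' : t0 ∈ U' :=
    Finset.mem_image.2 ⟨⟨0, by omega⟩, Finset.mem_univ _, congrArg t (Fin.ext rfl)⟩
  set χ0 : Module.Dual (ZMod 2) ↥C := sF C t0 + sF C istar with hχ0
  set ψ : Fin (d-2) → Module.Dual (ZMod 2) ↥C := fun j => χ0 + sF C (f j) with hψdef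
  have hsum : ∀ J : Finset (Fin (d-2)),
      ∑ j ∈ J, ψ j = (if Even J.card then 0 else χ0) + sg C (J.image f) := by
    intro J
    rw [hψdef, sum_shift]
    congr 1
    rw [sg, Finset.sum_image (fun a _ b _ h => hf_inj h)]
  have hBsum : ∀ J : Finset (Fin (d-2)),
      χ0 + sg C (J.image f) = sF C istar + sg C (insert t0 (J.image f)) := by
    intro J
    rw [show sg C (insert t0 (J.image f)) = sF C t0 + sg C (J.image f) from
      Finset.sum_insert (ht0img J), hχ0]
    abel
  have hψindep : LinearIndependent (ZMod 2) ψ := by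
    apply indep_of_sums
    intro J hJ
    rw [hsum J]
    by_cases hJe : Even J.card
    · simp only [hJe, if_true, zero_add]
      apply k1 C hd _ (hJ.image f)
      rw [himgcard J]
      have := himgcard_le J
      omega
    · simp only [hJe, if_false]
      rw [hBsum J]
      intro h0
      apply histar
      have : sF C istar = sg C (insert t0 (J.image f)) := eq_of_add_eq_zero h0
      rw [this]
      exact hW0 _ (Finset.insert_subset ht0U' (himg_sub_U' J))
  have hfs : ∀ i : Fin n, sF C i ∉ Submodule.span (ZMod 2) (Set.range ψ) := by
    intro i
    apply not_mem_span
    intro J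
    rw [hsum J]
    by_cases hJe : Even J.card
    · simp only [hJe, if_true, zero_add]
      rw [sF_add_sg]
      apply k1_symmDiff_single C hd
      · rw [himgcard J]; exact hJe
      · rw [himgcard J]
        have := himgcard_le J
        omega
    · simp only [hJe, if_false]
      rw [hBsum J]
      set B : Finset (Fin n) := insert t0 (J.image f) with hB
      have hB_sub_T : B ⊆ T := Finset.insert_subset (ht_mem _) (himg_sub_T J)
      have hB_card : B.card = J.card + 1 := by
        rw [hB, Finset.card_insert_of_notMem (ht0img J), himgcard J]
      have hB_ne : B.Nonempty := Finset.insert_nonempty _ _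
      by_cases hi : i = istar
      · rw [hi, show sF C istar + (sF C istar + sg C B) = (sF C istar + sF C istar) + sg C B
          from by abel, addSelf, zero_add]
        apply k1 C hd _ hB_ne
        have := himgcard_le J
        omega
      · -- i ≠ istar
        have hTB : sg C (T \ B) = sg C B := by
          apply eq_of_add_eq_zero
          rw [show sg C (T \ B) + sg C B = sg C T from Finset.sum_sdiff hB_sub_T, hTsg]
        set Bs : Finset (Fin n) := if B.card ≤ (d-1)/2 then B else T \ B with hBs
        have hBs_sub : Bs ⊆ T := by
          rw [hBs]
          by_cases hc : B.card ≤ (d-1)/2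
          · simpa [hc] using hB_sub_T
          · simp only [hc, if_false]
            exact Finset.sdiff_subset
        have hBs_sg : sg C Bs = sg C B := by
          rw [hBs]
          by_cases hc : B.card ≤ (d-1)/2
          · simp [hc]
          · simpa [hc] using hTB
        have hBs_card : Bs.card ≤ (d-1)/2 := by
          rw [hBs]
          by_cases hc : B.card ≤ (d-1)/2
          · simpa [hc] using hc
          · simp only [hc, if_false]
            rw [Finset.card_sdiff_of_subset hB_sub_T, hTd]
            omega
        have histar_Bs : istar ∉ Bs := fun hmem => histar_notT (hBs_sub hmem)
        rw [← hBs_sg,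
          show sF C istar + sg C Bs = sg C (insert istar Bs) from
            (Finset.sum_insert histar_Bs).symm,
          sF_add_sg]
        apply k1 C hd
        · -- nonempty : istar in it
          refine ⟨istar, Finset.mem_symmDiff.2 (Or.inl ⟨Finset.mem_insert_self _ _, ?_⟩)⟩
          simp [Ne.symm hi]
        · -- card bound
          have h1 : symmDiff (insert istar Bs) {i} ⊆ (insert istar Bs) ∪ {i} :=
            symmDiff_le_sup
          have h2 := Finset.card_le_card h1
          have h3 := Finset.card_union_le (insert istar Bs) ({i} : Finset (Fin n))
          have h4 := Finset.card_insert_le istar Bs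
          simp only [Finset.card_singleton] at h3
          omega
  have := build C hCk ψ hψindep hfs
  exact this

end oddc

end Stmt10Aux

namespace Stmt10Aux

section colsec

variable {n k d : ℕ} (C : Submodule (ZMod 2) (Fin n → ZMod 2))
  (hd : IsLeast (dualWeights C) d) (b : Basis (Fin k) (ZMod 2) ↥C)

include hd in
lemma sF_inj (hd3 : 3 ≤ d) : Function.Injective (sF C) := by
  intro i j hij
  by_contra hne
  have h0 : sg C {i, j} = 0 := by
    rw [sg, Finset.sum_pair hne, hij, addSelf]
  exact k1 C hd {i,j} ⟨i, by simp⟩ (by rw [Finset.card_pair hne]; omega) h0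

noncomputable def colv (j : Fin n) : Fin k → ZMod 2 := fun i => (b i : Fin n → ZMod 2) j

lemma colv_sF (j : Fin n) (i : Fin k) : colv C b j i = sF C j (b i) := rfl

include hd in
lemma colv_inj (hd3 : 3 ≤ d) : Function.Injective (colv C b) := by
  intro j j' h
  apply sF_inj C hd hd3
  exact b.ext fun i => by rw [← colv_sF, ← colv_sF, h]

include hd in
lemma colv_ne_zero (hd3 : 3 ≤ d) (j : Fin n) : colv C b j ≠ 0 := by
  intro h
  apply sF_ne_zero C hd (by omega) j
  apply b.ext
  intro i
  have := congrFun h i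
  rw [colv_sF] at this
  simpa using this

lemma card_nonzero_vec : Fintype.card {v : Fin k → ZMod 2 // v ≠ 0} = 2 ^ k - 1 := by
  have h1 : Fintype.card (Fin k → ZMod 2) = 2 ^ k := by
    rw [Fintype.card_fun, ZMod.card, Fintype.card_fin]
  have h2 : Fintype.card {v : Fin k → ZMod 2 // ¬ (v = 0)} =
      Fintype.card (Fin k → ZMod 2) - Fintype.card {v : Fin k → ZMod 2 // v = 0} :=
    Fintype.card_subtype_compl _
  have h3 : Fintype.card {v : Fin k → ZMod 2 // v = 0} = 1 := Fintype.card_subtype_eq _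
  calc Fintype.card {v : Fin k → ZMod 2 // v ≠ 0}
      = Fintype.card (Fin k → ZMod 2) - Fintype.card {v : Fin k → ZMod 2 // v = 0} := h2
    _ = 2 ^ k - 1 := by rw [h1, h3]

noncomputable def colS (hd3 : 3 ≤ d) : Fin n → {v : Fin k → ZMod 2 // v ≠ 0} :=
  fun j => ⟨colv C b j, colv_ne_zero C hd b hd3 j⟩

include hd in
lemma colS_inj (hd3 : 3 ≤ d) : Function.Injective (colS C hd b hd3) := by
  intro a a' h
  exact colv_inj C hd b hd3 (congrArg Subtype.val h)

include hd b in
lemma n_le_card (hd3 : 3 ≤ d) : n ≤ 2 ^ k - 1 := by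
  have := Fintype.card_le_of_injective _ (colS_inj C hd b hd3)
  rwa [card_nonzero_vec, Fintype.card_fin] at this

include hd in
lemma exists_nonzero_coord (hd1 : 1 < d) (i : Fin n) : ∃ x ∈ C, x i ≠ 0 := by
  have h := sF_ne_zero C hd hd1 i
  have h2 : sg C {i} ≠ 0 := by rwa [sg_singleton]
  obtain ⟨x, hxC, hx⟩ := (sg_ne_zero_iff C {i}).1 h2
  exact ⟨x, hxC, by simpa using hx⟩

include hd b in
lemma d3_case (hCk : Module.finrank (ZMod 2) ↥C = k) (hd3 : d = 3) (hn : n < 2 ^ k - 1) :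
    ∃ D : Submodule (ZMod 2) (Fin n → ZMod 2), D ≤ C ∧
      Module.finrank (ZMod 2) ↥D + 1 = k ∧ HasFullSupport D := by
  classical
  have hd3' : 3 ≤ d := by omega
  have hns : ¬ Function.Surjective (colS C hd b hd3') := by
    intro hs
    have := Fintype.card_le_of_surjective _ hs
    rw [card_nonzero_vec, Fintype.card_fin] at this
    omega
  rw [Function.Surjective] at hns
  push_neg at hns
  obtain ⟨vv, hvv⟩ := hns
  set φ : Module.Dual (ZMod 2) ↥C := ∑ i, vv.1 i • b.coord i with hφ
  have hφb : ∀ i', φ (b i') = vv.1 i' := by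
    intro i'
    rw [hφ, LinearMap.sum_apply]
    rw [Finset.sum_eq_single i']
    · rw [LinearMap.smul_apply, Basis.coord_apply, Basis.repr_self]
      simp
    · intro i _ hne
      rw [LinearMap.smul_apply, Basis.coord_apply, Basis.repr_self,
        Finsupp.single_eq_of_ne' (Ne.symm hne)]
      simp
    · intro h
      exact absurd (Finset.mem_univ i') h
  have hφ0 : φ ≠ 0 := by
    intro h
    obtain ⟨i0, hi0⟩ := Function.ne_iff.1 vv.2
    apply hi0
    rw [← hφb i0, h]
    rfl
  have hφsF : ∀ j, sF C j ≠ φ := by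
    intro j h
    apply hvv j
    apply Subtype.ext
    funext i
    rw [show (colS C hd b hd3' j).1 i = sF C j (b i) from rfl, h, hφb]
  set ψ : Fin 1 → Module.Dual (ZMod 2) ↥C := fun _ => φ with hψ
  have hsum : ∀ J : Finset (Fin 1), ∑ j ∈ J, ψ j = J.card • φ := by
    intro J
    rw [hψ, Finset.sum_const]
  have hcard1 : ∀ J : Finset (Fin 1), J.card ≤ 1 := by
    intro J
    simpa using Finset.card_le_univ J
  have hψindep : LinearIndependent (ZMod 2) ψ := by
    apply indep_of_sums
    intro J hJ
    have hJc : J.card = 1 := le_antisymm (hcard1 J) hJ.card_pos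
    rw [hsum, hJc, one_nsmul]
    exact hφ0
  have hfs : ∀ i : Fin n, sF C i ∉ Submodule.span (ZMod 2) (Set.range ψ) := by
    intro i
    apply not_mem_span
    intro J
    rw [hsum]
    by_cases hJ0 : J.card = 0
    · rw [hJ0, zero_nsmul, add_zero]
      exact sF_ne_zero C hd (by omega) i
    · have hJc : J.card = 1 := le_antisymm (hcard1 J) (by omega)
      rw [hJc, one_nsmul]
      intro h
      exact hφsF i (eq_of_add_eq_zero h)
  exact build C hCk ψ hψindep hfs

include hd b in
lemma hamming_case (hCk : Module.finrank (ZMod 2) ↥C = k) (hk1 : 1 ≤ k)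
    (hd3 : d = 3) (hn : n = 2 ^ k - 1) :
    (∃ G : Matrix (Fin k) (Fin n) (ZMod 2), LinearIndependent (ZMod 2) G ∧
        C = Submodule.span (ZMod 2) (Set.range G) ∧
        ∀ v : Fin k → ZMod 2, v ≠ 0 → ∃! j : Fin n, (fun i => G i j) = v) ∧
      n = 2 ^ k - 1 ∧ d = 3 ∧ IsLeast (gammaSet C) k := by
  classical
  have hd3' : 3 ≤ d := by omega
  have hbij : Function.Bijective (colS C hd b hd3') := by
    rw [Fintype.bijective_iff_injective_and_card]
    refine ⟨colS_inj C hd b hd3', ?_⟩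
    rw [card_nonzero_vec, Fintype.card_fin, hn]
  refine ⟨⟨fun i => ((b i : ↥C) : Fin n → ZMod 2), ?_, ?_, ?_⟩, hn, hd3, ?_, ?_⟩
  · -- linear independence
    exact b.linearIndependent.map' C.subtype (Submodule.ker_subtype C)
  · -- span
    have h1 : Set.range (fun i => ((b i : ↥C) : Fin n → ZMod 2)) =
        C.subtype '' Set.range ⇑b := by
      rw [← Set.range_comp]
      rfl
    rw [h1, Submodule.span_image, b.span_eq, Submodule.map_top, Submodule.range_subtype]
  · -- unique column
    intro v hv
    obtain ⟨j, hj⟩ := hbij.2 ⟨v, hv⟩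
    refine ⟨j, ?_, ?_⟩
    · exact congrArg Subtype.val hj
    · intro j' hj'
      apply hbij.1
      rw [hj]
      exact Subtype.ext hj'
  · -- k ∈ gammaSet
    exact ⟨by omega, C, le_refl C, hCk, fun i => exists_nonzero_coord C hd (by omega) i⟩
  · -- lower bound
    rintro r ⟨hr0, D, hDC, hDr, hDf⟩
    by_contra hlt
    push_neg at hlt
    set D' : Submodule (ZMod 2) ↥C := Submodule.comap C.subtype D with hD'
    have hD'rank : Module.finrank (ZMod 2) ↥D' = r := by
      rw [← hDr]
      exact LinearEquiv.finrank_eq (Submodule.comapSubtypeEquivOfLe hDC)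
    have hD'netop : D' ≠ ⊤ := by
      intro h
      rw [h, finrank_top, hCk] at hD'rank
      omega
    have hx : ∃ x : ↥C, x ∉ D' := by
      by_contra h
      push_neg at h
      exact hD'netop (Submodule.eq_top_iff'.2 h)
    obtain ⟨x, hx⟩ := hx
    obtain ⟨φ, hφx, hφmap⟩ := Submodule.exists_dual_map_eq_bot_of_notMem hx inferInstance
    have hφD : ∀ z ∈ D', φ z = 0 := by
      intro z hz
      have h1 : φ z ∈ Submodule.map φ D' := Submodule.mem_map_of_mem hz
      rw [hφmap] at h1
      exact (Submodule.mem_bot (ZMod 2)).1 h1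
    have hvne : (fun i => φ (b i)) ≠ 0 := by
      intro h
      apply hφx
      have hφeq : φ = 0 := b.ext fun i => by simpa using congrFun h i
      rw [hφeq]
      rfl
    obtain ⟨j, hj⟩ := hbij.2 ⟨fun i => φ (b i), hvne⟩
    have hφsF : sF C j = φ := by
      apply b.ext
      intro i
      have := congrFun (congrArg Subtype.val hj) i
      exact this
    obtain ⟨x', hx'D, hx'j⟩ := hDf j
    have hx'C : x' ∈ C := hDC hx'D
    have hmem : (⟨x', hx'C⟩ : ↥C) ∈ D' := by
      rw [hD', Submodule.mem_comap]
      exact hx'D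
    have hzero := hφD _ hmem
    rw [← hφsF] at hzero
    exact hx'j hzero

end colsec

end Stmt10Aux

namespace Stmt10Aux

section casec

variable {n k d : ℕ} (C : Submodule (ZMod 2) (Fin n → ZMod 2))
  (hd : IsLeast (dualWeights C) d)

include hd in
lemma d_le_k1 (hCk : Module.finrank (ZMod 2) ↥C = k) (hkn : k < n) : d ≤ k + 1 := by
  by_contra h
  push_neg at h
  have hle : k + 1 ≤ n := by omega
  set fam : Fin (k+1) → Module.Dual (ZMod 2) ↥C :=
    fun j => sF C (Fin.castLE hle j) with hfam
  by_cases hindep : LinearIndependent (ZMod 2) fam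
  · have h1 := hindep.fintype_card_le_finrank
    rw [Fintype.card_fin, Subspace.dual_finrank_eq, hCk] at h1
    omega
  · obtain ⟨J, hJne, hJ0⟩ := not_indep_sums fam hindep
    have himg : ∑ j ∈ J, fam j = sg C (J.image (Fin.castLE hle)) := by
      rw [sg, Finset.sum_image (fun a _ b _ hab => Fin.castLE_injective hle hab)]
    rw [himg] at hJ0
    refine k1 C hd _ (hJne.image _) ?_ hJ0
    have h2 : (J.image (Fin.castLE hle)).card ≤ k + 1 := by
      calc (J.image (Fin.castLE hle)).card ≤ J.card := Finset.card_image_le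
        _ ≤ k + 1 := by simpa using Finset.card_le_univ J
    omega

include hd in
lemma casec_T_univ (hCk : Module.finrank (ZMod 2) ↥C = k) (hkn : k < n) (hd3 : 3 ≤ d)
    (T : Finset (Fin n)) (hTd : T.card = d) (hTsg : sg C T = 0)
    (hdk : d = k + 1) : T = Finset.univ := by
  classical
  by_contra hne
  obtain ⟨j, hj⟩ : ∃ j : Fin n, j ∉ T := by
    by_contra h
    push_neg at h
    exact hne (Finset.eq_univ_iff_forall.2 h)
  have hd0 : 0 < d := by omega
  set t : Fin d → Fin n := fun j' => ((T.orderIsoOfFin hTd) j' : Fin n) with ht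
  have ht_inj : Function.Injective t := fun a b hab =>
    (T.orderIsoOfFin hTd).injective (Subtype.ext hab)
  have ht_mem : ∀ j', t j' ∈ T := fun j' => ((T.orderIsoOfFin hTd) j').2
  set u : Fin k → Fin n := fun j' => t ⟨j'.1, by omega⟩ with hu
  have hu_inj : Function.Injective u := by
    intro a b hab
    have h2 := congrArg Fin.val (ht_inj hab)
    exact Fin.ext h2
  have hu_mem : ∀ j', u j' ∈ T := fun j' => ht_mem _
  set fam : Fin k → Module.Dual (ZMod 2) ↥C := fun j' => sF C (u j') with hfam
  have hindep : LinearIndependent (ZMod 2) fam := by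
    apply indep_of_sums
    intro J hJ
    have himg : ∑ j' ∈ J, fam j' = sg C (J.image u) := by
      rw [sg, Finset.sum_image (fun a _ b _ hab => hu_inj hab)]
    rw [himg]
    refine k1 C hd _ (hJ.image _) ?_
    have h2 : (J.image u).card ≤ k := by
      calc (J.image u).card ≤ J.card := Finset.card_image_le
        _ ≤ k := by simpa using Finset.card_le_univ J
    omega
  have hspan : Submodule.span (ZMod 2) (Set.range fam) = ⊤ := by
    apply Submodule.eq_top_of_finrank_eq
    rw [finrank_span_eq_card hindep, Fintype.card_fin, Subspace.dual_finrank_eq, hCk]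
  have hjmem : sF C j ∈ Submodule.span (ZMod 2) (Set.range fam) := by
    rw [hspan]
    exact Submodule.mem_top
  obtain ⟨c, hc⟩ := (mem_span_range_iff_exists_fun (R := ZMod 2)).1 hjmem
  rw [smul_sum_eq] at hc
  set Jc : Finset (Fin k) := Finset.univ.filter (fun j' => c j' ≠ 0) with hJc
  set A : Finset (Fin n) := Jc.image u with hA
  have hcA : sg C A = sF C j := by
    rw [hA, sg, Finset.sum_image (fun a _ b _ hab => hu_inj hab)]
    exact hc
  have hA_sub : A ⊆ T := by
    intro b hb
    obtain ⟨j', _, hj'⟩ := Finset.mem_image.1 hb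
    rw [← hj']
    exact hu_mem _
  have hjA : j ∉ A := fun h => hj (hA_sub h)
  have hZ : sg C (insert j A) = 0 := by
    rw [show sg C (insert j A) = sF C j + sg C A from Finset.sum_insert hjA, hcA, addSelf]
  have hAcard_le : A.card ≤ k := by
    calc A.card ≤ Jc.card := Finset.card_image_le
      _ ≤ k := by simpa using Finset.card_le_univ Jc
  have hge : d ≤ (insert j A).card := by
    by_contra h
    push_neg at h
    exact k1 C hd _ (Finset.insert_nonempty _ _) h hZ
  rw [Finset.card_insert_of_notMem hjA] at hge
  have hAk : A.card = k := by omega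
  set Tk : Finset (Fin n) := (Finset.univ : Finset (Fin k)).image u with hTk
  have hATk : A ⊆ Tk := Finset.image_subset_image (Finset.subset_univ Jc)
  have hTkcard : Tk.card = k := by
    rw [hTk, Finset.card_image_of_injective _ hu_inj]
    simp
  have hAeq : A = Tk := Finset.eq_of_subset_of_card_le hATk (by omega)
  set w : Fin n := t ⟨k, by omega⟩ with hw
  have hwTk : w ∉ Tk := by
    intro h
    obtain ⟨j', _, hj'⟩ := Finset.mem_image.1 h
    have h2 := congrArg Fin.val (ht_inj hj')
    simp only at h2
    omega
  have hwT : w ∈ T := ht_mem _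
  have hTeq : T = insert w Tk := by
    symm
    apply Finset.eq_of_subset_of_card_le
    · refine Finset.insert_subset hwT ?_
      intro b hb
      obtain ⟨j', _, hj'⟩ := Finset.mem_image.1 hb
      rw [← hj']
      exact hu_mem _
    · rw [hTd, Finset.card_insert_of_notMem hwTk, hTkcard]
      omega
  have hsgTk : sg C Tk = sF C w := by
    symm
    apply eq_of_add_eq_zero
    rw [show sF C w + sg C Tk = sg C (insert w Tk) from (Finset.sum_insert hwTk).symm,
      ← hTeq, hTsg]
  have hjw : j ≠ w := fun h => hj (h ▸ hwT)
  have hfinal : sg C {j, w} = 0 := by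
    rw [show sg C {j, w} = sF C j + sF C w from Finset.sum_pair hjw,
      ← hcA, hAeq, hsgTk, addSelf]
  exact k1 C hd {j, w} ⟨j, by simp⟩ (by rw [Finset.card_pair hjw]; omega) hfinal

include hd in
lemma casec_main (hCk : Module.finrank (ZMod 2) ↥C = k) (hkn : k < n) (hd3 : 3 ≤ d)
    (T : Finset (Fin n)) (hTd : T.card = d) (hTsg : sg C T = 0)
    (hdk : d = k + 1) (hdo : Odd d) :
    k = n - 1 ∧ d = n ∧ Odd n ∧ IsLeast (gammaSet C) 2 := by
  classical
  have hTu := casec_T_univ C hd hCk hkn hd3 T hTd hTsg hdk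
  have hnd : n = d := by
    rw [← hTd, hTu, Finset.card_univ, Fintype.card_fin]
  have hk2 : 2 ≤ k := by omega
  refine ⟨by omega, by omega, by rw [hnd]; exact hdo, ?_, ?_⟩
  · -- 2 ∈ gammaSet
    obtain ⟨D, hDC, hDr, hDf⟩ :=
      gen C hd hCk T hTd (k - 2) (by omega) (fun a _ ha => by omega)
    exact ⟨by omega, D, hDC, by omega, hDf⟩
  · rintro r ⟨hr0, D, hDC, hDr, hDf⟩
    by_contra h
    have hr1 : r = 1 := by omega
    rw [hr1] at hDr
    obtain ⟨v, hv0, hvgen⟩ := finrank_eq_one_iff'.1 hDr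
    have hval : ∀ i, ((v : Fin n → ZMod 2)) i = 1 := by
      intro i
      obtain ⟨x, hxD, hxi⟩ := hDf i
      obtain ⟨c, hc⟩ := hvgen ⟨x, hxD⟩
      rcases z2cases c with h0 | h1
      · exfalso
        rw [h0, zero_smul] at hc
        apply hxi
        have h2 : x = ((0 : ↥D) : Fin n → ZMod 2) := congrArg Subtype.val hc.symm
        rw [h2]
        rfl
      · rw [h1, one_smul] at hc
        have h2 : (v : Fin n → ZMod 2) = x := congrArg Subtype.val hc
        apply z2one
        rw [h2]
        exact hxi
    have hvC : (v : Fin n → ZMod 2) ∈ C := hDC v.2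
    have hzero := congrArg (fun φ : Module.Dual (ZMod 2) ↥C => φ ⟨(v : Fin n → ZMod 2), hvC⟩) hTsg
    rw [sg_apply, hTu] at hzero
    have hsum1 : ∑ i : Fin n, ((v : Fin n → ZMod 2)) i = (1 : ZMod 2) := by
      rw [Finset.sum_congr rfl (fun i _ => hval i), Finset.sum_const, nsmul_char2]
      have : ¬ Even n := by
        rw [hnd]
        exact Nat.not_even_iff_odd.2 hdo
      simp [this]
    rw [hsum1] at hzero
    exact one_ne_zero hzero

end casec

end Stmt10Aux


end Stmt10AuxProof

open Stmt10Aux in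
/-- the conjecture for binary codes: for a binary `[n,k]` code `C` with
`1 ≤ k < n` and `d(C⊥) ≥ 3`, either `γ(C) ≤ k - d(C⊥) + 2`, or `C` is a dual Hamming code
over `F_2` (in which case `n = 2^k - 1`, `d(C⊥) = 3`, `γ(C) = k`), or `k = n-1` and
`d(C⊥) = n` is odd (in which case `γ(C) = 2`). -/
theorem stmt10 {n k d : ℕ}
    (C : Submodule (ZMod 2) (Fin n → ZMod 2)) (hCk : Module.finrank (ZMod 2) C = k)
    (hk1 : 1 ≤ k) (hkn : k < n)
    (hd : IsLeast (dualWeights C) d) (hd3 : 3 ≤ d) :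
    (∃ D : Submodule (ZMod 2) (Fin n → ZMod 2), D ≤ C ∧ HasFullSupport D ∧
        (Module.finrank (ZMod 2) D : ℤ) ≤ (k : ℤ) - (d : ℤ) + 2) ∨
    ((∃ G : Matrix (Fin k) (Fin n) (ZMod 2), LinearIndependent (ZMod 2) G ∧
        C = Submodule.span (ZMod 2) (Set.range G) ∧
        ∀ v : Fin k → ZMod 2, v ≠ 0 → ∃! j : Fin n, (fun i => G i j) = v) ∧
      n = 2 ^ k - 1 ∧ d = 3 ∧ IsLeast (gammaSet C) k) ∨
    (k = n - 1 ∧ d = n ∧ Odd n ∧ IsLeast (gammaSet C) 2) := by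

  classical
  obtain ⟨y, hy0, hyC, hywt⟩ := hd.1
  set T : Finset (Fin n) := Finset.univ.filter (fun i => y i ≠ 0) with hT
  have hTd : T.card = d := by
    rw [hT]
    exact hywt
  have hTsg : Stmt10Aux.sg C T = 0 := by
    apply LinearMap.ext
    intro x
    rw [Stmt10Aux.sg_apply]
    have h1 : ∑ i ∈ T, (x : Fin n → ZMod 2) i
        = ∑ i ∈ T, (x : Fin n → ZMod 2) i * y i := by
      apply Finset.sum_congr rfl
      intro i hi
      rw [Stmt10Aux.z2one (y i) (Finset.mem_filter.1 hi).2, mul_one]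
    have h2 : ∑ i ∈ T, (x : Fin n → ZMod 2) i * y i
        = ∑ i, (x : Fin n → ZMod 2) i * y i := by
      apply Finset.sum_subset (Finset.subset_univ T)
      intro i _ hiT
      have hyi : y i = 0 := by
        by_contra hyi
        exact hiT (Finset.mem_filter.2 ⟨Finset.mem_univ i, hyi⟩)
      rw [hyi, mul_zero]
    rw [h1, h2, hyC x x.2]
    rfl
  have hdk1 : d ≤ k + 1 := Stmt10Aux.d_le_k1 C hd hCk hkn
  rcases Nat.even_or_odd d with hde | hdo
  · -- d even : generic construction
    obtain ⟨D, hDC, hDr, hDf⟩ := Stmt10Aux.gen C hd hCk T hTd (d - 2) (by omega)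
      (fun a ha hale => by
        obtain ⟨e, he⟩ := hde
        obtain ⟨bb, hbb⟩ := ha
        omega)
    left
    exact ⟨D, hDC, hDf, by omega⟩
  · by_cases hd3e : d = 3
    · set b := Module.finBasisOfFinrankEq (ZMod 2) ↥C hCk with hb
      by_cases hn : n = 2 ^ k - 1
      · right; left
        exact Stmt10Aux.hamming_case C hd b hCk hk1 hd3e hn
      · have hnlt : n < 2 ^ k - 1 :=
          lt_of_le_of_ne (Stmt10Aux.n_le_card C hd b (by omega)) hn
        obtain ⟨D, hDC, hDr, hDf⟩ := Stmt10Aux.d3_case C hd b hCk hd3e hnlt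
        left
        exact ⟨D, hDC, hDf, by omega⟩
    · have hd5 : 5 ≤ d := by
        obtain ⟨m, hm⟩ := hdo
        omega
      by_cases hdk : d ≤ k
      · obtain ⟨D, hDC, hDr, hDf⟩ :=
          Stmt10Aux.odd_case C hd hCk T hTd hTsg hdo hd5 hdk
        left
        exact ⟨D, hDC, hDf, by omega⟩
      · right; right
        exact Stmt10Aux.casec_main C hd hCk hkn hd3 T hTd hTsg (by omega) hdo
end

section
/- Suppose there exists a linear [n, k_0] code C_0 over F_q with k_0 < n and d(C_0⊥) = δ ≥ 3. If C is a linear [n,k] code over F_q with k_0 < k < n and d(C⊥) = δ, then γ(C) ≤ k − δ + 2. -/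
open Module Submodule

namespace Stmt15Aux

lemma arith {q c N m X A : ℕ} (hq : 2 ≤ q) (hc : 1 ≤ c) (hA : 2 ≤ A) (hX : 2 ≤ X)
    (h1 : (X * q - 1) * N ≤ m * (X - 1))
    (h2 : A - 1 + c * (q - 1) ≤ N * (q - 1)) :
    q * A - 1 + c * (q - 1) ≤ m * (q - 1) := by
  have hXq : 4 ≤ X * q := by calc 4 = 2 * 2 := rfl
                                 _ ≤ X * q := Nat.mul_le_mul hX hq
  have hqA : 4 ≤ q * A := by calc 4 = 2 * 2 := rfl
                                 _ ≤ q * A := Nat.mul_le_mul hq hA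
  have hN : 1 ≤ N := by
    rcases Nat.eq_zero_or_pos N with h | h
    · subst h; simp at h2; omega
    · exact h
  have hm : q * N + 1 ≤ m := by
    have e1 : X * q - 1 = q * (X - 1) + (q - 1) := by
      zify [show 1 ≤ X * q by omega, show 1 ≤ X by omega, show 1 ≤ q by omega]
      ring
    rw [e1, add_mul] at h1
    have e2 : 1 ≤ (q - 1) * N := by
      have : 1 ≤ q - 1 := by omega
      exact Nat.mul_le_mul this hN
    have e3 : q * (X - 1) * N + 1 ≤ m * (X - 1) := by omega
    have e4 : q * N * (X - 1) + 1 ≤ m * (X - 1) := by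
      calc q * N * (X - 1) + 1 = q * (X - 1) * N + 1 := by ring_nf
        _ ≤ m * (X - 1) := e3
    by_contra hcon
    push_neg at hcon
    have : m ≤ q * N := by omega
    have : m * (X - 1) ≤ q * N * (X - 1) := Nat.mul_le_mul_right _ this
    omega
  calc q * A - 1 + c * (q - 1)
      ≤ q * A - 1 + q * (c * (q - 1)) := by
        have : c * (q - 1) ≤ q * (c * (q - 1)) := Nat.le_mul_of_pos_left _ (by omega)
        omega
    _ = q * (A - 1 + c * (q - 1)) + (q - 1) := by
        zify [show 1 ≤ q * A by omega, show 1 ≤ A by omega, show 1 ≤ q by omega]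
        ring
    _ ≤ q * (N * (q - 1)) + (q - 1) := by
        have := Nat.mul_le_mul_left q h2
        omega
    _ = (q * N + 1) * (q - 1) := by ring
    _ ≤ m * (q - 1) := Nat.mul_le_mul_right _ hm


section General

variable {F : Type*} [Field F] {M : Type*} [AddCommGroup M] [Module F M]

set_option linter.unusedSectionVars false

lemma card_ne (α : Type*) [Fintype α] [DecidableEq α] (a : α) :
    Fintype.card {x : α // x ≠ a} = Fintype.card α - 1 := by
  classical
  have := Fintype.card_subtype_compl (fun x : α => x = a)
  simpa [Fintype.card_subtype_eq] using this


lemma finite_of_fd [Fintype F] (M : Type*) [AddCommGroup M] [Module F M]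
    [FiniteDimensional F M] : Finite M :=
  Finite.of_equiv _ (Module.finBasis F M).equivFun.toEquiv.symm


/-- For a linearly independent finite subset of `V`, there is a functional on `V`
equal to `1` on all its elements. -/
lemma exists_eval_one (V : Submodule F M) (G : Finset M) (hGV : ↑G ⊆ (V : Set M))
    (li : LinearIndependent F (fun x : ↑G => (x : M))) :
    ∃ f : Module.Dual F ↥V, ∀ (g : M) (hg : g ∈ G), f ⟨g, hGV hg⟩ = 1 := by
  classical
  set w : ↑G → ↥V := fun x => ⟨↑x, hGV x.2⟩ with hwdef
  have liw : LinearIndependent F w := by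
    apply LinearIndependent.of_comp V.subtype
    exact li
  have lir := liw.linearIndepOn_id
  set b := Module.Basis.extend lir with hbdef
  refine ⟨b.sumCoords, ?_⟩
  intro g hg
  have hmem : (⟨g, hGV hg⟩ : ↥V) ∈ lir.extend (Set.subset_univ (Set.range w)) := by
    apply lir.subset_extend
    exact ⟨⟨g, hg⟩, rfl⟩
  have hb : b ⟨⟨g, hGV hg⟩, hmem⟩ = ⟨g, hGV hg⟩ := Module.Basis.extend_apply_self lir _
  rw [← hb, Basis.sumCoords_self_apply]


/-- The kernel of a nonzero functional on `V`, pushed into `M`, has rank one less. -/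
lemma ker_map_finrank [FiniteDimensional F M] (V : Submodule F M) (f : Module.Dual F ↥V)
    (hf : f ≠ 0) :
    finrank F ((LinearMap.ker f).map V.subtype) + 1 = finrank F V := by
  rw [Submodule.finrank_map_subtype_eq]
  have h1 := LinearMap.finrank_range_add_finrank_ker f
  have h2 : LinearMap.range f = ⊤ := by
    rcases Ideal.eq_bot_or_top (LinearMap.range f) with h | h
    · exact absurd (LinearMap.range_eq_bot.mp h) hf
    · exact h
  rw [h2, finrank_top, Module.finrank_self] at h1
  omega


/-- Claim A: a blocking configuration must be large. -/
lemma claimA [Fintype F] [FiniteDimensional F M] (c : ℕ) (hc : 1 ≤ c) (j : ℕ) :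
    ∀ (V : Submodule F M) (G : Finset M), (↑G : Set M) ⊆ (V : Set M) →
      (0 : M) ∉ G →
      (∀ t : Finset M, t ⊆ G → t.card ≤ c + 1 →
        LinearIndependent F (fun x : ↑t => (x : M))) →
      finrank F V = c + 1 + j →
      (∀ W : Submodule F M, W ≤ V → finrank F W = c → ∃ g ∈ G, g ∈ W) →
      Fintype.card F ^ (j + 1) - 1 + c * (Fintype.card F - 1)
        ≤ G.card * (Fintype.card F - 1) := by
  induction j with
  | zero =>
    intro V G hGV h0 hind hdim hblock
    classical
    have hq : 2 ≤ Fintype.card F := Fintype.one_lt_card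
    have hcard : c + 1 ≤ G.card := by
      by_contra hlt
      push_neg at hlt
      have li := hind G (subset_refl G) (by omega)
      have hfe : ∃ f' : Module.Dual F ↥V, f' ≠ 0 ∧
          ∀ (g : M) (hg : g ∈ G), f' ⟨g, hGV hg⟩ = 1 := by
        rcases G.eq_empty_or_nonempty with hG | hG
        · haveI : Nontrivial (Module.Dual F ↥V) := by
            have h1 : finrank F (Module.Dual F ↥V) = c + 1 := by
              rw [Subspace.dual_finrank_eq, hdim]
            exact Module.nontrivial_of_finrank_pos (R := F) (by omega)
          obtain ⟨f', hf'⟩ := exists_ne (0 : Module.Dual F ↥V)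
          exact ⟨f', hf', fun g hg => absurd hg (by simp [hG])⟩
        · obtain ⟨f, hf⟩ := exists_eval_one V G hGV li
          refine ⟨f, ?_, hf⟩
          obtain ⟨g, hg⟩ := hG
          intro h0f
          have := hf g hg
          rw [h0f] at this
          simp at this
      obtain ⟨f', hf'0, hf'⟩ := hfe
      have hW := ker_map_finrank V f' hf'0
      obtain ⟨g, hgG, hgW⟩ := hblock ((LinearMap.ker f').map V.subtype)
        (Submodule.map_subtype_le _ _) (by omega)
      obtain ⟨y, hy, hyg⟩ := Submodule.mem_map.mp hgW
      have hyeq : y = ⟨g, hGV hgG⟩ := Subtype.ext hyg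
      rw [hyeq] at hy
      have := LinearMap.mem_ker.mp hy
      rw [hf' g hgG] at this
      exact one_ne_zero this
    have h1 : Fintype.card F ^ (0 + 1) - 1 + c * (Fintype.card F - 1)
        = (c + 1) * (Fintype.card F - 1) := by
      rw [pow_one, Nat.succ_mul]
      omega
    rw [h1]
    exact Nat.mul_le_mul_right _ hcard
  | succ j ih =>
    intro V G hGV h0 hind hdim hblock
    classical
    set q := Fintype.card F with hqdef
    have hq : 2 ≤ q := Fintype.one_lt_card
    haveI : Finite (Module.Dual F ↥V) := finite_of_fd (F := F) _
    letI : Fintype (Module.Dual F ↥V) := Fintype.ofFinite _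
    have hdual : finrank F (Module.Dual F ↥V) = c + 2 + j := by
      rw [Subspace.dual_finrank_eq, hdim]
      omega
    have hDVcard : Fintype.card (Module.Dual F ↥V) = q ^ (c + 2 + j) := by
      rw [card_eq_pow_finrank (K := F), hdual]
    set B : Finset (Module.Dual F ↥V) := Finset.univ.filter (fun f => f ≠ 0) with hBdef
    have hBeq : B = Finset.univ.erase 0 := by
      ext f
      simp [hBdef, Finset.mem_erase, and_comm]
    have hBcard : B.card = q ^ (c + 2 + j) - 1 := by
      rw [hBeq, Finset.card_erase_of_mem (Finset.mem_univ 0), Finset.card_univ, hDVcard]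
    -- per point count
    have hpoint : ∀ x : ↥V, x ≠ 0 →
        (B.filter (fun f => f x = 0)).card = q ^ (c + 1 + j) - 1 := by
      intro x hx
      set ev : Module.Dual F ↥V →ₗ[F] F := Module.Dual.eval F ↥V x with hevdef
      have hev : ev ≠ 0 := by
        intro h
        apply hx
        apply (Module.forall_dual_apply_eq_zero_iff F x).mp
        intro f
        have : ev f = 0 := by rw [h]; rfl
        exact this
      haveI : Finite ↥(LinearMap.ker ev) := finite_of_fd (F := F) _
      letI : Fintype ↥(LinearMap.ker ev) := Fintype.ofFinite _
      have hkerrank : finrank F ↥(LinearMap.ker ev) = c + 1 + j := by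
        have h1 := LinearMap.finrank_range_add_finrank_ker ev
        have h2 : LinearMap.range ev = ⊤ := by
          rcases Ideal.eq_bot_or_top (LinearMap.range ev) with h | h
          · exact absurd (LinearMap.range_eq_bot.mp h) hev
          · exact h
        rw [h2, finrank_top, Module.finrank_self, hdual] at h1
        omega
      have hkercard : Fintype.card ↥(LinearMap.ker ev) = q ^ (c + 1 + j) := by
        rw [card_eq_pow_finrank (K := F), hkerrank]
      have hsub : Fintype.card {f : Module.Dual F ↥V // f x = 0}
          = Fintype.card ↥(LinearMap.ker ev) := by
        apply Fintype.card_congr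
        apply Equiv.subtypeEquivRight
        intro f
        rw [LinearMap.mem_ker]
        exact Iff.rfl
      have huniv : (Finset.univ.filter (fun f : Module.Dual F ↥V => f x = 0)).card
          = q ^ (c + 1 + j) := by
        rw [← Fintype.card_subtype, hsub, hkercard]
      have hBfil : B.filter (fun f => f x = 0)
          = (Finset.univ.filter (fun f : Module.Dual F ↥V => f x = 0)).erase 0 := by
        ext f
        simp only [hBdef, Finset.mem_filter, Finset.mem_erase, Finset.mem_univ, true_and,
          and_true, and_comm]
      rw [hBfil, Finset.card_erase_of_mem (by simp), huniv]
    -- lift and sums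
    set lift : {g // g ∈ G} → ↥V := fun g => ⟨g.1, hGV g.2⟩ with hliftdef
    have hliftne : ∀ g : {g // g ∈ G}, lift g ≠ 0 := by
      intro g hg0
      apply h0
      have hgv : g.1 = 0 := congrArg Subtype.val hg0
      exact hgv ▸ g.2
    have hsum : ∑ f ∈ B, (G.attach.filter (fun g => f (lift g) = 0)).card
        = G.card * (q ^ (c + 1 + j) - 1) := by
      calc ∑ f ∈ B, (G.attach.filter (fun g => f (lift g) = 0)).card
          = ∑ f ∈ B, ∑ g ∈ G.attach, (if f (lift g) = 0 then 1 else 0) := by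
            apply Finset.sum_congr rfl
            intro f _
            rw [Finset.card_filter]
        _ = ∑ g ∈ G.attach, ∑ f ∈ B, (if f (lift g) = 0 then 1 else 0) := Finset.sum_comm
        _ = ∑ g ∈ G.attach, (B.filter (fun f => f (lift g) = 0)).card := by
            apply Finset.sum_congr rfl
            intro g _
            rw [Finset.card_filter]
        _ = ∑ _g ∈ G.attach, (q ^ (c + 1 + j) - 1) := by
            apply Finset.sum_congr rfl
            intro g _
            rw [hpoint (lift g) (hliftne g)]
        _ = G.card * (q ^ (c + 1 + j) - 1) := by
            rw [Finset.sum_const, Finset.card_attach, smul_eq_mul]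
    have hBne : B.Nonempty := by
      rw [← Finset.card_pos, hBcard]
      have : q ≤ q ^ (c + 2 + j) := Nat.le_self_pow (by omega) q
      omega
    obtain ⟨f₀, hf₀B, hmin⟩ := Finset.exists_min_image B
      (fun f => (G.attach.filter (fun g => f (lift g) = 0)).card) hBne
    set N := (G.attach.filter (fun g => f₀ (lift g) = 0)).card with hNdef
    have hpigeon : B.card * N ≤ G.card * (q ^ (c + 1 + j) - 1) := by
      rw [← hsum]
      have h2 := Finset.card_nsmul_le_sum B
        (fun f => (G.attach.filter (fun g => f (lift g) = 0)).card) N hmin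
      simpa [smul_eq_mul] using h2
    have hf₀ne : f₀ ≠ 0 := by
      have h3 := hf₀B
      rw [hBdef] at h3
      simpa using (Finset.mem_filter.mp h3).2
    set V' := (LinearMap.ker f₀).map V.subtype with hV'def
    have hdim' : finrank F ↥V' = c + 1 + j := by
      rw [hV'def]
      have h4 := ker_map_finrank V f₀ hf₀ne
      rw [hdim] at h4
      omega
    set G' := (G.attach.filter (fun g => f₀ (lift g) = 0)).image (fun g => g.1) with hG'def
    have hG'card : G'.card = N := by
      rw [hG'def, Finset.card_image_of_injective _ Subtype.val_injective]
    have hG'G : G' ⊆ G := by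
      intro g hg
      obtain ⟨g', _, rfl⟩ := Finset.mem_image.mp hg
      exact g'.2
    have hG'V' : ↑G' ⊆ (V' : Set M) := by
      intro g hg
      simp only [hG'def, Finset.coe_image, Set.mem_image, Finset.mem_coe] at hg
      obtain ⟨g', hg', rfl⟩ := hg
      have hker := (Finset.mem_filter.mp hg').2
      exact ⟨lift g', LinearMap.mem_ker.mpr hker, rfl⟩
    have hblock' : ∀ W : Submodule F M, W ≤ V' → finrank F W = c → ∃ g ∈ G', g ∈ W := by
      intro W hWV' hWc
      obtain ⟨g, hgG, hgW⟩ := hblock W (le_trans hWV' (Submodule.map_subtype_le _ _)) hWc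
      refine ⟨g, ?_, hgW⟩
      have hgV' : g ∈ V' := hWV' hgW
      obtain ⟨y, hyker, hyg⟩ := Submodule.mem_map.mp hgV'
      have hyeq : y = lift ⟨g, hgG⟩ := Subtype.ext hyg
      rw [hG'def]
      apply Finset.mem_image.mpr
      refine ⟨⟨g, hgG⟩, Finset.mem_filter.mpr ⟨Finset.mem_attach _ _, ?_⟩, rfl⟩
      rw [← hyeq]
      exact LinearMap.mem_ker.mp hyker
    have hIH := ih V' G' hG'V' (fun h => h0 (hG'G h))
      (fun t ht htc => hind t (subset_trans ht hG'G) htc) hdim' hblock'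
    rw [hG'card] at hIH
    have hkey : (q ^ (c + 1 + j) * q - 1) * N ≤ G.card * (q ^ (c + 1 + j) - 1) := by
      have hXq : q ^ (c + 1 + j) * q = q ^ (c + 2 + j) := by
        rw [← pow_succ]
        congr 1
        omega
      rw [hXq, ← hBcard]
      exact hpigeon
    have hgoal := arith (m := G.card) hq hc
      (Nat.one_lt_pow (n := j + 1) (by omega) (by omega))
      (Nat.one_lt_pow (n := c + 1 + j) (by omega) (by omega)) hkey hIH
    have hfin : q ^ (j + 1 + 1) = q * q ^ (j + 1) := by
      rw [pow_succ, mul_comm]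
    rw [hfin]
    exact hgoal


end General

section Codes

variable {F : Type*} [Field F] [Fintype F] [DecidableEq F] {n : ℕ}

set_option linter.unusedSectionVars false

open scoped Classical

/-- coordinate functionals on a code -/
noncomputable def phi (C : Submodule F (Fin n → F)) (i : Fin n) : Module.Dual F ↥C :=
  (LinearMap.proj i).comp C.subtype

@[simp] lemma phi_apply (C : Submodule F (Fin n → F)) (i : Fin n) (x : ↥C) :
    phi C i x = (x : Fin n → F) i := rfl


lemma wt_le_card {c : Fin n → F} {T : Finset (Fin n)} (h : ∀ j, c j ≠ 0 → j ∈ T) :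
    wt c ≤ T.card := by
  apply Finset.card_le_card
  intro j hj
  exact h j (Finset.mem_filter.mp hj).2


lemma combo_zero {δ : ℕ} (C : Submodule F (Fin n → F))
    (hlb : ∀ w ∈ dualWeights C, δ ≤ w) {c : Fin n → F}
    (hc : ∀ x ∈ C, ∑ i, x i * c i = 0) (hw : wt c < δ) : c = 0 := by
  by_contra h
  exact absurd (hlb _ ⟨c, h, hc, rfl⟩) (by omega)


lemma indep_phi {δ : ℕ} (C : Submodule F (Fin n → F))
    (hlb : ∀ w ∈ dualWeights C, δ ≤ w) (T : Finset (Fin n)) (hT : T.card < δ) :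
    LinearIndependent F (fun i : ↑T => phi C ↑i) := by
  classical
  rw [Fintype.linearIndependent_iff]
  intro g hg
  set c : Fin n → F := fun j => if h : j ∈ T then g ⟨j, h⟩ else 0 with hcdef
  have hTsum : ∑ j ∈ T, c j • phi C j = 0 := by
    rw [← Finset.sum_coe_sort T (fun j => c j • phi C j)]
    rw [← hg]
    apply Finset.sum_congr rfl
    intro i _
    simp [hcdef, dif_pos i.2]
  have husum : ∑ j, c j • phi C j = 0 := by
    rw [← Finset.sum_subset (Finset.subset_univ T)
      (fun j _ hj => by simp [hcdef, dif_neg hj])]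
    exact hTsum
  have heval : ∀ x ∈ C, ∑ i, x i * c i = 0 := by
    intro x hx
    have := congrFun (congrArg (DFunLike.coe) husum) ⟨x, hx⟩
    simpa [mul_comm] using this
  have hwt : wt c < δ := by
    refine lt_of_le_of_lt (wt_le_card ?_) hT
    intro j hj
    by_contra hjT
    simp [hcdef, dif_neg hjT] at hj
  have hc0 := combo_zero C hlb heval hwt
  intro i
  have h2 : c ↑i = 0 := by rw [hc0]; rfl
  simpa [hcdef, dif_pos i.2] using h2


lemma phi_ne_zero {δ : ℕ} (C : Submodule F (Fin n → F))
    (hlb : ∀ w ∈ dualWeights C, δ ≤ w) (hδ : 3 ≤ δ) (i : Fin n) : phi C i ≠ 0 := by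
  classical
  have := indep_phi C hlb {i} (by simp; omega)
  exact this.ne_zero ⟨i, by simp⟩


lemma phi_injective {δ : ℕ} (C : Submodule F (Fin n → F))
    (hlb : ∀ w ∈ dualWeights C, δ ≤ w) (hδ : 3 ≤ δ) : Function.Injective (phi C) := by
  classical
  intro i j hij
  by_contra hne
  have hT : ({i, j} : Finset (Fin n)).card < δ := by
    refine lt_of_le_of_lt (Finset.card_insert_le _ _) ?_
    simp; omega
  have li := indep_phi C hlb {i, j} hT
  have := li.injective (a₁ := ⟨i, by simp⟩) (a₂ := ⟨j, by simp⟩) (by simpa using hij)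
  simp at this
  exact hne this


/-- No nonzero multiple of a functional outside `T` lies in the span of the functionals of `T`. -/
lemma master {δ : ℕ} (C₀ : Submodule F (Fin n → F))
    (hlb : ∀ w ∈ dualWeights C₀, δ ≤ w)
    (T : Finset (Fin n)) (hT : T.card + 1 < δ)
    (hψinj : Function.Injective (phi C₀)) :
    ∀ i ∉ T, ∀ v : F, v ≠ 0 → ∀ a : Module.Dual F ↥C₀ → F,
      v • phi C₀ i = ∑ y ∈ T.image (phi C₀), a y • y → False := by
  classical
  intro i hiT v hv a ha
  set ψ := phi C₀ with hψdef
  have hsumT : ∑ y ∈ T.image ψ, a y • y = ∑ j ∈ T, a (ψ j) • ψ j :=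
    Finset.sum_image (fun x _ y _ h => hψinj h)
  set c : Fin n → F := fun j => if j = i then v else if j ∈ T then -(a (ψ j)) else 0 with hcdef
  have husum : ∑ j, c j • ψ j = 0 := by
    rw [← Finset.sum_subset (Finset.subset_univ (insert i T))
      (fun j _ hj => by
        simp only [Finset.mem_insert, not_or] at hj
        simp [hcdef, hj.1, hj.2])]
    rw [Finset.sum_insert (by simpa using hiT)]
    have h1 : c i = v := by simp [hcdef]
    have h2 : ∑ j ∈ T, c j • ψ j = -(∑ j ∈ T, a (ψ j) • ψ j) := by
      rw [← Finset.sum_neg_distrib]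
      apply Finset.sum_congr rfl
      intro j hj
      have hji : j ≠ i := fun h => hiT (h ▸ hj)
      rw [hcdef]
      simp only [if_neg hji, if_pos hj]
      exact neg_smul (a (ψ j)) (ψ j)
    rw [h1, h2, ← hsumT, ← ha]
    simp
  have heval : ∀ x ∈ C₀, ∑ j, x j * c j = 0 := by
    intro x hx
    have := congrFun (congrArg (DFunLike.coe) husum) ⟨x, hx⟩
    simpa [mul_comm, hψdef] using this
  have hwt : wt c < δ := by
    have h1 : wt c ≤ (insert i T).card := by
      apply Finset.card_le_card
      intro j hj
      have hj' := (Finset.mem_filter.mp hj).2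
      by_contra hins
      simp only [Finset.mem_insert, not_or] at hins
      simp [hcdef, hins.1, hins.2] at hj'
    have h2 := Finset.card_insert_le i T
    omega
  have hc0 := combo_zero C₀ hlb heval hwt
  have : c i = 0 := by rw [hc0]; rfl
  simp [hcdef] at this
  exact hv this



/-- the two-index version of master -/
lemma key_step {δ : ℕ} (C₀ : Submodule F (Fin n → F))
    (hlb : ∀ w ∈ dualWeights C₀, δ ≤ w) (hδ : 3 ≤ δ)
    (T : Finset (Fin n)) (hTcard : T.card = δ - 3)
    (hψinj : Function.Injective (phi C₀)) :
    ∀ i ∉ T, ∀ i' ∉ T, ∀ u u' : F, u ≠ 0 → u' ≠ 0 →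
      u • phi C₀ i - u' • phi C₀ i' ∈ Submodule.span F ↑(T.image (phi C₀)) →
      i = i' ∧ u = u' := by
  classical
  set ψ := phi C₀ with hψdef
  intro i hi i' hi' u u' hu hu' hmem
  by_cases hii : i = i'
  · subst hii
    refine ⟨rfl, ?_⟩
    by_contra huu
    have hmem' : (u - u') • ψ i ∈ Submodule.span F ↑(T.image ψ) :=
      (sub_smul u u' (ψ i)) ▸ hmem
    obtain ⟨a, ha⟩ := mem_span_finset.mp hmem'
    exact master C₀ hlb T (by omega) hψinj i hi (u - u') (sub_ne_zero_of_ne huu) a ha.2.symm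
  · exfalso
    obtain ⟨a, ha⟩ := mem_span_finset.mp hmem
    set T' : Finset (Fin n) := insert i' T with hT'def
    have hiT' : i ∉ T' := by simp [hT'def, hii, hi]
    have hT'card : T'.card + 1 < δ := by
      rw [hT'def, Finset.card_insert_of_notMem hi', hTcard]
      omega
    have hψi'img : ψ i' ∉ T.image ψ := by
      intro hmem2
      obtain ⟨j, hj, hj2⟩ := Finset.mem_image.mp hmem2
      exact hi' ((hψinj hj2) ▸ hj)
    set b : Module.Dual F ↥C₀ → F := fun y => if y = ψ i' then u' else a y with hbdef
    have hb : u • ψ i = ∑ y ∈ T'.image ψ, b y • y := by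
      rw [hT'def, Finset.image_insert, Finset.sum_insert hψi'img]
      have h1 : b (ψ i') = u' := by simp [hbdef]
      have h2 : ∑ y ∈ T.image ψ, b y • y = ∑ y ∈ T.image ψ, a y • y := by
        apply Finset.sum_congr rfl
        intro y hy
        have : y ≠ ψ i' := fun h => hψi'img (h ▸ hy)
        simp [hbdef, this]
      rw [h1, h2, ha.2]
      abel
    exact master C₀ hlb T' hT'card hψinj i hiT' u hu b hb


/-- The length bound coming from the code `C₀`. -/
lemma length_bound {δ k₀ : ℕ} (C₀ : Submodule F (Fin n → F)) (hC₀k : finrank F C₀ = k₀)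
    (hlb : ∀ w ∈ dualWeights C₀, δ ≤ w) (hδ : 3 ≤ δ) (hδk : δ ≤ k₀ + 1) (hn : δ ≤ n) :
    (n - (δ - 3)) * (Fintype.card F - 1) ≤ Fintype.card F ^ (k₀ + 3 - δ) - 1 := by
  classical
  set q := Fintype.card F with hqdef
  have hq : 2 ≤ q := Fintype.one_lt_card
  set ψ := phi C₀ with hψdef
  have hψinj : Function.Injective ψ := phi_injective C₀ hlb hδ
  obtain ⟨T, -, hTcard⟩ := Finset.exists_subset_card_eq
    (s := (Finset.univ : Finset (Fin n))) (n := δ - 3) (by simp; omega)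
  have key := key_step C₀ hlb hδ T hTcard hψinj
  set tψ : Finset (Module.Dual F ↥C₀) := T.image ψ with htψdef
  have htψcard : tψ.card = δ - 3 := by
    rw [htψdef, Finset.card_image_of_injective _ hψinj, hTcard]
  have liT := indep_phi C₀ hlb T (by omega)
  have hrange : Set.range (fun i : ↑T => ψ ↑i) = ↑tψ := by
    ext y
    simp [htψdef, Set.range, eq_comm]
  have litψ : LinearIndependent F ((↑) : ↑(↑tψ : Set (Module.Dual F ↥C₀)) → Module.Dual F ↥C₀) :=
    liT.linearIndepOn_id' hrange
  set S : Submodule F (Module.Dual F ↥C₀) := Submodule.span F ↑tψ with hSdef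
  have hSrank : finrank F S = δ - 3 := by
    rw [hSdef, finrank_span_finset_eq_card litψ, htψcard]
  have hQrank : finrank F ((Module.Dual F ↥C₀) ⧸ S) = k₀ + 3 - δ := by
    have h1 := Submodule.finrank_quotient_add_finrank S
    rw [hSrank, Subspace.dual_finrank_eq, hC₀k] at h1
    omega
  haveI : Finite ((Module.Dual F ↥C₀) ⧸ S) := finite_of_fd (F := F) ((Module.Dual F ↥C₀) ⧸ S)
  letI : Fintype ((Module.Dual F ↥C₀) ⧸ S) := Fintype.ofFinite _
  have hQcard : Fintype.card ((Module.Dual F ↥C₀) ⧸ S) = q ^ (k₀ + 3 - δ) := by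
    rw [card_eq_pow_finrank (K := F), hQrank]
  -- the injection
  have claim1 : ∀ i ∉ T, ∀ u : F, u ≠ 0 → ¬ (u • ψ i ∈ S) := by
    intro i hiT u hu hmem
    obtain ⟨a, ha⟩ := mem_span_finset.mp hmem
    exact master C₀ hlb T (by omega) hψinj i hiT u hu a ha.2.symm
  set e : ↑(Finset.univ \ T) × {u : F // u ≠ 0} → {z : (Module.Dual F ↥C₀) ⧸ S // z ≠ 0} :=
    fun p => ⟨p.2.1 • Submodule.Quotient.mk (ψ p.1.1), by
      intro h0
      rw [← Submodule.Quotient.mk_smul, Submodule.Quotient.mk_eq_zero] at h0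
      have hiT : ↑p.1 ∉ T := by
        have := p.1.2
        simp only [Finset.mem_sdiff, Finset.mem_univ, true_and] at this
        exact this
      exact claim1 _ hiT _ p.2.2 h0⟩ with hedef
  have hinj : Function.Injective e := by
    intro p p' hpp
    have h1 : p.2.1 • Submodule.Quotient.mk (p := S) (ψ p.1.1)
        = p'.2.1 • Submodule.Quotient.mk (ψ p'.1.1) := congrArg Subtype.val hpp
    rw [← Submodule.Quotient.mk_smul, ← Submodule.Quotient.mk_smul, Submodule.Quotient.eq] at h1
    have hiT : ↑p.1 ∉ T := by
      have := p.1.2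
      simp only [Finset.mem_sdiff, Finset.mem_univ, true_and] at this
      exact this
    have hiT' : ↑p'.1 ∉ T := by
      have := p'.1.2
      simp only [Finset.mem_sdiff, Finset.mem_univ, true_and] at this
      exact this
    obtain ⟨hii, huu⟩ := key _ hiT _ hiT' _ _ p.2.2 p'.2.2 h1
    exact Prod.ext (Subtype.ext hii) (Subtype.ext huu)
  have hcard := Fintype.card_le_of_injective e hinj
  have hdom : Fintype.card (↑(Finset.univ \ T) × {u : F // u ≠ 0})
      = (n - (δ - 3)) * (q - 1) := by
    rw [Fintype.card_prod, Fintype.card_coe, Finset.card_sdiff_of_subset (Finset.subset_univ T),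
      Finset.card_univ, Fintype.card_fin, hTcard, card_ne F 0]
  have hcod : Fintype.card {z : (Module.Dual F ↥C₀) ⧸ S // z ≠ 0}
      = q ^ (k₀ + 3 - δ) - 1 := by
    rw [card_ne _ 0, hQcard]
  rw [hdom, hcod] at hcard
  exact hcard


lemma indep_subset_phi {δ : ℕ} (C : Submodule F (Fin n → F))
    (hlb : ∀ w ∈ dualWeights C, δ ≤ w) (hδ : 3 ≤ δ)
    (t : Finset (Module.Dual F ↥C)) (ht : t ⊆ Finset.univ.image (phi C))
    (htc : t.card < δ) :
    LinearIndependent F (fun x : ↑t => (x : Module.Dual F ↥C)) := by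
  classical
  have hψinj := phi_injective C hlb hδ
  set T : Finset (Fin n) := Finset.univ.filter (fun j => phi C j ∈ t) with hTdef
  have himg : T.image (phi C) = t := by
    ext y
    simp only [hTdef, Finset.mem_image, Finset.mem_filter, Finset.mem_univ, true_and]
    constructor
    · rintro ⟨j, hj, rfl⟩
      exact hj
    · intro hy
      obtain ⟨j, -, rfl⟩ := Finset.mem_image.mp (ht hy)
      exact ⟨j, hy, rfl⟩
  have hTcard : T.card < δ := by
    have h1 : T.card = t.card := by
      rw [← himg, Finset.card_image_of_injective _ hψinj]
    omega
  have li := indep_phi C hlb T hTcard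
  have hrange : Set.range (fun i : ↑T => phi C ↑i) = ↑t := by
    rw [← himg]
    ext y
    simp [Set.range, eq_comm]
  exact li.linearIndepOn_id' hrange

end Codes

end Stmt15Aux

open Module Submodule Stmt15Aux

/-- suppose there is an `[n,k₀]` code `C₀` over `F_q` with `k₀ < n` and
`d(C₀⊥) = δ ≥ 3`. If `C` is an `[n,k]` code over `F_q` with `k₀ < k < n` and
`d(C⊥) = δ`, then `γ(C) ≤ k - δ + 2`. -/
theorem stmt15 {F : Type*} [Field F] [Fintype F] [DecidableEq F] {n k₀ k δ : ℕ}
    (C₀ : Submodule F (Fin n → F)) (hC₀k : Module.finrank F C₀ = k₀) (hk₀n : k₀ < n)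
    (hd₀ : IsLeast (dualWeights C₀) δ) (hδ : 3 ≤ δ)
    (C : Submodule F (Fin n → F)) (hCk : Module.finrank F C = k)
    (hk₀k : k₀ < k) (hkn : k < n)
    (hd : IsLeast (dualWeights C) δ) :
    ∃ D : Submodule F (Fin n → F), D ≤ C ∧ HasFullSupport D ∧
      (Module.finrank F D : ℤ) ≤ (k : ℤ) - (δ : ℤ) + 2 := by
  classical
  have hq : 2 ≤ Fintype.card F := Fintype.one_lt_card
  have hlb : ∀ w ∈ dualWeights C, δ ≤ w := fun w hw => hd.2 hw
  have hlb₀ : ∀ w ∈ dualWeights C₀, δ ≤ w := fun w hw => hd₀.2 hw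
  have hφinj : Function.Injective (phi C) := phi_injective C hlb hδ
  have hsing : δ ≤ k₀ + 1 := by
    by_contra hcon
    push_neg at hcon
    obtain ⟨T, -, hTcard⟩ := Finset.exists_subset_card_eq
      (s := (Finset.univ : Finset (Fin n))) (n := k₀ + 1)
      (by rw [Finset.card_univ, Fintype.card_fin]; omega)
    have li := indep_phi C₀ hlb₀ T (by omega)
    have hle := li.fintype_card_le_finrank
    rw [Fintype.card_coe, hTcard, Subspace.dual_finrank_eq, hC₀k] at hle
    omega
  have hδk : δ ≤ k := by omega
  set G : Finset (Module.Dual F ↥C) := Finset.univ.image (phi C) with hGdef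
  have hGcard : G.card = n := by
    rw [hGdef, Finset.card_image_of_injective _ hφinj, Finset.card_univ, Fintype.card_fin]
  by_cases hblock : ∀ W : Submodule F (Module.Dual F ↥C), finrank F W = δ - 2 →
      ∃ g ∈ G, g ∈ W
  · exfalso
    have hfd : finrank F (Module.Dual F ↥C) = k := by rw [Subspace.dual_finrank_eq, hCk]
    have hcl := claimA (F := F) (M := Module.Dual F ↥C) (δ - 2) (by omega) (k + 1 - δ)
      ⊤ G (by simp)
      (by
        intro h0mem
        obtain ⟨i, -, hi⟩ := Finset.mem_image.mp h0mem
        exact phi_ne_zero C hlb hδ i hi)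
      (fun t ht htc => indep_subset_phi C hlb hδ t ht (by omega))
      (by rw [finrank_top, hfd]; omega)
      (fun W _ hW => hblock W hW)
    rw [hGcard] at hcl
    have hlen := length_bound C₀ hC₀k hlb₀ hδ hsing (by omega)
    have hple : Fintype.card F ^ (k₀ + 3 - δ) ≤ Fintype.card F ^ (k + 1 - δ + 1) :=
      Nat.pow_le_pow_right (by omega) (by omega)
    have hsplit : n * (Fintype.card F - 1)
        = (n - (δ - 3)) * (Fintype.card F - 1) + (δ - 3) * (Fintype.card F - 1) := by
      rw [← Nat.add_mul]
      congr 1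
      omega
    have hsplit2 : (δ - 2) * (Fintype.card F - 1)
        = (δ - 3) * (Fintype.card F - 1) + (Fintype.card F - 1) := by
      have h5 : δ - 2 = (δ - 3) + 1 := by omega
      rw [h5, Nat.add_mul, one_mul]
    rw [hsplit] at hcl
    rw [hsplit2] at hcl
    omega
  · push_neg at hblock
    obtain ⟨W, hWrank, hWavoid⟩ := hblock
    set D₀ : Submodule F ↥C := W.dualCoannihilator with hD₀def
    have hsumrank := Subspace.finrank_add_finrank_dualCoannihilator_eq W
    rw [hWrank, hCk, ← hD₀def] at hsumrank
    have hD₀rank : finrank F D₀ = k - (δ - 2) := by omega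
    have hfull : ∀ i : Fin n, ∃ x ∈ D₀, phi C i x ≠ 0 := by
      intro i
      by_contra hcon
      push_neg at hcon
      have hmem : phi C i ∈ D₀.dualAnnihilator := by
        rw [Submodule.mem_dualAnnihilator]
        exact hcon
      have heq : D₀.dualAnnihilator = W := Subspace.dualCoannihilator_dualAnnihilator_eq
      rw [heq] at hmem
      exact hWavoid (phi C i) (Finset.mem_image.mpr ⟨i, Finset.mem_univ i, rfl⟩) hmem
    refine ⟨D₀.map C.subtype, Submodule.map_subtype_le _ _, ?_, ?_⟩
    · intro i
      obtain ⟨x, hx, hxi⟩ := hfull i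
      exact ⟨↑x, Submodule.mem_map_of_mem hx, hxi⟩
    · rw [Submodule.finrank_map_subtype_eq, hD₀rank]
      omega
end
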